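/- arXiv:1807.05910 — 5 statements merged into one kernel-verified Lean document; each statement's English description precedes it below -/
import Mathlib

section
/- Let d ≥ 1 and let β : ℕ → (0,∞) be a sequence with β(N) → 0 and N·β(N) → ∞ as N → ∞. Then there exist a constant C > 0 and N₀ such that for all N ≥ N₀ one has C⁻¹ / β(N) ≤ D^N_{β(N)} ≤ C / β(N). (In other words, in the supercritical regime 1/N ≪ β ≪ 1 the mean displacement per site satisfies D^N_β = Θ(1/β).) -/
open Filter Topology Finset

/-- The energy `H^N(π) = Σ_{x ∈ T^N} ‖x − π(x)‖` of a permutation of the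
lattice box `T^N = {1,…,N}^d` (represented as `Fin d → Fin N`), with
Euclidean norm on `ℝ^d`. -/
noncomputable def srpEnergy (d N : ℕ) (π : Equiv.Perm (Fin d → Fin N)) : ℝ :=
  ∑ x : Fin d → Fin N, Real.sqrt (∑ i : Fin d, ((x i : ℝ) - ((π x) i : ℝ)) ^ 2)

/-- The partition function `Z^N_β = Σ_π e^{−β H^N(π)}`. -/
noncomputable def srpZ (d N : ℕ) (β : ℝ) : ℝ :=
  ∑ π : Equiv.Perm (Fin d → Fin N), Real.exp (-β * srpEnergy d N π)

/-- The Boltzmann probability `P^N_β(π) = e^{−β H^N(π)} / Z^N_β`. -/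
noncomputable def srpP (d N : ℕ) (β : ℝ) (π : Equiv.Perm (Fin d → Fin N)) : ℝ :=
  Real.exp (-β * srpEnergy d N π) / srpZ d N β

/-- The mean displacement per site `D^N_β = N^{−d} Σ_π P^N_β(π) H^N(π)`. -/
noncomputable def srpD (d N : ℕ) (β : ℝ) : ℝ :=
  (1 / (N : ℝ) ^ d) * ∑ π : Equiv.Perm (Fin d → Fin N), srpP d N β π * srpEnergy d N π

namespace SRP

/-- Total ℓ¹ displacement of a map of the box. -/
noncomputable def S (d N : ℕ) (f : (Fin d → Fin N) → (Fin d → Fin N)) : ℝ :=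
  ∑ x : Fin d → Fin N, ∑ i : Fin d, |((f x) i : ℝ) - (x i : ℝ)|

lemma energy_nonneg (d N : ℕ) (π : Equiv.Perm (Fin d → Fin N)) : 0 ≤ srpEnergy d N π :=
  Finset.sum_nonneg fun _ _ => Real.sqrt_nonneg _

lemma S_nonneg (d N : ℕ) (f : (Fin d → Fin N) → (Fin d → Fin N)) : 0 ≤ S d N f :=
  Finset.sum_nonneg fun _ _ => Finset.sum_nonneg fun _ _ => abs_nonneg _

/-- ℓ¹ ≤ √d · ℓ² pointwise, summed. -/
lemma S_le_sqrt_mul_energy (d N : ℕ) (π : Equiv.Perm (Fin d → Fin N)) :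
    S d N ⇑π ≤ Real.sqrt d * srpEnergy d N π := by
  rw [S, srpEnergy, Finset.mul_sum]
  refine Finset.sum_le_sum fun x _ => ?_
  have h1 : (∑ i : Fin d, |((π x) i : ℝ) - (x i : ℝ)|) ^ 2
      ≤ (d : ℝ) * ∑ i : Fin d, ((x i : ℝ) - ((π x) i : ℝ)) ^ 2 := by
    have h := sq_sum_le_card_mul_sum_sq (s := (Finset.univ : Finset (Fin d)))
      (f := fun i => |((π x) i : ℝ) - (x i : ℝ)|)
    have h2 : ∀ i : Fin d, |((π x) i : ℝ) - (x i : ℝ)| ^ 2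
        = ((x i : ℝ) - ((π x) i : ℝ)) ^ 2 := by
      intro i; rw [sq_abs]; ring
    simpa [Finset.card_univ, h2] using h
  have h3 : 0 ≤ ∑ i : Fin d, |((π x) i : ℝ) - (x i : ℝ)| :=
    Finset.sum_nonneg fun _ _ => abs_nonneg _
  calc ∑ i : Fin d, |((π x) i : ℝ) - (x i : ℝ)|
      ≤ Real.sqrt ((d : ℝ) * ∑ i : Fin d, ((x i : ℝ) - ((π x) i : ℝ)) ^ 2) := by
        rw [show (∑ i : Fin d, |((π x) i : ℝ) - (x i : ℝ)|)
            = Real.sqrt ((∑ i : Fin d, |((π x) i : ℝ) - (x i : ℝ)|) ^ 2) by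
          rw [Real.sqrt_sq h3]]
        exact Real.sqrt_le_sqrt h1
    _ = Real.sqrt d * Real.sqrt (∑ i : Fin d, ((x i : ℝ) - ((π x) i : ℝ)) ^ 2) :=
        Real.sqrt_mul (by positivity) _

/-- Geometric-sum bound for a single coordinate. -/
lemma sum_exp_abs_le (N : ℕ) (a : ℝ) (ha : 0 < a) (ha1 : a ≤ 1) (s : Fin N) :
    ∑ t : Fin N, Real.exp (-(a * |(t : ℝ) - (s : ℝ)|)) ≤ 4 / a := by
  set r := Real.exp (-a) with hr
  have hr0 : 0 < r := Real.exp_pos _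
  have hr1 : r < 1 := by
    rw [hr, Real.exp_lt_one_iff]; linarith
  have hgeom : ∀ n : ℕ, ∑ j ∈ Finset.range n, r ^ j ≤ (1 - r)⁻¹ := by
    intro n
    have := Summable.sum_le_tsum (Finset.range n) (fun i _ => pow_nonneg hr0.le i)
      (summable_geometric_of_lt_one hr0.le hr1)
    rwa [tsum_geometric_of_lt_one hr0.le hr1] at this
  have key : ∀ (A : Finset (Fin N)) (φ : Fin N → ℕ),
      (∀ t ∈ A, ∀ u ∈ A, φ t = φ u → t = u) →
      (∀ t ∈ A, |(t : ℝ) - (s : ℝ)| = (φ t : ℝ)) →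
      (∀ t ∈ A, φ t < N) →
      ∑ t ∈ A, Real.exp (-(a * |(t : ℝ) - (s : ℝ)|)) ≤ (1 - r)⁻¹ := by
    intro A φ hinj habs hlt
    have : ∑ t ∈ A, Real.exp (-(a * |(t : ℝ) - (s : ℝ)|)) = ∑ t ∈ A, r ^ (φ t) := by
      refine Finset.sum_congr rfl fun t ht => ?_
      rw [habs t ht, hr, ← Real.exp_nat_mul]
      ring_nf
    rw [this]
    calc ∑ t ∈ A, r ^ φ t = ∑ j ∈ A.image φ, r ^ j := (Finset.sum_image hinj).symm
      _ ≤ ∑ j ∈ Finset.range N, r ^ j := by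
          refine Finset.sum_le_sum_of_subset_of_nonneg ?_ fun j _ _ => pow_nonneg hr0.le j
          intro j hj
          simp only [Finset.mem_image] at hj
          obtain ⟨t, ht, rfl⟩ := hj
          exact Finset.mem_range.mpr (hlt t ht)
      _ ≤ (1 - r)⁻¹ := hgeom N
  have hsplit := Finset.sum_filter_add_sum_filter_not (Finset.univ : Finset (Fin N))
    (fun t => (s : ℕ) ≤ (t : ℕ)) (fun t => Real.exp (-(a * |(t : ℝ) - (s : ℝ)|)))
  have h1 : ∑ t ∈ Finset.univ.filter (fun t : Fin N => (s : ℕ) ≤ (t : ℕ)),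
      Real.exp (-(a * |(t : ℝ) - (s : ℝ)|)) ≤ (1 - r)⁻¹ := by
    refine key _ (fun t => (t : ℕ) - (s : ℕ)) ?_ ?_ ?_
    · intro t ht u hu h
      simp only [Finset.mem_filter] at ht hu
      have ht' := t.isLt
      have hu' := u.isLt
      exact Fin.ext (by omega)
    · intro t ht
      simp only [Finset.mem_filter] at ht
      rw [abs_of_nonneg (by
        have : ((s : ℕ) : ℝ) ≤ ((t : ℕ) : ℝ) := Nat.cast_le.mpr ht.2
        linarith)]
      rw [Nat.cast_sub ht.2]
    · intro t _
      have := t.isLt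
      omega
  have h2 : ∑ t ∈ Finset.univ.filter (fun t : Fin N => ¬ (s : ℕ) ≤ (t : ℕ)),
      Real.exp (-(a * |(t : ℝ) - (s : ℝ)|)) ≤ (1 - r)⁻¹ := by
    refine key _ (fun t => (s : ℕ) - (t : ℕ)) ?_ ?_ ?_
    · intro t ht u hu h
      simp only [Finset.mem_filter] at ht hu
      have ht' := t.isLt
      have hu' := u.isLt
      exact Fin.ext (by omega)
    · intro t ht
      simp only [Finset.mem_filter] at ht
      rw [abs_of_nonpos (by
        have : ((t : ℕ) : ℝ) ≤ ((s : ℕ) : ℝ) := Nat.cast_le.mpr (by omega)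
        linarith)]
      rw [Nat.cast_sub (by omega)]
      ring
    · intro t _
      have := s.isLt
      omega
  have hinv : (1 - r)⁻¹ ≤ 2 / a := by
    have hrle : r ≤ (1 + a)⁻¹ := by
      rw [hr, Real.exp_neg]
      exact inv_anti₀ (by linarith) (by linarith [Real.add_one_le_exp a])
    have h1r : a / 2 ≤ 1 - r := by
      have ha2 : a / 2 ≤ a / (1 + a) :=
        div_le_div_of_nonneg_left ha.le (by linarith) (by linarith)
      have heq : (1:ℝ) - (1 + a)⁻¹ = a / (1 + a) := by
        field_simp
        ring
      linarith
    calc (1 - r)⁻¹ ≤ (a / 2)⁻¹ := inv_anti₀ (by positivity) h1r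
      _ = 2 / a := by rw [inv_div]
  calc ∑ t : Fin N, Real.exp (-(a * |(t : ℝ) - (s : ℝ)|))
      = _ + _ := hsplit.symm
    _ ≤ (1 - r)⁻¹ + (1 - r)⁻¹ := add_le_add h1 h2
    _ ≤ 2 / a + 2 / a := add_le_add hinv hinv
    _ = 4 / a := by ring

/-- Key entropy bound (permanent bound):
`Σ_π e^{-a·S(π)} ≤ (4/a)^{d·N^d}`. -/
lemma sum_exp_S_le (d N : ℕ) (a : ℝ) (ha : 0 < a) (ha1 : a ≤ 1) :
    ∑ π : Equiv.Perm (Fin d → Fin N), Real.exp (-(a * S d N ⇑π)) ≤ (4 / a) ^ (d * N ^ d) := by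
  classical
  set F : ((Fin d → Fin N) → (Fin d → Fin N)) → ℝ := fun f =>
    ∏ x : Fin d → Fin N, ∏ i : Fin d,
      Real.exp (-(a * |((f x) i : ℝ) - (x i : ℝ)|)) with hF
  have hexp : ∀ f : (Fin d → Fin N) → (Fin d → Fin N),
      Real.exp (-(a * S d N f)) = F f := by
    intro f
    rw [show -(a * S d N f) = ∑ x : Fin d → Fin N, ∑ i : Fin d,
        -(a * |((f x) i : ℝ) - (x i : ℝ)|) by
      rw [S, Finset.mul_sum, ← Finset.sum_neg_distrib]
      exact Finset.sum_congr rfl fun x _ => by rw [Finset.mul_sum, ← Finset.sum_neg_distrib]]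
    rw [Real.exp_sum, hF]
    exact Finset.prod_congr rfl fun x _ => Real.exp_sum _ _
  have hco : ∀ π ∈ (Finset.univ : Finset (Equiv.Perm (Fin d → Fin N))),
      ∀ π' ∈ (Finset.univ : Finset (Equiv.Perm (Fin d → Fin N))),
      (DFunLike.coe π : (Fin d → Fin N) → (Fin d → Fin N)) = DFunLike.coe π' → π = π' :=
    fun π _ π' _ h => Equiv.coe_fn_injective h
  have hFnn : ∀ f : (Fin d → Fin N) → (Fin d → Fin N), 0 ≤ F f := fun f =>
    Finset.prod_nonneg fun x _ => Finset.prod_nonneg fun i _ => (Real.exp_pos _).le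
  calc ∑ π : Equiv.Perm (Fin d → Fin N), Real.exp (-(a * S d N ⇑π))
      = ∑ π : Equiv.Perm (Fin d → Fin N), F ⇑π :=
        Finset.sum_congr rfl fun π _ => hexp ⇑π
    _ = ∑ f ∈ Finset.univ.image
          (DFunLike.coe : Equiv.Perm (Fin d → Fin N) → (Fin d → Fin N) → (Fin d → Fin N)),
          F f := (Finset.sum_image hco).symm
    _ ≤ ∑ f : (Fin d → Fin N) → (Fin d → Fin N), F f :=
        Finset.sum_le_sum_of_subset_of_nonneg (Finset.subset_univ _) fun f _ _ => hFnn f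
    _ = ∏ x : Fin d → Fin N, ∑ y : Fin d → Fin N, ∏ i : Fin d,
          Real.exp (-(a * |(y i : ℝ) - (x i : ℝ)|)) := by
        simp only [hF]
        exact (Fintype.prod_sum (κ := fun _ : Fin d → Fin N => Fin d → Fin N)
          (fun x y => ∏ i : Fin d, Real.exp (-(a * |(y i : ℝ) - (x i : ℝ)|)))).symm
    _ = ∏ x : Fin d → Fin N, ∏ i : Fin d, ∑ t : Fin N,
          Real.exp (-(a * |(t : ℝ) - (x i : ℝ)|)) := by
        refine Finset.prod_congr rfl fun x _ => ?_
        exact (Fintype.prod_sum (κ := fun _ : Fin d => Fin N)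
          (fun (i : Fin d) (t : Fin N) => Real.exp (-(a * |(t : ℝ) - (x i : ℝ)|)))).symm
    _ ≤ ∏ x : Fin d → Fin N, ∏ i : Fin d, (4 / a) := by
        refine Finset.prod_le_prod
          (fun x _ => Finset.prod_nonneg fun i _ =>
            Finset.sum_nonneg fun t _ => (Real.exp_pos _).le)
          (fun x _ => Finset.prod_le_prod
            (fun i _ => Finset.sum_nonneg fun t _ => (Real.exp_pos _).le)
            (fun i _ => sum_exp_abs_le N a ha ha1 (x i)))
    _ = (4 / a) ^ (d * N ^ d) := by
        simp only [Finset.prod_const, Finset.card_univ, Fintype.card_fin, Fintype.card_fun]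
        rw [← pow_mul]

/-- Stirling-type lower bound `(k/e)^k ≤ k!`. -/
lemma pow_le_exp_mul_factorial (k : ℕ) : (k : ℝ) ^ k ≤ Real.exp 1 ^ k * k.factorial := by
  induction k with
  | zero => simp
  | succ k ih =>
    rcases Nat.eq_zero_or_pos k with hk | hk
    · subst hk
      norm_num
    · have hk0 : (0:ℝ) < k := by exact_mod_cast hk
      have step : ((k:ℝ) + 1) ^ k ≤ Real.exp 1 * (k:ℝ) ^ k := by
        have h1 : (k:ℝ) + 1 = (k:ℝ) * (1 + 1/(k:ℝ)) := by field_simp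
        have h2 : (1 + 1/(k:ℝ)) ^ k ≤ Real.exp 1 := by
          have h3 : 1 + 1/(k:ℝ) ≤ Real.exp (1/(k:ℝ)) := by
            have := Real.add_one_le_exp (1/(k:ℝ)); linarith
          calc (1 + 1/(k:ℝ)) ^ k ≤ Real.exp (1/(k:ℝ)) ^ k :=
                pow_le_pow_left₀ (by positivity) h3 k
            _ = Real.exp ((k : ℝ) * (1/(k:ℝ))) := by rw [← Real.exp_nat_mul]
            _ = Real.exp 1 := by rw [mul_one_div, div_self (ne_of_gt hk0)]
        calc ((k:ℝ)+1)^k = (k:ℝ)^k * (1 + 1/(k:ℝ))^k := by rw [h1, mul_pow]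
          _ ≤ (k:ℝ)^k * Real.exp 1 :=
              mul_le_mul_of_nonneg_left h2 (by positivity)
          _ = Real.exp 1 * (k:ℝ)^k := mul_comm _ _
      push_cast [Nat.factorial_succ]
      calc ((k:ℝ)+1)^(k+1) = ((k:ℝ)+1) * ((k:ℝ)+1)^k := by ring
        _ ≤ ((k:ℝ)+1) * (Real.exp 1 * (k:ℝ)^k) :=
            mul_le_mul_of_nonneg_left step (by positivity)
        _ ≤ ((k:ℝ)+1) * (Real.exp 1 * (Real.exp 1 ^ k * k.factorial)) := by
            have := mul_le_mul_of_nonneg_left ih (Real.exp_pos 1).le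
            exact mul_le_mul_of_nonneg_left this (by positivity)
        _ = Real.exp 1 ^ (k+1) * ((k:ℝ)+1) * k.factorial := by ring
        _ = Real.exp 1 ^ (k+1) * (((k:ℝ)+1) * k.factorial) := by ring

/-- Summing a weight over all permutations is at least the number of
fiber-preserving permutations times a lower bound on the weight there. -/
lemma sum_over_perms_ge {α γ : Type*} [Fintype α] [DecidableEq α] [Fintype γ] [DecidableEq γ]
    (f : α → γ) (w : Equiv.Perm α → ℝ) (hw : ∀ π, 0 ≤ w π) (c : ℝ)
    (hc : ∀ π : Equiv.Perm α, (∀ x, f (π x) = f x) → c ≤ w π) :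
    ((∏ b : γ, (Fintype.card {x // f x = b}).factorial : ℕ) : ℝ) * c
      ≤ ∑ π : Equiv.Perm α, w π := by
  classical
  set Φ : (∀ b : γ, Equiv.Perm {x // f x = b}) → Equiv.Perm α := fun g =>
    ((Equiv.sigmaFiberEquiv f).symm.trans (Equiv.sigmaCongrRight g)).trans
      (Equiv.sigmaFiberEquiv f) with hΦ
  have hΦapp : ∀ g x, Φ g x = ((g (f x)) ⟨x, rfl⟩ : {y // f y = f x}).1 := fun g x => rfl
  have hΦfix : ∀ g x, f (Φ g x) = f x := by
    intro g x
    rw [hΦapp]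
    exact ((g (f x)) ⟨x, rfl⟩).2
  have hΦinj : Function.Injective Φ := by
    intro g g' h
    funext b
    refine Equiv.ext fun y => ?_
    obtain ⟨x, hx⟩ := y
    subst hx
    have h2 : Φ g x = Φ g' x := by rw [h]
    rw [hΦapp, hΦapp] at h2
    exact Subtype.ext h2
  have hcard : ((∏ b : γ, (Fintype.card {x // f x = b}).factorial : ℕ) : ℝ)
      = (Fintype.card (∀ b : γ, Equiv.Perm {x // f x = b}) : ℝ) := by
    rw [Fintype.card_pi]
    congr 1
    exact (Finset.prod_congr rfl fun b _ => (Fintype.card_perm)).symm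
  calc ((∏ b : γ, (Fintype.card {x // f x = b}).factorial : ℕ) : ℝ) * c
      = ∑ _g : (∀ b : γ, Equiv.Perm {x // f x = b}), c := by
        rw [Finset.sum_const, Finset.card_univ, nsmul_eq_mul, hcard]
    _ ≤ ∑ g : (∀ b : γ, Equiv.Perm {x // f x = b}), w (Φ g) :=
        Finset.sum_le_sum fun g _ => hc (Φ g) (hΦfix g)
    _ = ∑ π ∈ Finset.univ.image Φ, w π :=
        (Finset.sum_image fun g _ g' _ h => hΦinj h).symm
    _ ≤ ∑ π : Equiv.Perm α, w π :=
        Finset.sum_le_sum_of_subset_of_nonneg (Finset.subset_univ _) fun π _ _ => hw π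

/-- Lower bound on the partition function by counting block permutations. -/
lemma Z_lower (d N : ℕ) (hd : 1 ≤ d) {β : ℝ} (hβ0 : 0 < β) (hβ1 : β ≤ 1)
    (hN : 1 ≤ β * N) :
    (1 / β) ^ (d * N ^ d) *
      Real.exp (-(1 + 2 * Real.sqrt d + d * Real.log 2) * (N : ℝ) ^ d) ≤ srpZ d N β := by
  classical
  -- setup of block length and number
  set L : ℕ := ⌊1 / β⌋₊ with hLdef
  have hβinv1 : (1:ℝ) ≤ 1 / β := (one_le_div hβ0).mpr hβ1
  have hL1 : 1 ≤ L := by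
    rw [hLdef]
    exact Nat.le_floor (by exact_mod_cast hβinv1)
  have hL0 : 0 < L := hL1
  have hL0' : (0:ℝ) < L := by exact_mod_cast hL0
  have hLle : (L : ℝ) ≤ 1 / β := Nat.floor_le (by positivity)
  have hLge : 1 / β ≤ 2 * L := by
    have h1 := Nat.lt_floor_add_one (1 / β)
    have h2 : (1:ℝ) ≤ L := by exact_mod_cast hL1
    rw [← hLdef] at h1
    linarith
  have hNR : (1:ℝ)/β ≤ N := by
    rw [div_le_iff₀ hβ0]
    rw [mul_comm] at hN
    linarith
  have hNpos : 0 < N := by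
    rcases Nat.eq_zero_or_pos N with h | h
    · exfalso
      rw [h] at hNR
      simp at hNR
      linarith
    · exact h
  have hLN : L ≤ N := by
    have : (L:ℝ) ≤ N := le_trans hLle hNR
    exact_mod_cast this
  set m : ℕ := N / L with hm
  have hm1 : 1 ≤ m := (Nat.one_le_div_iff hL0).mpr hLN
  have hmLN : m * L ≤ N := Nat.div_mul_le_self N L
  have hNmL : N < m * L + L := by
    have h1 := Nat.div_add_mod N L
    rw [← hm] at h1
    have h2 : N % L < L := Nat.mod_lt N hL0
    have h3 : L * m = m * L := Nat.mul_comm L m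
    omega
  -- blocks
  set blk : Fin N → Fin m := fun t => ⟨min ((t : ℕ) / L) (m - 1), by
    have h5 : min ((t:ℕ)/L) (m-1) ≤ m - 1 := min_le_right _ _
    omega⟩ with hblkdef
  set bv : (Fin d → Fin N) → (Fin d → Fin m) := fun x i => blk (x i) with hbv
  -- every point is within its block's range
  have hrange : ∀ t : Fin N, ((blk t : ℕ)) * L ≤ (t:ℕ) ∧ (t:ℕ) < ((blk t : ℕ) + 2) * L := by
    intro t
    have hval : (blk t : ℕ) = min ((t:ℕ)/L) (m-1) := rfl
    constructor
    · rw [hval]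
      calc min ((t:ℕ)/L) (m-1) * L ≤ ((t:ℕ)/L) * L :=
            Nat.mul_le_mul_right L (min_le_left _ _)
        _ ≤ (t:ℕ) := Nat.div_mul_le_self _ _
    · rw [hval]
      rcases le_or_gt (m-1) ((t:ℕ)/L) with hcase | hcase
      · rw [min_eq_right hcase]
        have h6 : (m - 1 + 2) * L = m * L + L := by
          have h7 : m - 1 + 2 = m + 1 := by omega
          rw [h7]
          ring
        have := t.isLt
        omega
      · rw [min_eq_left hcase.le]
        have h7 := Nat.div_add_mod (t:ℕ) L
        have h8 : (t:ℕ) % L < L := Nat.mod_lt _ hL0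
        have h9 : ((t:ℕ)/L + 2) * L = ((t:ℕ)/L) * L + 2 * L := by ring
        have h10 : L * ((t:ℕ)/L) = ((t:ℕ)/L) * L := by ring
        omega
  -- displacement within a block is at most 2L
  have hblk2 : ∀ s u : Fin N, blk s = blk u → |(s:ℝ) - (u:ℝ)| ≤ 2 * L := by
    intro s u h
    have hs := hrange s
    have hu := hrange u
    rw [h] at hs
    have h13 : ((blk u : ℕ) + 2) * L = (blk u : ℕ) * L + 2 * L := by ring
    have h11 : (s:ℕ) ≤ (u:ℕ) + 2 * L ∧ (u:ℕ) ≤ (s:ℕ) + 2 * L := by omega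
    rw [abs_sub_le_iff]
    constructor
    · have h14 : ((s:ℕ):ℝ) ≤ ((u:ℕ):ℝ) + 2 * L := by exact_mod_cast h11.1
      linarith
    · have h15 : ((u:ℕ):ℝ) ≤ ((s:ℕ):ℝ) + 2 * L := by exact_mod_cast h11.2
      linarith
  -- fibers are large
  have hfib : ∀ b : Fin d → Fin m, L ^ d ≤ Fintype.card {x : Fin d → Fin N // bv x = b} := by
    intro b
    have h1 : ∀ j : Fin m, L ≤ Fintype.card {t : Fin N // blk t = j} := by
      intro j
      have hjm : (j:ℕ) ≤ m - 1 := by have := j.isLt; omega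
      have hjL : (j:ℕ) * L ≤ (m-1) * L := Nat.mul_le_mul_right L hjm
      have hmL : (m-1) * L + L = m * L := by
        have h16 : (m - 1 + 1) = m := by omega
        calc (m-1) * L + L = (m-1+1) * L := by ring
          _ = m * L := by rw [h16]
      have hbound : ∀ t : Fin L, (j:ℕ) * L + (t:ℕ) < N := by
        intro t
        have := t.isLt
        omega
      have hblkval : ∀ t : Fin L, blk ⟨(j:ℕ) * L + (t:ℕ), hbound t⟩ = j := by
        intro t
        have hdiv : ((j:ℕ) * L + (t:ℕ)) / L = (j:ℕ) := by
          rw [mul_comm, Nat.mul_add_div hL0, Nat.div_eq_of_lt t.isLt]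
          omega
        refine Fin.ext ?_
        show min (((j:ℕ) * L + (t:ℕ)) / L) (m-1) = (j:ℕ)
        rw [hdiv, min_eq_left hjm]
      have hinj : Function.Injective
          (fun t : Fin L => (⟨⟨(j:ℕ) * L + (t:ℕ), hbound t⟩, hblkval t⟩ :
            {t : Fin N // blk t = j})) := by
        intro t t' h
        have h2 : (j:ℕ) * L + (t:ℕ) = (j:ℕ) * L + (t':ℕ) :=
          congrArg (fun z : {t : Fin N // blk t = j} => ((z : Fin N) : ℕ)) h
        exact Fin.ext (by omega)
      calc L = Fintype.card (Fin L) := (Fintype.card_fin L).symm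
        _ ≤ Fintype.card {t : Fin N // blk t = j} := Fintype.card_le_of_injective _ hinj
    have ψinj : Function.Injective
        (fun h : (∀ i : Fin d, {t : Fin N // blk t = b i}) =>
          (⟨fun i => (h i).1, funext fun i => (h i).2⟩ : {x : Fin d → Fin N // bv x = b})) := by
      intro h h' e
      funext i
      have e2 : (fun i => ((h i : Fin N))) = (fun i => ((h' i : Fin N))) :=
        congrArg Subtype.val e
      exact Subtype.ext (congrFun e2 i)
    calc L ^ d = ∏ _i : Fin d, L := by rw [Finset.prod_const, Finset.card_univ, Fintype.card_fin]
      _ ≤ ∏ i : Fin d, Fintype.card {t : Fin N // blk t = b i} :=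
          Finset.prod_le_prod (fun _ _ => Nat.zero_le _) (fun i _ => h1 (b i))
      _ = Fintype.card (∀ i : Fin d, {t : Fin N // blk t = b i}) := Fintype.card_pi.symm
      _ ≤ Fintype.card {x : Fin d → Fin N // bv x = b} :=
          Fintype.card_le_of_injective _ ψinj
  -- total number of sites
  have hsum : ∑ b : Fin d → Fin m, Fintype.card {x : Fin d → Fin N // bv x = b} = N ^ d := by
    rw [← Fintype.card_sigma, Fintype.card_congr (Equiv.sigmaFiberEquiv bv),
      Fintype.card_fun, Fintype.card_fin, Fintype.card_fin]
  -- energy bound for block permutations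
  have hHle : ∀ π : Equiv.Perm (Fin d → Fin N), (∀ x, bv (π x) = bv x) →
      srpEnergy d N π ≤ (N:ℝ)^d * (Real.sqrt d * (2 * L)) := by
    intro π hπ
    rw [srpEnergy]
    have hx : ∀ x : Fin d → Fin N,
        Real.sqrt (∑ i : Fin d, ((x i : ℝ) - ((π x) i : ℝ)) ^ 2)
          ≤ Real.sqrt d * (2 * L) := by
      intro x
      have h2 : ∀ i : Fin d, ((x i:ℝ) - ((π x) i:ℝ))^2 ≤ (2*(L:ℝ))^2 := by
        intro i
        have hb : blk ((π x) i) = blk (x i) := congrFun (hπ x) i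
        have h3 := hblk2 _ _ hb
        have habs : |(x i:ℝ) - ((π x) i:ℝ)| ≤ 2*(L:ℝ) := by
          rw [abs_sub_comm]
          exact h3
        calc ((x i:ℝ) - ((π x) i:ℝ))^2 = |(x i:ℝ) - ((π x) i:ℝ)|^2 := (sq_abs _).symm
          _ ≤ (2*(L:ℝ))^2 := pow_le_pow_left₀ (abs_nonneg _) habs 2
      calc Real.sqrt (∑ i : Fin d, ((x i : ℝ) - ((π x) i : ℝ)) ^ 2)
          ≤ Real.sqrt (∑ _i : Fin d, (2*(L:ℝ))^2) :=
            Real.sqrt_le_sqrt (Finset.sum_le_sum fun i _ => h2 i)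
        _ = Real.sqrt ((d:ℝ) * (2*(L:ℝ))^2) := by
            rw [Finset.sum_const, Finset.card_univ, Fintype.card_fin, nsmul_eq_mul]
        _ = Real.sqrt d * (2*(L:ℝ)) := by
            rw [Real.sqrt_mul (Nat.cast_nonneg d), Real.sqrt_sq (by positivity)]
    calc ∑ x : Fin d → Fin N, Real.sqrt (∑ i : Fin d, ((x i : ℝ) - ((π x) i : ℝ)) ^ 2)
        ≤ ∑ _x : Fin d → Fin N, Real.sqrt d * (2 * (L:ℝ)) :=
          Finset.sum_le_sum fun x _ => hx x
      _ = (N:ℝ)^d * (Real.sqrt d * (2 * L)) := by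
          rw [Finset.sum_const, Finset.card_univ, Fintype.card_fun, Fintype.card_fin,
            Fintype.card_fin, nsmul_eq_mul]
          push_cast
          ring
  -- apply the counting lemma
  set c : ℝ := Real.exp (-β * ((N:ℝ)^d * (Real.sqrt d * (2 * L)))) with hcdef
  have key := sum_over_perms_ge bv (fun π => Real.exp (-β * srpEnergy d N π))
    (fun π => (Real.exp_pos _).le) c
    (fun π hπ => by
      rw [hcdef]
      apply Real.exp_le_exp.mpr
      have h4 := hHle π hπ
      have h5 : (0:ℝ) ≤ β := hβ0.le
      nlinarith)
  -- lower bound each factorial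
  have hfact : ∀ b : Fin d → Fin m,
      ((L:ℝ)^d / Real.exp 1) ^ (Fintype.card {x : Fin d → Fin N // bv x = b})
        ≤ ((Fintype.card {x : Fin d → Fin N // bv x = b}).factorial : ℝ) := by
    intro b
    set k := Fintype.card {x : Fin d → Fin N // bv x = b} with hk
    have h1 : (k:ℝ)^k ≤ Real.exp 1 ^ k * k.factorial := pow_le_exp_mul_factorial k
    have h2 : ((L:ℝ)^d) ≤ (k:ℝ) := by exact_mod_cast hfib b
    have hepos : (0:ℝ) < Real.exp 1 ^ k := pow_pos (Real.exp_pos 1) k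
    calc ((L:ℝ)^d / Real.exp 1)^k = ((L:ℝ)^d)^k / (Real.exp 1)^k := div_pow _ _ _
      _ ≤ (k:ℝ)^k / Real.exp 1 ^ k := by
          have h6 := pow_le_pow_left₀ (by positivity : (0:ℝ) ≤ (L:ℝ)^d) h2 k
          exact div_le_div_of_nonneg_right h6 hepos.le
      _ ≤ (k.factorial : ℝ) := by
          rw [div_le_iff₀ hepos]
          linarith
  -- lower bound the factorial product
  have hP1 : ((L:ℝ)^d / Real.exp 1) ^ (N ^ d)
      ≤ ((∏ b : Fin d → Fin m,
          (Fintype.card {x : Fin d → Fin N // bv x = b}).factorial : ℕ) : ℝ) := by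
    push_cast
    calc ((L:ℝ)^d / Real.exp 1) ^ (N ^ d)
        = ∏ b : Fin d → Fin m, ((L:ℝ)^d / Real.exp 1) ^
            (Fintype.card {x : Fin d → Fin N // bv x = b}) := by
          rw [Finset.prod_pow_eq_pow_sum, hsum]
      _ ≤ ∏ b : Fin d → Fin m,
            ((Fintype.card {x : Fin d → Fin N // bv x = b}).factorial : ℝ) :=
          Finset.prod_le_prod (fun b _ => pow_nonneg (by positivity) _) (fun b _ => hfact b)
  -- lower bound c
  have hβL : β * (L:ℝ) ≤ 1 := by
    have h := mul_le_mul_of_nonneg_left hLle hβ0.le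
    rwa [mul_one_div, div_self (ne_of_gt hβ0)] at h
  have hc2 : Real.exp (-(2*Real.sqrt d) * (N:ℝ)^d) ≤ c := by
    rw [hcdef]
    apply Real.exp_le_exp.mpr
    have hn0 : (0:ℝ) ≤ (N:ℝ)^d := by positivity
    have hs0 : (0:ℝ) ≤ Real.sqrt d := Real.sqrt_nonneg d
    nlinarith [mul_le_mul_of_nonneg_left hβL
      (mul_nonneg (mul_nonneg (by norm_num : (0:ℝ) ≤ 2) hs0) hn0)]
  -- arithmetic assembly
  have h2L : (2*(L:ℝ))^(d * N^d)
      = Real.exp (((d * N^d : ℕ) : ℝ) * Real.log 2) * (L:ℝ)^(d * N^d) := by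
    rw [mul_pow]
    congr 1
    rw [Real.exp_nat_mul, Real.exp_log (by norm_num : (0:ℝ) < 2)]
  have hLd : ((L:ℝ)^d / Real.exp 1)^(N^d)
      = (L:ℝ)^(d * N^d) * Real.exp (-((N^d : ℕ) : ℝ)) := by
    rw [div_pow, ← pow_mul, Real.exp_one_pow, Real.exp_neg, div_eq_mul_inv]
  have hstep : (1 / β) ^ (d * N ^ d) *
      Real.exp (-(1 + 2 * Real.sqrt d + d * Real.log 2) * (N : ℝ) ^ d)
      ≤ ((L:ℝ)^d / Real.exp 1) ^ (N ^ d) * Real.exp (-(2*Real.sqrt d) * (N:ℝ)^d) := by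
    have hs1 : (1/β) ^ (d * N^d) ≤ (2*(L:ℝ)) ^ (d * N^d) :=
      pow_le_pow_left₀ (by positivity) hLge _
    calc (1 / β) ^ (d * N ^ d) *
        Real.exp (-(1 + 2 * Real.sqrt d + d * Real.log 2) * (N : ℝ) ^ d)
        ≤ (2*(L:ℝ)) ^ (d * N^d) *
            Real.exp (-(1 + 2 * Real.sqrt d + d * Real.log 2) * (N : ℝ) ^ d) :=
          mul_le_mul_of_nonneg_right hs1 (Real.exp_pos _).le
      _ = ((L:ℝ)^d / Real.exp 1) ^ (N ^ d) * Real.exp (-(2*Real.sqrt d) * (N:ℝ)^d) := by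
          rw [h2L, hLd]
          rw [mul_comm (Real.exp (((d * N^d : ℕ) : ℝ) * Real.log 2)) ((L:ℝ)^(d * N^d)),
            mul_assoc, mul_assoc, ← Real.exp_add, ← Real.exp_add]
          congr 1
          push_cast
          ring
  have hPnn : (0:ℝ) ≤ ((L:ℝ)^d / Real.exp 1) ^ (N ^ d) := by positivity
  calc (1 / β) ^ (d * N ^ d) *
      Real.exp (-(1 + 2 * Real.sqrt d + d * Real.log 2) * (N : ℝ) ^ d)
      ≤ ((L:ℝ)^d / Real.exp 1) ^ (N ^ d) * Real.exp (-(2*Real.sqrt d) * (N:ℝ)^d) := hstep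
    _ ≤ ((∏ b : Fin d → Fin m,
          (Fintype.card {x : Fin d → Fin N // bv x = b}).factorial : ℕ) : ℝ) * c :=
        mul_le_mul hP1 hc2 (Real.exp_pos _).le (Nat.cast_nonneg _)
    _ ≤ ∑ π : Equiv.Perm (Fin d → Fin N), Real.exp (-β * srpEnergy d N π) := key

lemma Z_pos (d N : ℕ) (β : ℝ) : 0 < srpZ d N β :=
  Finset.sum_pos (fun _ _ => Real.exp_pos _) ⟨1, Finset.mem_univ _⟩


/-- The constant in the partition-function lower bound. -/
noncomputable def srpC1 (d : ℕ) : ℝ := 1 + 2 * Real.sqrt d + d * Real.log 2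

/-- The constant for the lower bound on the displacement. -/
noncomputable def srpK (d : ℕ) : ℝ := 4 * Real.exp ((srpC1 d + Real.sqrt d + 1) / d)

/-- The constant for the upper bound on the displacement. -/
noncomputable def srpG (d : ℕ) : ℝ := d * Real.log (16 * Real.sqrt d) + srpC1 d

lemma one_le_sqrt (d : ℕ) (hd : 1 ≤ d) : (1:ℝ) ≤ Real.sqrt d := by
  have h := Real.sqrt_le_sqrt (show (1:ℝ) ≤ (d:ℝ) by exact_mod_cast hd)
  rwa [Real.sqrt_one] at h

lemma inv_beta_pow_le (d N : ℕ) (hd : 1 ≤ d) {β : ℝ} (hβ0 : 0 < β) (hβ1 : β ≤ 1)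
    (hN : 1 ≤ β * N) :
    (1 / β) ^ (d * N ^ d) ≤ Real.exp (srpC1 d * (N:ℝ)^d) * srpZ d N β := by
  have h : (1 / β) ^ (d * N ^ d) *
      Real.exp (-(srpC1 d) * (N : ℝ) ^ d) ≤ srpZ d N β := by
    rw [srpC1]
    exact Z_lower d N hd hβ0 hβ1 hN
  calc (1 / β) ^ (d * N ^ d)
      = Real.exp (srpC1 d * (N:ℝ)^d) *
          ((1 / β) ^ (d * N ^ d) * Real.exp (-(srpC1 d) * (N:ℝ)^d)) := by
        rw [mul_comm (Real.exp (srpC1 d * (N:ℝ)^d)) _, mul_assoc, ← Real.exp_add]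
        rw [show -(srpC1 d) * (N:ℝ)^d + srpC1 d * (N:ℝ)^d = 0 by ring]
        rw [Real.exp_zero, mul_one]
    _ ≤ Real.exp (srpC1 d * (N:ℝ)^d) * srpZ d N β :=
        mul_le_mul_of_nonneg_left h (Real.exp_pos _).le

lemma srpD_eq (d N : ℕ) (β : ℝ) :
    srpD d N β = (1 / (N:ℝ)^d) *
      ((∑ π : Equiv.Perm (Fin d → Fin N),
        Real.exp (-β * srpEnergy d N π) * srpEnergy d N π) / srpZ d N β) := by
  rw [srpD]
  congr 1
  rw [Finset.sum_div]
  exact Finset.sum_congr rfl fun π _ => by rw [srpP, div_mul_eq_mul_div]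

lemma D_upper (d N : ℕ) (hd : 1 ≤ d) {β : ℝ} (hβ0 : 0 < β) (hβ1 : β ≤ 1)
    (hN : 1 ≤ β * N) :
    srpD d N β ≤ (4 * srpG d + 4) / β := by
  classical
  have hZ := Z_pos d N β
  have hβne := hβ0.ne'
  have hsd1 : (1:ℝ) ≤ Real.sqrt d := one_le_sqrt d hd
  have hsd0 : (0:ℝ) < Real.sqrt d := lt_of_lt_of_le one_pos hsd1
  have hN1R : (1:ℝ) ≤ N := by
    have h := mul_le_mul_of_nonneg_right hβ1 (Nat.cast_nonneg N)
    rw [one_mul] at h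
    linarith
  have hnR1 : (1:ℝ) ≤ (N:ℝ)^d := one_le_pow₀ hN1R
  have hnR0 : (0:ℝ) < (N:ℝ)^d := lt_of_lt_of_le one_pos hnR1
  have hnRne := hnR0.ne'
  have hc1pos : 0 < srpC1 d := by
    rw [srpC1]
    have h1 : 0 ≤ (d:ℝ) * Real.log 2 :=
      mul_nonneg (Nat.cast_nonneg d) (Real.log_nonneg (by norm_num))
    nlinarith [Real.sqrt_nonneg (d:ℝ)]
  have hγpos : 0 < srpG d := by
    rw [srpG]
    have h1 : 0 < Real.log (16 * Real.sqrt d) := Real.log_pos (by nlinarith)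
    have h2 : (0:ℝ) < d := by exact_mod_cast hd
    nlinarith
  set γ := srpG d with hγ
  set t0 : ℝ := 4 * γ * (N:ℝ)^d / β with ht0
  have ht0nn : 0 ≤ t0 := by positivity
  set a : ℝ := β / (4 * Real.sqrt d) with ha
  have ha0 : 0 < a := by positivity
  have ha1 : a ≤ 1 := by
    rw [ha, div_le_one (by positivity)]
    nlinarith
  -- pointwise bound on the tail
  have hB1 : ∀ π : Equiv.Perm (Fin d → Fin N), ¬ srpEnergy d N π ≤ t0 →
      Real.exp (-β * srpEnergy d N π) * srpEnergy d N π
        ≤ 4 / β * Real.exp (-(β * t0 / 2)) * Real.exp (-(a * S d N ⇑π)) := by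
    intro π hH
    push_neg at hH
    have hH0 : 0 ≤ srpEnergy d N π := energy_nonneg d N π
    set H := srpEnergy d N π with hHdef
    have h1 : H ≤ 4 / β * Real.exp (β * H / 4) := by
      have h2 : β * H / 4 ≤ Real.exp (β * H / 4) := by
        linarith [Real.add_one_le_exp (β * H / 4)]
      calc H = 4 / β * (β * H / 4) := by
            field_simp
        _ ≤ 4 / β * Real.exp (β * H / 4) := mul_le_mul_of_nonneg_left h2 (by positivity)
    calc Real.exp (-β * H) * H
        ≤ Real.exp (-β * H) * (4 / β * Real.exp (β * H / 4)) :=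
          mul_le_mul_of_nonneg_left h1 (Real.exp_pos _).le
      _ = 4 / β * (Real.exp (-(β * H / 2)) * Real.exp (-(β * H / 4))) := by
          rw [show Real.exp (-β * H) * (4 / β * Real.exp (β * H / 4))
              = 4 / β * (Real.exp (-β * H) * Real.exp (β * H / 4)) from by ring,
            ← Real.exp_add, ← Real.exp_add]
          congr 1
          ring
      _ ≤ 4 / β * (Real.exp (-(β * t0 / 2)) * Real.exp (-(a * S d N ⇑π))) := by
          refine mul_le_mul_of_nonneg_left ?_ (by positivity)
          have hS := S_le_sqrt_mul_energy d N π
          refine mul_le_mul (Real.exp_le_exp.mpr (by nlinarith)) (Real.exp_le_exp.mpr ?_)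
            (Real.exp_pos _).le (Real.exp_pos _).le
          have h3 : a * S d N ⇑π ≤ a * (Real.sqrt d * H) :=
            mul_le_mul_of_nonneg_left hS ha0.le
          have h4 : a * (Real.sqrt d * H) = β * H / 4 := by
            rw [ha]
            field_simp
          linarith
      _ = 4 / β * Real.exp (-(β * t0 / 2)) * Real.exp (-(a * S d N ⇑π)) := by ring
  -- splitting the sum
  have hsplit := Finset.sum_filter_add_sum_filter_not Finset.univ
    (fun π : Equiv.Perm (Fin d → Fin N) => srpEnergy d N π ≤ t0)
    (fun π => Real.exp (-β * srpEnergy d N π) * srpEnergy d N π)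
  have hA : ∑ π ∈ Finset.univ.filter
        (fun π : Equiv.Perm (Fin d → Fin N) => srpEnergy d N π ≤ t0),
      Real.exp (-β * srpEnergy d N π) * srpEnergy d N π ≤ t0 * srpZ d N β := by
    calc ∑ π ∈ Finset.univ.filter
          (fun π : Equiv.Perm (Fin d → Fin N) => srpEnergy d N π ≤ t0),
        Real.exp (-β * srpEnergy d N π) * srpEnergy d N π
        ≤ ∑ π ∈ Finset.univ.filter
            (fun π : Equiv.Perm (Fin d → Fin N) => srpEnergy d N π ≤ t0),
          Real.exp (-β * srpEnergy d N π) * t0 :=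
          Finset.sum_le_sum fun π hπ =>
            mul_le_mul_of_nonneg_left (Finset.mem_filter.mp hπ).2 (Real.exp_pos _).le
      _ ≤ ∑ π : Equiv.Perm (Fin d → Fin N), Real.exp (-β * srpEnergy d N π) * t0 :=
          Finset.sum_le_sum_of_subset_of_nonneg (Finset.filter_subset _ _)
            (fun π _ _ => mul_nonneg (Real.exp_pos _).le ht0nn)
      _ = t0 * srpZ d N β := by rw [srpZ, ← Finset.sum_mul, mul_comm]
  have hBsum : ∑ π ∈ Finset.univ.filter
        (fun π : Equiv.Perm (Fin d → Fin N) => ¬ srpEnergy d N π ≤ t0),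
      Real.exp (-β * srpEnergy d N π) * srpEnergy d N π
        ≤ 4 / β * Real.exp (-(β * t0 / 2)) * (4 / a) ^ (d * N ^ d) := by
    calc ∑ π ∈ Finset.univ.filter
          (fun π : Equiv.Perm (Fin d → Fin N) => ¬ srpEnergy d N π ≤ t0),
        Real.exp (-β * srpEnergy d N π) * srpEnergy d N π
        ≤ ∑ π ∈ Finset.univ.filter
            (fun π : Equiv.Perm (Fin d → Fin N) => ¬ srpEnergy d N π ≤ t0),
          4 / β * Real.exp (-(β * t0 / 2)) * Real.exp (-(a * S d N ⇑π)) :=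
          Finset.sum_le_sum fun π hπ => hB1 π (Finset.mem_filter.mp hπ).2
      _ ≤ ∑ π : Equiv.Perm (Fin d → Fin N),
            4 / β * Real.exp (-(β * t0 / 2)) * Real.exp (-(a * S d N ⇑π)) :=
          Finset.sum_le_sum_of_subset_of_nonneg (Finset.filter_subset _ _)
            (fun π _ _ => by positivity)
      _ = 4 / β * Real.exp (-(β * t0 / 2)) *
            ∑ π : Equiv.Perm (Fin d → Fin N), Real.exp (-(a * S d N ⇑π)) := by
          rw [← Finset.mul_sum]
      _ ≤ 4 / β * Real.exp (-(β * t0 / 2)) * (4 / a) ^ (d * N ^ d) :=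
          mul_le_mul_of_nonneg_left (sum_exp_S_le d N a ha0 ha1) (by positivity)
  -- the tail is at most (4/β)·Z
  have hβpow := inv_beta_pow_le d N hd hβ0 hβ1 hN
  have h4a : 4 / a = 16 * Real.sqrt d * (1 / β) := by
    rw [ha]
    field_simp
    ring
  have h16 : (16 * Real.sqrt d) ^ (d * N ^ d)
      = Real.exp (((d * N ^ d : ℕ) : ℝ) * Real.log (16 * Real.sqrt d)) := by
    rw [Real.exp_nat_mul, Real.exp_log (by positivity)]
  have hmid : Real.exp (-(β * t0 / 2)) *
      ((16 * Real.sqrt d) ^ (d * N ^ d) * Real.exp (srpC1 d * (N:ℝ)^d)) ≤ 1 := by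
    rw [h16, ← Real.exp_add, ← Real.exp_add]
    rw [Real.exp_le_one_iff]
    have hb : β * t0 / 2 = 2 * γ * (N:ℝ)^d := by
      rw [ht0]
      field_simp
      ring
    have hcast : ((d * N ^ d : ℕ) : ℝ) = (d:ℝ) * (N:ℝ)^d := by push_cast; ring
    rw [hb, hcast]
    have hgeq : γ = (d:ℝ) * Real.log (16 * Real.sqrt d) + srpC1 d := by rw [hγ, srpG]
    nlinarith [hγpos, hnR0]
  have htail : 4 / β * Real.exp (-(β * t0 / 2)) * (4 / a) ^ (d * N ^ d)
      ≤ 4 / β * srpZ d N β := by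
    calc 4 / β * Real.exp (-(β * t0 / 2)) * (4 / a) ^ (d * N ^ d)
        = 4 / β * Real.exp (-(β * t0 / 2)) *
            ((16 * Real.sqrt d) ^ (d * N ^ d) * (1 / β) ^ (d * N ^ d)) := by
          rw [h4a, mul_pow]
      _ ≤ 4 / β * Real.exp (-(β * t0 / 2)) *
            ((16 * Real.sqrt d) ^ (d * N ^ d) *
              (Real.exp (srpC1 d * (N:ℝ)^d) * srpZ d N β)) := by
          refine mul_le_mul_of_nonneg_left ?_ (by positivity)
          exact mul_le_mul_of_nonneg_left hβpow (by positivity)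
      _ = 4 / β * (Real.exp (-(β * t0 / 2)) *
            ((16 * Real.sqrt d) ^ (d * N ^ d) * Real.exp (srpC1 d * (N:ℝ)^d)))
            * srpZ d N β := by ring
      _ ≤ 4 / β * 1 * srpZ d N β := by
          refine mul_le_mul_of_nonneg_right ?_ hZ.le
          exact mul_le_mul_of_nonneg_left hmid (by positivity)
      _ = 4 / β * srpZ d N β := by ring
  -- total bound on T
  have hTle : (∑ π : Equiv.Perm (Fin d → Fin N),
      Real.exp (-β * srpEnergy d N π) * srpEnergy d N π) ≤ (t0 + 4 / β) * srpZ d N β := by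
    calc (∑ π : Equiv.Perm (Fin d → Fin N),
        Real.exp (-β * srpEnergy d N π) * srpEnergy d N π)
        = _ + _ := hsplit.symm
      _ ≤ t0 * srpZ d N β + 4 / β * srpZ d N β :=
          add_le_add hA (le_trans hBsum htail)
      _ = (t0 + 4 / β) * srpZ d N β := by ring
  -- conclude
  rw [srpD_eq]
  have hTZ : (∑ π : Equiv.Perm (Fin d → Fin N),
      Real.exp (-β * srpEnergy d N π) * srpEnergy d N π) / srpZ d N β ≤ t0 + 4 / β := by
    rw [div_le_iff₀ hZ]
    exact hTle
  calc (1 / (N:ℝ)^d) * ((∑ π : Equiv.Perm (Fin d → Fin N),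
      Real.exp (-β * srpEnergy d N π) * srpEnergy d N π) / srpZ d N β)
      ≤ (1 / (N:ℝ)^d) * (t0 + 4 / β) :=
        mul_le_mul_of_nonneg_left hTZ (by positivity)
    _ = 4 * γ / β + 4 / β * (1 / (N:ℝ)^d) := by
        rw [ht0]
        field_simp
    _ ≤ 4 * γ / β + 4 / β * 1 := by
        refine add_le_add le_rfl (mul_le_mul_of_nonneg_left ?_ (by positivity))
        rw [div_le_one hnR0]
        exact hnR1
    _ = (4 * γ + 4) / β := by
        rw [mul_one, add_div]

lemma D_lower (d N : ℕ) (hd : 1 ≤ d) {β : ℝ} (hβ0 : 0 < β) (hβ1 : β ≤ 1)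
    (hN : 1 ≤ β * N) (hKβ : srpK d * β ≤ 1) :
    (1 / (2 * srpK d)) / β ≤ srpD d N β := by
  classical
  have hZ := Z_pos d N β
  have hβne := hβ0.ne'
  have hsd1 : (1:ℝ) ≤ Real.sqrt d := one_le_sqrt d hd
  have hsd0 : (0:ℝ) < Real.sqrt d := lt_of_lt_of_le one_pos hsd1
  have hd0 : (0:ℝ) < d := by exact_mod_cast hd
  have hN1R : (1:ℝ) ≤ N := by
    have h := mul_le_mul_of_nonneg_right hβ1 (Nat.cast_nonneg N)
    rw [one_mul] at h
    linarith
  have hnR1 : (1:ℝ) ≤ (N:ℝ)^d := one_le_pow₀ hN1R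
  have hnR0 : (0:ℝ) < (N:ℝ)^d := lt_of_lt_of_le one_pos hnR1
  have hnRne := hnR0.ne'
  have hK0 : (0:ℝ) < srpK d := by
    rw [srpK]
    positivity
  set K := srpK d with hKdef
  set a : ℝ := K * β with ha
  have ha0 : 0 < a := by positivity
  have ha1 : a ≤ 1 := hKβ
  set M : ℝ := (N:ℝ)^d / (K * β) with hM
  have hM0 : 0 ≤ M := by positivity
  -- the low-energy part of Z is at most e⁻¹ Z
  have hAle : ∑ π ∈ Finset.univ.filter
        (fun π : Equiv.Perm (Fin d → Fin N) => srpEnergy d N π ≤ M),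
      Real.exp (-β * srpEnergy d N π) ≤ Real.exp (-(1:ℝ)) * srpZ d N β := by
    have haM : a * M = (N:ℝ)^d := by
      rw [ha, hM]
      field_simp
    have hstep1 : ∑ π ∈ Finset.univ.filter
          (fun π : Equiv.Perm (Fin d → Fin N) => srpEnergy d N π ≤ M),
        Real.exp (-β * srpEnergy d N π)
          ≤ Real.exp (Real.sqrt d * (N:ℝ)^d) *
              ∑ π : Equiv.Perm (Fin d → Fin N), Real.exp (-(a * S d N ⇑π)) := by
      rw [Finset.mul_sum]
      calc ∑ π ∈ Finset.univ.filter
            (fun π : Equiv.Perm (Fin d → Fin N) => srpEnergy d N π ≤ M),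
          Real.exp (-β * srpEnergy d N π)
          ≤ ∑ π ∈ Finset.univ.filter
              (fun π : Equiv.Perm (Fin d → Fin N) => srpEnergy d N π ≤ M),
            Real.exp (Real.sqrt d * (N:ℝ)^d) * Real.exp (-(a * S d N ⇑π)) := by
            refine Finset.sum_le_sum fun π hπ => ?_
            have hH := (Finset.mem_filter.mp hπ).2
            have hH0 : 0 ≤ srpEnergy d N π := energy_nonneg d N π
            have hSle : S d N ⇑π ≤ Real.sqrt d * M :=
              le_trans (S_le_sqrt_mul_energy d N π)
                (mul_le_mul_of_nonneg_left hH (Real.sqrt_nonneg _))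
            have h1 : Real.exp (-β * srpEnergy d N π) ≤ 1 := by
              rw [Real.exp_le_one_iff]
              nlinarith
            have h2 : (1:ℝ) ≤ Real.exp (Real.sqrt d * (N:ℝ)^d) * Real.exp (-(a * S d N ⇑π)) := by
              rw [← Real.exp_add]
              have h3 : a * S d N ⇑π ≤ a * (Real.sqrt d * M) :=
                mul_le_mul_of_nonneg_left hSle ha0.le
              have h4 : a * (Real.sqrt d * M) = Real.sqrt d * (N:ℝ)^d := by
                rw [show a * (Real.sqrt d * M) = Real.sqrt d * (a * M) from by ring, haM]
              have h5 : (0:ℝ) ≤ Real.sqrt d * (N:ℝ)^d + -(a * S d N ⇑π) := by nlinarith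
              calc (1:ℝ) = Real.exp 0 := by rw [Real.exp_zero]
                _ ≤ _ := Real.exp_le_exp.mpr h5
            linarith
        _ ≤ ∑ π : Equiv.Perm (Fin d → Fin N),
              Real.exp (Real.sqrt d * (N:ℝ)^d) * Real.exp (-(a * S d N ⇑π)) :=
            Finset.sum_le_sum_of_subset_of_nonneg (Finset.filter_subset _ _)
              (fun π _ _ => by positivity)
    have hstep2 : Real.exp (Real.sqrt d * (N:ℝ)^d) *
        (∑ π : Equiv.Perm (Fin d → Fin N), Real.exp (-(a * S d N ⇑π)))
          ≤ Real.exp (Real.sqrt d * (N:ℝ)^d) * (4 / a) ^ (d * N ^ d) :=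
      mul_le_mul_of_nonneg_left (sum_exp_S_le d N a ha0 ha1) (Real.exp_pos _).le
    have h4K : (4:ℝ) / K = Real.exp (-((srpC1 d + Real.sqrt d + 1) / d)) := by
      have hE := (Real.exp_pos ((srpC1 d + Real.sqrt d + 1) / (d:ℝ))).ne'
      rw [hKdef, srpK, Real.exp_neg]
      field_simp
    have hstep3 : Real.exp (Real.sqrt d * (N:ℝ)^d) * (4 / a) ^ (d * N ^ d)
        ≤ Real.exp (-(1:ℝ)) * srpZ d N β := by
      have e1 : (4 / a) ^ (d * N ^ d)
          = (Real.exp (-((srpC1 d + Real.sqrt d + 1) / d))) ^ (d * N ^ d) *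
              (1 / β) ^ (d * N ^ d) := by
        rw [← mul_pow, ← h4K, ha]
        congr 1
        field_simp
      have e2 : (Real.exp (-((srpC1 d + Real.sqrt d + 1) / d))) ^ (d * N ^ d)
          = Real.exp (-((srpC1 d + Real.sqrt d + 1)) * (N:ℝ)^d) := by
        rw [← Real.exp_nat_mul]
        congr 1
        push_cast
        field_simp
      calc Real.exp (Real.sqrt d * (N:ℝ)^d) * (4 / a) ^ (d * N ^ d)
          = Real.exp (Real.sqrt d * (N:ℝ)^d) *
              (Real.exp (-((srpC1 d + Real.sqrt d + 1)) * (N:ℝ)^d) *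
                (1 / β) ^ (d * N ^ d)) := by rw [e1, e2]
        _ ≤ Real.exp (Real.sqrt d * (N:ℝ)^d) *
              (Real.exp (-((srpC1 d + Real.sqrt d + 1)) * (N:ℝ)^d) *
                (Real.exp (srpC1 d * (N:ℝ)^d) * srpZ d N β)) := by
            refine mul_le_mul_of_nonneg_left ?_ (Real.exp_pos _).le
            exact mul_le_mul_of_nonneg_left
              (inv_beta_pow_le d N hd hβ0 hβ1 hN) (Real.exp_pos _).le
        _ = (Real.exp (Real.sqrt d * (N:ℝ)^d) *
              Real.exp (-((srpC1 d + Real.sqrt d + 1)) * (N:ℝ)^d) *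
              Real.exp (srpC1 d * (N:ℝ)^d)) * srpZ d N β := by ring
        _ ≤ Real.exp (-(1:ℝ)) * srpZ d N β := by
            refine mul_le_mul_of_nonneg_right ?_ hZ.le
            rw [← Real.exp_add, ← Real.exp_add]
            apply Real.exp_le_exp.mpr
            nlinarith [hnR1]
    calc ∑ π ∈ Finset.univ.filter
          (fun π : Equiv.Perm (Fin d → Fin N) => srpEnergy d N π ≤ M),
        Real.exp (-β * srpEnergy d N π)
        ≤ Real.exp (Real.sqrt d * (N:ℝ)^d) *
            ∑ π : Equiv.Perm (Fin d → Fin N), Real.exp (-(a * S d N ⇑π)) := hstep1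
      _ ≤ Real.exp (Real.sqrt d * (N:ℝ)^d) * (4 / a) ^ (d * N ^ d) := hstep2
      _ ≤ Real.exp (-(1:ℝ)) * srpZ d N β := hstep3
  -- lower bound on T
  have he2 : Real.exp (-(1:ℝ)) ≤ 1/2 := by
    have h2e : (2:ℝ) ≤ Real.exp 1 := by linarith [Real.add_one_le_exp 1]
    rw [Real.exp_neg]
    calc (Real.exp 1)⁻¹ ≤ 2⁻¹ := inv_anti₀ (by norm_num) h2e
      _ = 1/2 := by norm_num
  have hZsplit := Finset.sum_filter_add_sum_filter_not Finset.univ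
    (fun π : Equiv.Perm (Fin d → Fin N) => srpEnergy d N π ≤ M)
    (fun π => Real.exp (-β * srpEnergy d N π))
  have hBge : M / 2 * srpZ d N β ≤ ∑ π : Equiv.Perm (Fin d → Fin N),
      Real.exp (-β * srpEnergy d N π) * srpEnergy d N π := by
    have h1 : ∑ π ∈ Finset.univ.filter
          (fun π : Equiv.Perm (Fin d → Fin N) => ¬ srpEnergy d N π ≤ M),
        Real.exp (-β * srpEnergy d N π) * M
          ≤ ∑ π ∈ Finset.univ.filter
            (fun π : Equiv.Perm (Fin d → Fin N) => ¬ srpEnergy d N π ≤ M),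
          Real.exp (-β * srpEnergy d N π) * srpEnergy d N π := by
      refine Finset.sum_le_sum fun π hπ => ?_
      have hH := (Finset.mem_filter.mp hπ).2
      push_neg at hH
      exact mul_le_mul_of_nonneg_left hH.le (Real.exp_pos _).le
    have h2 : ∑ π ∈ Finset.univ.filter
          (fun π : Equiv.Perm (Fin d → Fin N) => ¬ srpEnergy d N π ≤ M),
        Real.exp (-β * srpEnergy d N π) * srpEnergy d N π
          ≤ ∑ π : Equiv.Perm (Fin d → Fin N),
            Real.exp (-β * srpEnergy d N π) * srpEnergy d N π :=
      Finset.sum_le_sum_of_subset_of_nonneg (Finset.filter_subset _ _)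
        (fun π _ _ => mul_nonneg (Real.exp_pos _).le (energy_nonneg d N π))
    have h3 : (∑ π ∈ Finset.univ.filter
          (fun π : Equiv.Perm (Fin d → Fin N) => ¬ srpEnergy d N π ≤ M),
        Real.exp (-β * srpEnergy d N π)) * M
          = ∑ π ∈ Finset.univ.filter
            (fun π : Equiv.Perm (Fin d → Fin N) => ¬ srpEnergy d N π ≤ M),
          Real.exp (-β * srpEnergy d N π) * M := Finset.sum_mul _ _ _
    have h4 : (1 - Real.exp (-(1:ℝ))) * srpZ d N β
        ≤ ∑ π ∈ Finset.univ.filter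
            (fun π : Equiv.Perm (Fin d → Fin N) => ¬ srpEnergy d N π ≤ M),
          Real.exp (-β * srpEnergy d N π) := by
      have h5 : srpZ d N β = _ + _ := hZsplit.symm
      have h6 := hAle
      nlinarith [hZ]
    have h7 : (1:ℝ)/2 ≤ 1 - Real.exp (-(1:ℝ)) := by linarith
    calc M / 2 * srpZ d N β = M * ((1:ℝ)/2 * srpZ d N β) := by ring
      _ ≤ M * ((1 - Real.exp (-(1:ℝ))) * srpZ d N β) := by
          refine mul_le_mul_of_nonneg_left ?_ hM0
          exact mul_le_mul_of_nonneg_right h7 hZ.le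
      _ ≤ M * (∑ π ∈ Finset.univ.filter
            (fun π : Equiv.Perm (Fin d → Fin N) => ¬ srpEnergy d N π ≤ M),
          Real.exp (-β * srpEnergy d N π)) := mul_le_mul_of_nonneg_left h4 hM0
      _ = (∑ π ∈ Finset.univ.filter
            (fun π : Equiv.Perm (Fin d → Fin N) => ¬ srpEnergy d N π ≤ M),
          Real.exp (-β * srpEnergy d N π)) * M := by ring
      _ = ∑ π ∈ Finset.univ.filter
            (fun π : Equiv.Perm (Fin d → Fin N) => ¬ srpEnergy d N π ≤ M),
          Real.exp (-β * srpEnergy d N π) * M := h3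
      _ ≤ ∑ π ∈ Finset.univ.filter
            (fun π : Equiv.Perm (Fin d → Fin N) => ¬ srpEnergy d N π ≤ M),
          Real.exp (-β * srpEnergy d N π) * srpEnergy d N π := h1
      _ ≤ ∑ π : Equiv.Perm (Fin d → Fin N),
            Real.exp (-β * srpEnergy d N π) * srpEnergy d N π := h2
  -- conclude
  rw [srpD_eq]
  have hTZ : M / 2 ≤ (∑ π : Equiv.Perm (Fin d → Fin N),
      Real.exp (-β * srpEnergy d N π) * srpEnergy d N π) / srpZ d N β := by
    rw [le_div_iff₀ hZ]
    exact hBge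
  have hKne := hK0.ne'
  have heq : (1 / (2 * K)) / β = (1 / (N:ℝ)^d) * (M / 2) := by
    rw [hM]
    field_simp
  rw [heq]
  exact mul_le_mul_of_nonneg_left hTZ (by positivity)


end SRP

/-- **Band structure, supercritical regime.** If `d ≥ 1`, `β(N) → 0` and
`N·β(N) → ∞`, then `D^N_{β(N)} = Θ(1/β(N))`. -/
theorem band_structure_supercritical (d : ℕ) (hd : 1 ≤ d) (β : ℕ → ℝ)
    (hβpos : ∀ N, 0 < β N)
    (hβ0 : Tendsto β atTop (𝓝 0))
    (hβN : Tendsto (fun N : ℕ => (N : ℝ) * β N) atTop atTop) :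
    ∃ C > (0:ℝ), ∃ N₀ : ℕ, ∀ N ≥ N₀,
      C⁻¹ / β N ≤ srpD d N (β N) ∧ srpD d N (β N) ≤ C / β N := by
  have hsd1 : (1:ℝ) ≤ Real.sqrt d := SRP.one_le_sqrt d hd
  have hK0 : (0:ℝ) < SRP.srpK d := by
    rw [SRP.srpK]
    positivity
  have hc1pos : 0 < SRP.srpC1 d := by
    rw [SRP.srpC1]
    have h1 : 0 ≤ (d:ℝ) * Real.log 2 :=
      mul_nonneg (Nat.cast_nonneg d) (Real.log_nonneg (by norm_num))
    nlinarith [Real.sqrt_nonneg (d:ℝ)]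
  have hγ0 : 0 < SRP.srpG d := by
    rw [SRP.srpG]
    have h1 : 0 < Real.log (16 * Real.sqrt d) := Real.log_pos (by nlinarith)
    have h2 : (0:ℝ) < d := by exact_mod_cast hd
    nlinarith
  set C := 2 * SRP.srpK d + (4 * SRP.srpG d + 4) with hC
  have hCpos : 0 < C := by positivity
  refine ⟨C, hCpos, ?_⟩
  have h1 : ∀ᶠ N in atTop, (1:ℝ) ≤ β N * N := by
    filter_upwards [hβN.eventually_ge_atTop 1] with N h
    rw [mul_comm] at h
    exact h
  have hmin0 : (0:ℝ) < min 1 (1 / SRP.srpK d) := by positivity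
  have h2 : ∀ᶠ N in atTop, β N < min 1 (1 / SRP.srpK d) :=
    hβ0.eventually (gt_mem_nhds hmin0)
  obtain ⟨N₀, hN₀⟩ := Filter.eventually_atTop.mp (h1.and h2)
  refine ⟨N₀, fun N hN => ?_⟩
  obtain ⟨hA, hB⟩ := hN₀ N hN
  have hβ1 : β N ≤ 1 := le_of_lt (lt_of_lt_of_le hB (min_le_left _ _))
  have hβK : β N < 1 / SRP.srpK d := lt_of_lt_of_le hB (min_le_right _ _)
  have hKβ : SRP.srpK d * β N ≤ 1 := by
    rw [lt_div_iff₀ hK0] at hβK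
    linarith [hβK]
  have hlow := SRP.D_lower d N hd (hβpos N) hβ1 hA hKβ
  have hup := SRP.D_upper d N hd (hβpos N) hβ1 hA
  constructor
  · refine le_trans ?_ hlow
    have hc1 : C⁻¹ ≤ 1 / (2 * SRP.srpK d) := by
      rw [inv_eq_one_div]
      apply one_div_le_one_div_of_le (by positivity)
      rw [hC]
      nlinarith
    exact div_le_div_of_nonneg_right hc1 (hβpos N).le
  · refine le_trans hup ?_
    have hc2 : 4 * SRP.srpG d + 4 ≤ C := by
      rw [hC]
      nlinarith
    exact div_le_div_of_nonneg_right hc2 (hβpos N).le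
end

section
/- Let d ≥ 1 and let β : ℕ → [0,∞) be a sequence for which there exists K > 0 with β(N) ≤ K/N for all N. Then there exist a constant C > 0 and N₀ such that for all N ≥ N₀ one has C⁻¹ N ≤ D^N_{β(N)} ≤ C N. (In other words, if β = O(1/N) then the mean displacement per site satisfies D^N_β = Θ(N).) -/
open Filter Topology

lemma srpP_eq (d N : ℕ) (β : ℝ) (π : Equiv.Perm (Fin d → Fin N)) :
    srpP d N β π = Real.exp (-β * srpEnergy d N π) / srpZ d N β := rfl

lemma srpZ_eq (d N : ℕ) (β : ℝ) :
    srpZ d N β = ∑ π : Equiv.Perm (Fin d → Fin N), Real.exp (-β * srpEnergy d N π) := rfl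

lemma srpD_eq (d N : ℕ) (β : ℝ) :
    srpD d N β = (1 / (N : ℝ) ^ d) *
      ∑ π : Equiv.Perm (Fin d → Fin N), srpP d N β π * srpEnergy d N π := rfl

section SRPHelpers
open Finset

-- factorial lower bound  n^n ≤ e^n n!
lemma fact_lb : ∀ n : ℕ, (n:ℝ)^n ≤ Real.exp n * n.factorial := by
  intro n
  induction n with
  | zero => simp
  | succ n ih =>
    push_cast
    have h1 : ((n:ℝ)+1)^n ≤ Real.exp 1 * (n:ℝ)^n := by
      rcases Nat.eq_zero_or_pos n with h | h
      · subst h; simp [Real.one_le_exp (by norm_num : (0:ℝ) ≤ 1)]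
      · have hn : (0:ℝ) < n := by positivity
        have : ((n:ℝ)+1)^n = (n:ℝ)^n * (1 + 1/n)^n := by
          rw [← mul_pow, mul_add, mul_one, mul_one_div, div_self (ne_of_gt hn)]
        rw [this]
        have h2 : (1 + 1/(n:ℝ))^n ≤ Real.exp 1 := by
          have h3 : (1 + 1/(n:ℝ)) ≤ Real.exp (1/n) := by
            have := Real.add_one_le_exp (1/(n:ℝ)); linarith
          calc (1 + 1/(n:ℝ))^n ≤ (Real.exp (1/n))^n := by
                apply pow_le_pow_left₀ (by positivity) h3
            _ = Real.exp ((1/n)*n) := by rw [← Real.exp_nat_mul]; ring_nf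
            _ = Real.exp 1 := by rw [div_mul_cancel₀]; exact ne_of_gt hn
        nlinarith [pow_nonneg (le_of_lt hn) n, Real.exp_pos 1]
    have hfact : (Nat.factorial (n+1) : ℝ) = (n+1) * Nat.factorial n := by
      push_cast [Nat.factorial_succ]; ring
    have hexp : Real.exp (n+1) = Real.exp 1 * Real.exp n := by
      rw [← Real.exp_add]; ring_nf
    have hpos : (0:ℝ) ≤ (n:ℝ)+1 := by positivity
    calc ((n:ℝ)+1)^(n+1) = ((n:ℝ)+1)^n * ((n:ℝ)+1) := by ring
      _ ≤ (Real.exp 1 * (n:ℝ)^n) * ((n:ℝ)+1) := by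
          apply mul_le_mul_of_nonneg_right h1 hpos
      _ ≤ (Real.exp 1 * (Real.exp n * Nat.factorial n)) * ((n:ℝ)+1) := by
          apply mul_le_mul_of_nonneg_right _ hpos
          exact mul_le_mul_of_nonneg_left ih (le_of_lt (Real.exp_pos 1))
      _ = Real.exp (n+1) * Nat.factorial (n+1) := by rw [hfact, hexp]; push_cast; ring

lemma geom_bound (q : ℝ) (h0 : 0 ≤ q) (h1 : q < 1) (n : ℕ) :
    ∑ j ∈ Finset.range n, q^j ≤ 1/(1-q) := by
  have hq : 0 < 1 - q := by linarith
  rw [le_div_iff₀ hq]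
  have := geom_sum_mul q n
  have hpw : 0 ≤ q ^ n := pow_nonneg h0 n
  nlinarith [this]

lemma coord_sum (N : ℕ) (c : ℝ) (hc : 0 < c) (m : Fin N) :
    ∑ k : Fin N, Real.exp (-(c * |(m:ℝ) - (k:ℝ)|)) ≤ 2 / (1 - Real.exp (-c)) := by
  classical
  set q := Real.exp (-c) with hqdef
  have hq0 : 0 < q := Real.exp_pos _
  have hq1 : q < 1 := by
    rw [hqdef]; apply Real.exp_lt_one_iff.mpr; linarith
  set g : Fin N → ℕ := fun k => if (k:ℕ) ≤ (m:ℕ) then (m:ℕ) - (k:ℕ) else (k:ℕ) - (m:ℕ) with hg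
  have key : ∀ k : Fin N, Real.exp (-(c * |(m:ℝ) - (k:ℝ)|)) = q ^ (g k) := by
    intro k
    have habs : |(m:ℝ) - (k:ℝ)| = (g k : ℝ) := by
      rcases le_or_gt (k:ℕ) (m:ℕ) with h | h
      · have h' : ((k:ℕ):ℝ) ≤ ((m:ℕ):ℝ) := Nat.cast_le.mpr h
        rw [abs_of_nonneg (by linarith)]
        simp only [hg, if_pos h]
        push_cast [h]
        ring
      · have h' : ((m:ℕ):ℝ) ≤ ((k:ℕ):ℝ) := Nat.cast_le.mpr (le_of_lt h)
        rw [abs_of_nonpos (by linarith)]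
        simp only [hg, if_neg (not_le.mpr h)]
        push_cast [le_of_lt h]
        ring
    rw [habs, ← Real.exp_nat_mul]
    congr 1
    push_cast
    ring
  simp_rw [key]
  rw [Finset.sum_comp (fun j : ℕ => q ^ j) g]
  have hcard : ∀ j, (Finset.univ.filter (fun a : Fin N => g a = j)).card ≤ 2 := by
    intro j
    have hsub : Finset.univ.filter (fun a : Fin N => g a = j) ⊆
        Finset.univ.filter (fun a : Fin N => (a:ℕ) + j = (m:ℕ)) ∪
        Finset.univ.filter (fun a : Fin N => (a:ℕ) = (m:ℕ) + j) := by
      intro a ha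
      simp only [Finset.mem_filter, Finset.mem_union, Finset.mem_univ, true_and, hg] at ha ⊢
      split_ifs at ha <;> omega
    refine le_trans (Finset.card_le_card hsub) (le_trans (Finset.card_union_le _ _) ?_)
    have h1 : (Finset.univ.filter (fun a : Fin N => (a:ℕ) + j = (m:ℕ))).card ≤ 1 :=
      Finset.card_le_one.mpr (fun a ha b hb => by
        simp only [Finset.mem_filter] at ha hb; exact Fin.ext (by omega))
    have h2 : (Finset.univ.filter (fun a : Fin N => (a:ℕ) = (m:ℕ) + j)).card ≤ 1 :=
      Finset.card_le_one.mpr (fun a ha b hb => by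
        simp only [Finset.mem_filter] at ha hb; exact Fin.ext (by omega))
    omega
  calc ∑ j ∈ Finset.univ.image g, (Finset.univ.filter (fun a : Fin N => g a = j)).card • q ^ j
      ≤ ∑ j ∈ Finset.univ.image g, 2 * q ^ j := by
        apply Finset.sum_le_sum
        intro j hj
        rw [nsmul_eq_mul]
        apply mul_le_mul_of_nonneg_right _ (le_of_lt (pow_pos hq0 j))
        exact_mod_cast hcard j
    _ ≤ ∑ j ∈ Finset.range N, 2 * q ^ j := by
        apply Finset.sum_le_sum_of_subset_of_nonneg
        · intro j hj
          simp only [Finset.mem_image, Finset.mem_univ, true_and] at hj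
          obtain ⟨k, hk⟩ := hj
          simp only [Finset.mem_range]
          have h1 := k.isLt
          have h2 := m.isLt
          simp only [hg] at hk
          split_ifs at hk <;> omega
        · intro j _ _; positivity
    _ = 2 * ∑ j ∈ Finset.range N, q ^ j := by rw [Finset.mul_sum]
    _ ≤ 2 * (1 / (1 - q)) := by
        apply mul_le_mul_of_nonneg_left (geom_bound q (le_of_lt hq0) hq1 N) (by norm_num)
    _ = 2 / (1 - q) := by ring
lemma srpEnergy_nonneg (d N : ℕ) (π : Equiv.Perm (Fin d → Fin N)) : 0 ≤ srpEnergy d N π :=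
  Finset.sum_nonneg fun _ _ => Real.sqrt_nonneg _

lemma srpEnergy_le (d N : ℕ) (π : Equiv.Perm (Fin d → Fin N)) :
    srpEnergy d N π ≤ Real.sqrt d * N * (N:ℝ)^d := by
  unfold srpEnergy
  have hterm : ∀ x : Fin d → Fin N,
      Real.sqrt (∑ i : Fin d, ((x i : ℝ) - ((π x) i : ℝ)) ^ 2) ≤ Real.sqrt d * N := by
    intro x
    have h1 : ∑ i : Fin d, ((x i : ℝ) - ((π x) i : ℝ)) ^ 2 ≤ ∑ _i : Fin d, (N:ℝ)^2 := by
      apply Finset.sum_le_sum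
      intro i _
      have ha : ((x i : ℕ) : ℝ) < N := by exact_mod_cast (x i).isLt
      have hb : ((π x i : ℕ) : ℝ) < N := by exact_mod_cast ((π x) i).isLt
      have ha0 : (0:ℝ) ≤ ((x i : ℕ) : ℝ) := by positivity
      have hb0 : (0:ℝ) ≤ ((π x i : ℕ) : ℝ) := by positivity
      have := sq_le_sq' (by linarith : -(N:ℝ) ≤ ((x i : ℕ):ℝ) - ((π x i : ℕ):ℝ))
        (by linarith : ((x i : ℕ):ℝ) - ((π x i : ℕ):ℝ) ≤ (N:ℝ))
      exact this
    calc Real.sqrt (∑ i : Fin d, ((x i : ℝ) - ((π x) i : ℝ)) ^ 2)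
        ≤ Real.sqrt (∑ _i : Fin d, (N:ℝ)^2) := Real.sqrt_le_sqrt h1
      _ = Real.sqrt ((d:ℝ) * (N:ℝ)^2) := by
          rw [Finset.sum_const, Finset.card_univ, Fintype.card_fin, nsmul_eq_mul]
      _ = Real.sqrt d * N := by
          rw [Real.sqrt_mul (by positivity), Real.sqrt_sq (by positivity)]
  calc ∑ x : Fin d → Fin N, Real.sqrt (∑ i : Fin d, ((x i : ℝ) - ((π x) i : ℝ)) ^ 2)
      ≤ ∑ _x : Fin d → Fin N, Real.sqrt d * N := Finset.sum_le_sum (fun x _ => hterm x)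
    _ = (N^d : ℕ) * (Real.sqrt d * N) := by
        rw [Finset.sum_const, Finset.card_univ, Fintype.card_fun, Fintype.card_fin,
          Fintype.card_fin, nsmul_eq_mul]
    _ = Real.sqrt d * N * (N:ℝ)^d := by push_cast; ring

lemma l1_le_sqrtd_l2 (d : ℕ) (v : Fin d → ℝ) :
    ∑ i : Fin d, |v i| ≤ Real.sqrt d * Real.sqrt (∑ i : Fin d, (v i)^2) := by
  have hcs := Finset.sum_mul_sq_le_sq_mul_sq Finset.univ (fun _ : Fin d => (1:ℝ))
    (fun i => |v i|)
  simp only [one_mul, one_pow, Finset.sum_const, Finset.card_univ, Fintype.card_fin,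
    nsmul_eq_mul, mul_one, sq_abs] at hcs
  have h0 : 0 ≤ ∑ i : Fin d, |v i| := Finset.sum_nonneg fun i _ => abs_nonneg _
  have := Real.sqrt_le_sqrt hcs
  rwa [Real.sqrt_sq h0, Real.sqrt_mul (by positivity)] at this

lemma srpZ_pos (d N : ℕ) (β : ℝ) : 0 < srpZ d N β :=
  Finset.sum_pos (fun _ _ => Real.exp_pos _) Finset.univ_nonempty

lemma srpZ_lb (d N : ℕ) (β : ℝ) (hβ : 0 ≤ β) :
    ((N^d).factorial : ℝ) * Real.exp (-β * (Real.sqrt d * N * (N:ℝ)^d)) ≤ srpZ d N β := by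
  unfold srpZ
  calc ((N^d).factorial : ℝ) * Real.exp (-β * (Real.sqrt d * N * (N:ℝ)^d))
      = ∑ _π : Equiv.Perm (Fin d → Fin N), Real.exp (-β * (Real.sqrt d * N * (N:ℝ)^d)) := by
        rw [Finset.sum_const, Finset.card_univ, Fintype.card_perm, Fintype.card_fun,
          Fintype.card_fin, Fintype.card_fin, nsmul_eq_mul]
    _ ≤ ∑ π : Equiv.Perm (Fin d → Fin N), Real.exp (-β * srpEnergy d N π) := by
        apply Finset.sum_le_sum
        intro π _
        apply Real.exp_le_exp.mpr
        have := srpEnergy_le d N π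
        nlinarith [srpEnergy_nonneg d N π]

lemma S_bound (d N : ℕ) (lam : ℝ) (hlam : 0 < lam) (hd : 1 ≤ d) :
    ∑ π : Equiv.Perm (Fin d → Fin N), Real.exp (-lam * srpEnergy d N π)
      ≤ ((2 / (1 - Real.exp (-(lam / Real.sqrt d))))^d)^(N^d) := by
  classical
  set s : ℝ := Real.sqrt d with hs
  have hs0 : 0 < s := Real.sqrt_pos.mpr (by exact_mod_cast Nat.lt_of_lt_of_le Nat.zero_lt_one hd)
  set c : ℝ := lam / s with hcdef
  have hc0 : 0 < c := div_pos hlam hs0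
  set q : ℝ := Real.exp (-c) with hqdef
  have hq1 : q < 1 := Real.exp_lt_one_iff.mpr (by linarith)
  have hq0 : 0 < q := Real.exp_pos _
  have hB0 : 0 ≤ 2 / (1 - q) := by
    apply div_nonneg (by norm_num); linarith
  set T : (Fin d → Fin N) → (Fin d → Fin N) → ℝ :=
    fun x y => Real.exp (-(lam * Real.sqrt (∑ i : Fin d, ((x i : ℝ) - (y i : ℝ)) ^ 2))) with hT
  -- rewrite summand as product
  have hprod : ∀ π : Equiv.Perm (Fin d → Fin N),
      Real.exp (-lam * srpEnergy d N π) = ∏ x : Fin d → Fin N, T x (π x) := by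
    intro π
    rw [hT]
    unfold srpEnergy
    rw [← Real.exp_sum]
    congr 1
    rw [Finset.mul_sum]
    exact Finset.sum_congr rfl fun x _ => neg_mul _ _
  simp_rw [hprod]
  -- per-site bound
  have hsite : ∀ x : Fin d → Fin N, ∑ y : Fin d → Fin N, T x y ≤ (2 / (1 - q))^d := by
    intro x
    have hTle : ∀ y : Fin d → Fin N,
        T x y ≤ ∏ i : Fin d, Real.exp (-(c * |((x i : ℕ) : ℝ) - ((y i : ℕ) : ℝ)|)) := by
      intro y
      rw [hT, ← Real.exp_sum]
      apply Real.exp_le_exp.mpr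
      have hl1 := l1_le_sqrtd_l2 d (fun i => ((x i : ℕ) : ℝ) - ((y i : ℕ) : ℝ))
      have hsum : ∑ i : Fin d, -(c * |((x i : ℕ) : ℝ) - ((y i : ℕ) : ℝ)|)
          = -(c * ∑ i : Fin d, |((x i : ℕ) : ℝ) - ((y i : ℕ) : ℝ)|) := by
        rw [Finset.mul_sum, ← Finset.sum_neg_distrib]
      rw [hsum]
      have hkey : c * ∑ i : Fin d, |((x i : ℕ) : ℝ) - ((y i : ℕ) : ℝ)|
          ≤ lam * Real.sqrt (∑ i : Fin d, (((x i : ℕ) : ℝ) - ((y i : ℕ) : ℝ)) ^ 2) := by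
        have h2 : c * ∑ i : Fin d, |((x i : ℕ) : ℝ) - ((y i : ℕ) : ℝ)|
            ≤ c * (s * Real.sqrt (∑ i : Fin d, (((x i : ℕ) : ℝ) - ((y i : ℕ) : ℝ)) ^ 2)) :=
          mul_le_mul_of_nonneg_left hl1 (le_of_lt hc0)
        have h3 : c * s = lam := by
          rw [hcdef]; field_simp
        calc c * ∑ i : Fin d, |((x i : ℕ) : ℝ) - ((y i : ℕ) : ℝ)| ≤ _ := h2
          _ = lam * Real.sqrt (∑ i : Fin d, (((x i : ℕ) : ℝ) - ((y i : ℕ) : ℝ)) ^ 2) := by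
              rw [← mul_assoc, h3]
      linarith
    calc ∑ y : Fin d → Fin N, T x y
        ≤ ∑ y : Fin d → Fin N, ∏ i : Fin d, Real.exp (-(c * |((x i : ℕ) : ℝ) - ((y i : ℕ) : ℝ)|)) :=
          Finset.sum_le_sum fun y _ => hTle y
      _ = ∏ i : Fin d, ∑ k : Fin N, Real.exp (-(c * |((x i : ℕ) : ℝ) - ((k : ℕ) : ℝ)|)) :=
          (Fintype.prod_sum (fun (i : Fin d) (k : Fin N) =>
            Real.exp (-(c * |((x i : ℕ) : ℝ) - ((k : ℕ) : ℝ)|)))).symm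
      _ ≤ ∏ _i : Fin d, 2 / (1 - q) := by
          apply Finset.prod_le_prod
          · intro i _
            exact Finset.sum_nonneg fun k _ => le_of_lt (Real.exp_pos _)
          · intro i _
            exact coord_sum N c hc0 (x i)
      _ = (2 / (1 - q))^d := by
          rw [Finset.prod_const, Finset.card_univ, Fintype.card_fin]
  -- sum over permutations ≤ sum over all functions
  have hfun : ∑ π : Equiv.Perm (Fin d → Fin N), ∏ x : Fin d → Fin N, T x (π x)
      ≤ ∑ f : (Fin d → Fin N) → (Fin d → Fin N), ∏ x : Fin d → Fin N, T x (f x) := by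
    have himg : ∑ π : Equiv.Perm (Fin d → Fin N), ∏ x : Fin d → Fin N, T x (π x)
        = ∑ f ∈ Finset.univ.image (fun π : Equiv.Perm (Fin d → Fin N) => (π : (Fin d → Fin N) → (Fin d → Fin N))),
            ∏ x : Fin d → Fin N, T x (f x) := by
      rw [Finset.sum_image]
      intro π _ π' _ h
      exact Equiv.coe_fn_injective h
    rw [himg]
    apply Finset.sum_le_sum_of_subset_of_nonneg (Finset.subset_univ _)
    intro f _ _
    exact Finset.prod_nonneg fun x _ => le_of_lt (Real.exp_pos _)
  calc ∑ π : Equiv.Perm (Fin d → Fin N), ∏ x : Fin d → Fin N, T x (π x)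
      ≤ ∑ f : (Fin d → Fin N) → (Fin d → Fin N), ∏ x : Fin d → Fin N, T x (f x) := hfun
    _ = ∏ x : Fin d → Fin N, ∑ y : Fin d → Fin N, T x y :=
        (Fintype.prod_sum (fun (x : Fin d → Fin N) (y : Fin d → Fin N) => T x y)).symm
    _ ≤ ∏ _x : Fin d → Fin N, (2 / (1 - q))^d := by
        apply Finset.prod_le_prod
        · intro x _
          exact Finset.sum_nonneg fun y _ => le_of_lt (Real.exp_pos _)
        · intro x _
          exact hsite x
    _ = ((2 / (1 - q))^d)^(N^d) := by
        rw [Finset.prod_const, Finset.card_univ, Fintype.card_fun, Fintype.card_fin,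
          Fintype.card_fin]

lemma srp_key_aux (N d : ℕ) (a : ℝ) (ha0 : 0 < a) (hN0 : (0:ℝ) < N) :
    (1/(N:ℝ)^d) * (((N:ℝ) * (N:ℝ)^d / (2*a)) * (1/2)) = (N:ℝ) * (4*a)⁻¹ := by
  have hNd : ((N:ℝ)^d) ≠ 0 := by positivity
  have haa : a ≠ 0 := ne_of_gt ha0
  rw [div_mul_eq_mul_div, div_mul_eq_mul_div, one_div, div_eq_mul_inv, mul_inv]
  field_simp
  ring

lemma srp_mul_aux (N d : ℕ) (s : ℝ) (hN0 : (0:ℝ) < N) :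
    (1/(N:ℝ)^d) * (s * N * (N:ℝ)^d) = s * N := by
  have hNd : ((N:ℝ)^d) ≠ 0 := by positivity
  field_simp
  try ring

end SRPHelpers

set_option maxHeartbeats 2000000 in
/-- **Band structure, (sub)critical regime.** If `d ≥ 1` and `β(N) ≤ K/N`,
then `D^N_{β(N)} = Θ(N)`. -/
theorem band_structure_critical_and_subcritical (d : ℕ) (hd : 1 ≤ d) (β : ℕ → ℝ)
    (hβpos : ∀ N, 0 ≤ β N)
    (K : ℝ) (hK : 0 < K) (hβK : ∀ N : ℕ, 1 ≤ N → β N ≤ K / N) :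
    ∃ C > (0:ℝ), ∃ N₀ : ℕ, ∀ N ≥ N₀,
      C⁻¹ * N ≤ srpD d N (β N) ∧ srpD d N (β N) ≤ C * N := by
  classical
  set s : ℝ := Real.sqrt d with hs
  have hs1 : 1 ≤ s := by
    rw [hs, show (1:ℝ) = Real.sqrt 1 by simp]
    exact Real.sqrt_le_sqrt (by exact_mod_cast hd)
  have hs0 : 0 < s := lt_of_lt_of_le one_pos hs1
  set E : ℝ := Real.exp (1 + K * s) with hE
  have hE1 : 1 ≤ E := Real.one_le_exp (by positivity)
  have hE0 : 0 < E := lt_of_lt_of_le one_pos hE1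
  set a : ℝ := 16 * s * E with ha
  have ha0 : 0 < a := by positivity
  set C : ℝ := s + 4 * a with hC
  have hC0 : 0 < C := by positivity
  refine ⟨C, hC0, max 1 ⌈(16:ℝ) * E⌉₊, ?_⟩
  intro N hN
  have hN1 : 1 ≤ N := le_trans (le_max_left _ _) hN
  have hNE : 16 * E ≤ (N:ℝ) := by
    have h1 : ⌈(16:ℝ)*E⌉₊ ≤ N := le_trans (le_max_right _ _) hN
    calc 16*E ≤ (⌈(16:ℝ)*E⌉₊ : ℝ) := Nat.le_ceil _
      _ ≤ N := by exact_mod_cast h1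
  have hN0 : (0:ℝ) < N := by exact_mod_cast hN1
  set n : ℕ := N^d with hn
  have hnn : ((n:ℕ):ℝ) = (N:ℝ)^d := by rw [hn]; push_cast; ring
  have hn1 : 1 ≤ n := Nat.one_le_pow d N hN1
  set lam : ℝ := a / N with hlam
  have hlam0 : 0 < lam := by positivity
  set c : ℝ := lam / s with hc
  have hc0 : 0 < c := by positivity
  have hc1 : c ≤ 1 := by
    rw [hc, hlam, div_div, div_le_one (by positivity)]
    calc a = s * (16 * E) := by rw [ha]; ring
      _ ≤ s * N := mul_le_mul_of_nonneg_left hNE (le_of_lt hs0)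
      _ = (N:ℝ) * s := mul_comm _ _
  set q : ℝ := Real.exp (-c) with hq
  have hq0 : 0 < q := Real.exp_pos _
  have hq1 : q < 1 := Real.exp_lt_one_iff.mpr (by linarith)
  have h1q : c/2 ≤ 1 - q := by
    have hexp := Real.add_one_le_exp c
    have hqle : q ≤ (1+c)⁻¹ := by
      rw [hq, Real.exp_neg]
      exact inv_anti₀ (by linarith) (by linarith)
    have hinv : (1+c) * (1+c)⁻¹ = 1 := mul_inv_cancel₀ (by linarith)
    nlinarith [hqle, hinv, hc0, hc1]
  have hB0 : (0:ℝ) ≤ 2 / (1 - q) := by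
    apply div_nonneg (by norm_num); linarith
  have hBle : 2 / (1 - q) ≤ 4 * s * (N:ℝ) / a := by
    have h4c : 2 / (1-q) ≤ 4 / c := by
      rw [div_le_div_iff₀ (by linarith) hc0]
      nlinarith [h1q]
    have h4eq : 4 / c = 4 * s * (N:ℝ) / a := by
      rw [hc, hlam]
      field_simp
    linarith [h4eq ▸ h4c]
  have hZpos := srpZ_pos d N (β N)
  -- lower bound on Z
  have hZ2 : ((N:ℝ)^d)^n * (Real.exp (-(1 + K*s)))^n ≤ srpZ d N (β N) := by
    have hf := fact_lb n
    have hfe : ((n:ℕ):ℝ)^n * Real.exp (-(n:ℕ):ℝ) ≤ (n.factorial : ℝ) := by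
      have hepos : (0:ℝ) < Real.exp (n:ℕ) := Real.exp_pos _
      have h2 : Real.exp (-(n:ℕ):ℝ) = (Real.exp ((n:ℕ):ℝ))⁻¹ := Real.exp_neg _
      rw [h2]
      rw [mul_inv_le_iff₀ hepos]
      nlinarith [hf]
    have hβH : (β N) * (s * N * (N:ℝ)^d) ≤ K * s * (n:ℕ) := by
      have hβ := hβK N hN1
      have h0 : (0:ℝ) ≤ s * N * (N:ℝ)^d := by positivity
      calc β N * (s * N * (N:ℝ)^d) ≤ (K/N) * (s * N * (N:ℝ)^d) :=
            mul_le_mul_of_nonneg_right hβ h0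
        _ = K * s * (N:ℝ)^d := by field_simp
        _ = K * s * (n:ℕ) := by rw [hnn]
    have hexpH : Real.exp (-(K*s*(n:ℕ))) ≤ Real.exp (-(β N) * (s * N * (N:ℝ)^d)) := by
      apply Real.exp_le_exp.mpr
      rw [neg_mul]
      exact neg_le_neg hβH
    have e1 : ((N:ℝ)^d)^n = ((n:ℕ):ℝ)^n := by rw [hnn]
    have e2 : (Real.exp (-(1+K*s)))^n
        = Real.exp (-(n:ℕ):ℝ) * Real.exp (-(K*s*(n:ℕ))) := by
      rw [← Real.exp_nat_mul, ← Real.exp_add]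
      congr 1
      push_cast
      ring
    calc ((N:ℝ)^d)^n * (Real.exp (-(1+K*s)))^n
        = (((n:ℕ):ℝ)^n * Real.exp (-(n:ℕ):ℝ)) * Real.exp (-(K*s*(n:ℕ))) := by
          rw [e1, e2]; ring
      _ ≤ (n.factorial : ℝ) * Real.exp (-(K*s*(n:ℕ))) :=
          mul_le_mul_of_nonneg_right hfe (le_of_lt (Real.exp_pos _))
      _ ≤ (n.factorial : ℝ) * Real.exp (-(β N) * (s * N * (N:ℝ)^d)) :=
          mul_le_mul_of_nonneg_left hexpH (by positivity)
      _ ≤ srpZ d N (β N) := by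
          have := srpZ_lb d N (β N) (hβpos N)
          rw [← hs] at this
          exact this
  -- displacement threshold
  set L : ℝ := (N:ℝ) * (N:ℝ)^d / (2*a) with hL
  have hL0 : 0 ≤ L := by positivity
  have hlamL : lam * L = (n:ℕ) * (1/2 : ℝ) := by
    rw [hlam, hL, hnn]
    field_simp
  have hexphalf : Real.exp ((1:ℝ)/2) ≤ 2 := by
    have h := Real.add_one_le_exp (-(1:ℝ)/2)
    have h2 : (1:ℝ)/2 ≤ Real.exp (-(1:ℝ)/2) := by linarith
    have h3 : Real.exp ((1:ℝ)/2) = (Real.exp (-(1:ℝ)/2))⁻¹ := by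
      rw [show -(1:ℝ)/2 = -((1:ℝ)/2) by ring, Real.exp_neg, inv_inv]
    rw [h3]
    calc (Real.exp (-(1:ℝ)/2))⁻¹ ≤ ((1:ℝ)/2)⁻¹ := inv_anti₀ (by norm_num) h2
      _ = 2 := by norm_num
  -- S bound
  have hS := S_bound d N lam hlam0 hd
  rw [← hs, ← hc, ← hq, ← hn] at hS
  have hS2 : ∑ π : Equiv.Perm (Fin d → Fin N), Real.exp (-lam * srpEnergy d N π)
      ≤ ((4*s*(N:ℝ)/a)^d)^n :=
    le_trans hS (pow_le_pow_left₀ (pow_nonneg hB0 d) (pow_le_pow_left₀ hB0 hBle d) n)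
  -- per-site inequality
  have hpersite : 2 * (4*s*(N:ℝ)/a)^d ≤ (1/2) * ((N:ℝ)^d * Real.exp (-(1+K*s))) := by
    have hfrac : 4*s/a = 1/(4*E) := by
      rw [ha]; field_simp; ring
    have hba : (0:ℝ) ≤ 4*s/a := by positivity
    have hble1 : 4*s/a ≤ 1 := by
      rw [hfrac]
      rw [div_le_one (by positivity)]
      linarith
    have hpow : (4*s/a)^d ≤ 4*s/a := by
      simpa using pow_le_pow_of_le_one hba hble1 hd
    have hsplit : (4*s*(N:ℝ)/a)^d = (4*s/a)^d * (N:ℝ)^d := by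
      rw [← mul_pow]
      congr 1
      field_simp
    have hEinv : Real.exp (-(1+K*s)) = E⁻¹ := by
      rw [Real.exp_neg, hE]
    rw [hsplit, hEinv]
    calc 2 * ((4*s/a)^d * (N:ℝ)^d) ≤ 2 * ((4*s/a) * (N:ℝ)^d) := by
          apply mul_le_mul_of_nonneg_left _ (by norm_num)
          exact mul_le_mul_of_nonneg_right hpow (by positivity)
      _ = 2 * ((1/(4*E)) * (N:ℝ)^d) := by rw [hfrac]
      _ = (1/2) * ((N:ℝ)^d * E⁻¹) := by
          rw [one_div, mul_inv]
          ring
  -- the small-energy set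
  obtain ⟨A, hA⟩ : ∃ A : Finset (Equiv.Perm (Fin d → Fin N)),
      A = Finset.univ.filter (fun π => srpEnergy d N π ≤ L) := ⟨_, rfl⟩
  have hnum : ∑ π ∈ A, Real.exp (-(β N) * srpEnergy d N π)
      ≤ Real.exp (lam * L) * ∑ π : Equiv.Perm (Fin d → Fin N),
          Real.exp (-lam * srpEnergy d N π) := by
    calc ∑ π ∈ A, Real.exp (-(β N) * srpEnergy d N π)
        ≤ ∑ π ∈ A, Real.exp (lam * L) * Real.exp (-lam * srpEnergy d N π) := by
          apply Finset.sum_le_sum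
          intro π hπ
          rw [← Real.exp_add]
          apply Real.exp_le_exp.mpr
          rw [hA] at hπ
          have hπL : srpEnergy d N π ≤ L := (Finset.mem_filter.mp hπ).2
          have hH0 := srpEnergy_nonneg d N π
          have hb0 := hβpos N
          nlinarith [hlam0]
      _ ≤ ∑ π : Equiv.Perm (Fin d → Fin N),
            Real.exp (lam * L) * Real.exp (-lam * srpEnergy d N π) := by
          apply Finset.sum_le_sum_of_subset_of_nonneg (Finset.subset_univ _)
          intro π _ _
          positivity
      _ = Real.exp (lam * L) * ∑ π : Equiv.Perm (Fin d → Fin N),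
            Real.exp (-lam * srpEnergy d N π) := by rw [Finset.mul_sum]
  have hnum2 : ∑ π ∈ A, Real.exp (-(β N) * srpEnergy d N π) ≤ (1/2) * srpZ d N (β N) := by
    have hexpL : Real.exp (lam * L) ≤ 2^n := by
      rw [hlamL, Real.exp_nat_mul]
      exact pow_le_pow_left₀ (le_of_lt (Real.exp_pos _)) hexphalf n
    have hSnn : (0:ℝ) ≤ ∑ π : Equiv.Perm (Fin d → Fin N),
        Real.exp (-lam * srpEnergy d N π) :=
      Finset.sum_nonneg fun π _ => le_of_lt (Real.exp_pos _)
    calc ∑ π ∈ A, Real.exp (-(β N) * srpEnergy d N π)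
        ≤ Real.exp (lam * L) * ∑ π : Equiv.Perm (Fin d → Fin N),
            Real.exp (-lam * srpEnergy d N π) := hnum
      _ ≤ 2^n * ((4*s*(N:ℝ)/a)^d)^n := mul_le_mul hexpL hS2 hSnn (by positivity)
      _ = (2 * (4*s*(N:ℝ)/a)^d)^n := by rw [mul_pow]
      _ ≤ ((1/2) * ((N:ℝ)^d * Real.exp (-(1+K*s))))^n :=
          pow_le_pow_left₀ (by positivity) hpersite n
      _ = (1/2 : ℝ)^n * (((N:ℝ)^d)^n * (Real.exp (-(1+K*s)))^n) := by
          rw [mul_pow, mul_pow]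
      _ ≤ (1/2 : ℝ)^n * srpZ d N (β N) := mul_le_mul_of_nonneg_left hZ2 (by positivity)
      _ ≤ (1/2) * srpZ d N (β N) := by
          apply mul_le_mul_of_nonneg_right _ (le_of_lt hZpos)
          calc (1/2 : ℝ)^n ≤ (1/2 : ℝ)^1 :=
                pow_le_pow_of_le_one (by norm_num) (by norm_num) hn1
            _ = 1/2 := pow_one _
  have hPA : ∑ π ∈ A, srpP d N (β N) π ≤ 1/2 := by
    simp only [srpP_eq]
    rw [← Finset.sum_div, div_le_iff₀ hZpos]
    calc ∑ π ∈ A, Real.exp (-(β N) * srpEnergy d N π) ≤ (1/2) * srpZ d N (β N) := hnum2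
      _ = 1/2 * srpZ d N (β N) := by ring
  have hsumP : ∑ π : Equiv.Perm (Fin d → Fin N), srpP d N (β N) π = 1 := by
    simp only [srpP_eq]
    rw [← Finset.sum_div, ← srpZ_eq]
    exact div_self (ne_of_gt hZpos)
  have hPpos : ∀ π : Equiv.Perm (Fin d → Fin N), 0 ≤ srpP d N (β N) π :=
    fun π => div_nonneg (le_of_lt (Real.exp_pos _)) (le_of_lt hZpos)
  have hsplit := Finset.sum_filter_add_sum_filter_not Finset.univ
    (fun π : Equiv.Perm (Fin d → Fin N) => srpEnergy d N π ≤ L) (srpP d N (β N))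
  rw [← hA] at hsplit
  have hnotA : 1/2 ≤ ∑ π ∈ Finset.univ.filter
      (fun π : Equiv.Perm (Fin d → Fin N) => ¬ srpEnergy d N π ≤ L), srpP d N (β N) π := by
    linarith [hPA, hsplit, hsumP]
  have hPHlb : L * (1/2) ≤ ∑ π : Equiv.Perm (Fin d → Fin N),
      srpP d N (β N) π * srpEnergy d N π := by
    calc L * (1/2)
        ≤ L * ∑ π ∈ Finset.univ.filter
            (fun π : Equiv.Perm (Fin d → Fin N) => ¬ srpEnergy d N π ≤ L),
            srpP d N (β N) π := mul_le_mul_of_nonneg_left hnotA hL0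
      _ = ∑ π ∈ Finset.univ.filter
            (fun π : Equiv.Perm (Fin d → Fin N) => ¬ srpEnergy d N π ≤ L),
            L * srpP d N (β N) π := Finset.mul_sum _ _ _
      _ ≤ ∑ π ∈ Finset.univ.filter
            (fun π : Equiv.Perm (Fin d → Fin N) => ¬ srpEnergy d N π ≤ L),
            srpP d N (β N) π * srpEnergy d N π := by
          apply Finset.sum_le_sum
          intro π hπ
          have hgt : ¬ srpEnergy d N π ≤ L := (Finset.mem_filter.mp hπ).2
          have hLlt : L ≤ srpEnergy d N π := le_of_lt (not_le.mp hgt)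
          have hp := hPpos π
          nlinarith
      _ ≤ ∑ π : Equiv.Perm (Fin d → Fin N), srpP d N (β N) π * srpEnergy d N π := by
          apply Finset.sum_le_sum_of_subset_of_nonneg (Finset.filter_subset _ _)
          intro π _ _
          exact mul_nonneg (hPpos π) (srpEnergy_nonneg d N π)
  constructor
  · have hCinv : C⁻¹ ≤ (4*a)⁻¹ := by
      apply inv_anti₀ (by positivity)
      rw [hC]; linarith
    have key : (1/(N:ℝ)^d) * (L * (1/2)) = (N:ℝ) * (4*a)⁻¹ := by
      rw [hL]
      exact srp_key_aux N d a ha0 hN0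
    calc C⁻¹ * N ≤ (4*a)⁻¹ * N := mul_le_mul_of_nonneg_right hCinv (le_of_lt hN0)
      _ = (1/(N:ℝ)^d) * (L * (1/2)) := by rw [key]; ring
      _ ≤ (1/(N:ℝ)^d) * ∑ π : Equiv.Perm (Fin d → Fin N),
            srpP d N (β N) π * srpEnergy d N π :=
          mul_le_mul_of_nonneg_left hPHlb (by positivity)
      _ = srpD d N (β N) := (srpD_eq d N (β N)).symm
  · have hPHub : ∑ π : Equiv.Perm (Fin d → Fin N),
        srpP d N (β N) π * srpEnergy d N π ≤ s * N * (N:ℝ)^d := by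
      calc ∑ π : Equiv.Perm (Fin d → Fin N), srpP d N (β N) π * srpEnergy d N π
          ≤ ∑ π : Equiv.Perm (Fin d → Fin N), srpP d N (β N) π * (s * N * (N:ℝ)^d) := by
            apply Finset.sum_le_sum
            intro π _
            have h1 := srpEnergy_le d N π
            rw [← hs] at h1
            exact mul_le_mul_of_nonneg_left h1 (hPpos π)
        _ = (∑ π : Equiv.Perm (Fin d → Fin N), srpP d N (β N) π) * (s * N * (N:ℝ)^d) := by
            rw [← Finset.sum_mul]
        _ = s * N * (N:ℝ)^d := by rw [hsumP, one_mul]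
    calc srpD d N (β N)
        = (1/(N:ℝ)^d) * ∑ π : Equiv.Perm (Fin d → Fin N),
            srpP d N (β N) π * srpEnergy d N π := srpD_eq d N (β N)
      _ ≤ (1/(N:ℝ)^d) * (s * N * (N:ℝ)^d) := mul_le_mul_of_nonneg_left hPHub (by positivity)
      _ = s * N := srp_mul_aux N d s hN0
      _ ≤ C * N := by
          apply mul_le_mul_of_nonneg_right _ (le_of_lt hN0)
          rw [hC]; linarith
end

section
/- Let d = 1 and let β : ℕ → (0,∞) be a sequence with N·β(N) → 0 as N → ∞. Then there exist a constant C > 0 and N₀ such that for all N ≥ N₀ one has |D^N_{β(N)} / (N/3 − 1/(3N)) − 1| ≤ C·β(N)·N. (In other words, in the subcritical regime β ≪ 1/N the mean displacement per site satisfies D^N_β = (N/3 − 1/(3N))·(1 + O(βN)).) -/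
open Filter Topology

namespace SRPAux

open Finset Equiv

noncomputable def Hc {n : ℕ} (c : Fin n → Fin n → ℝ) (σ : Equiv.Perm (Fin n)) : ℝ :=
  ∑ x, c x (σ x)

noncomputable def Mc {n : ℕ} (c : Fin n → Fin n → ℝ) : ℝ :=
  ∑ x, (∑ v, c x v) / n

lemma chord {ι : Type*} (s : Finset ι) (B u : ℝ) (hB : 0 ≤ B) (D : ι → ℝ)
    (h0 : ∑ i ∈ s, D i = 0) (hD : ∀ i ∈ s, |D i| ≤ B) :
    ∑ i ∈ s, Real.exp (u * D i) ≤ s.card * Real.exp (u ^ 2 * B ^ 2 / 2) := by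
  rcases eq_or_lt_of_le hB with h | h
  · have hD0 : ∀ i ∈ s, D i = 0 := fun i hi =>
      abs_eq_zero.mp (le_antisymm (h ▸ hD i hi) (abs_nonneg _))
    have : ∑ i ∈ s, Real.exp (u * D i) = s.card * 1 := by
      rw [Finset.sum_congr rfl (fun i hi => by rw [hD0 i hi, mul_zero, Real.exp_zero])]
      simp
    rw [this]
    have : (1:ℝ) ≤ Real.exp (u ^ 2 * B ^ 2 / 2) := by
      rw [← Real.exp_zero]
      apply Real.exp_le_exp.2
      positivity
    exact mul_le_mul_of_nonneg_left this (by positivity)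
  · have key : ∀ i ∈ s, Real.exp (u * D i) ≤
        ((B - D i) / (2 * B)) * Real.exp (-(u * B)) + ((B + D i) / (2 * B)) * Real.exp (u * B) := by
      intro i hi
      have h1 : |D i| ≤ B := hD i hi
      have hb1 : -B ≤ D i := (abs_le.mp h1).1
      have hb2 : D i ≤ B := (abs_le.mp h1).2
      have ha : (0:ℝ) ≤ (B - D i) / (2 * B) := by
        apply div_nonneg (by linarith) (by linarith)
      have hbn : (0:ℝ) ≤ (B + D i) / (2 * B) := by
        apply div_nonneg (by linarith) (by linarith)
      have hab : (B - D i) / (2 * B) + (B + D i) / (2 * B) = 1 := by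
        field_simp
        ring
      have := convexOn_exp.2 (Set.mem_univ (-(u * B))) (Set.mem_univ (u * B)) ha hbn hab
      simp only [smul_eq_mul] at this
      have harg : (B - D i) / (2 * B) * -(u * B) + (B + D i) / (2 * B) * (u * B) = u * D i := by
        field_simp
        ring
      rwa [harg] at this
    calc ∑ i ∈ s, Real.exp (u * D i)
        ≤ ∑ i ∈ s, (((B - D i) / (2 * B)) * Real.exp (-(u * B))
            + ((B + D i) / (2 * B)) * Real.exp (u * B)) := Finset.sum_le_sum key
      _ = s.card * ((Real.exp (-(u * B)) + Real.exp (u * B)) / 2) := by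
          rw [Finset.sum_add_distrib]
          rw [← Finset.sum_mul, ← Finset.sum_mul]
          rw [← Finset.sum_div, ← Finset.sum_div]
          rw [Finset.sum_sub_distrib, Finset.sum_add_distrib, h0, Finset.sum_const]
          simp only [nsmul_eq_mul, sub_zero, add_zero]
          field_simp
      _ = s.card * Real.cosh (u * B) := by rw [Real.cosh_eq]; ring_nf
      _ ≤ s.card * Real.exp (u ^ 2 * B ^ 2 / 2) := by
          apply mul_le_mul_of_nonneg_left _ (by positivity)
          calc Real.cosh (u * B) ≤ Real.exp ((u * B) ^ 2 / 2) := Real.cosh_le_exp_half_sq _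
            _ = Real.exp (u ^ 2 * B ^ 2 / 2) := by ring_nf


lemma sum_perm_apply {n : ℕ} (x : Fin (n + 1)) (F : Fin (n + 1) → ℝ) :
    ∑ σ : Equiv.Perm (Fin (n + 1)), F (σ x) = (n.factorial : ℝ) * ∑ v, F v := by
  have h1 : ∑ σ : Equiv.Perm (Fin (n + 1)), F (σ x)
      = ∑ σ : Equiv.Perm (Fin (n + 1)), F (σ 0) := by
    have := Equiv.sum_comp (Equiv.mulRight (Equiv.swap (0 : Fin (n+1)) x))
      (fun σ : Equiv.Perm (Fin (n+1)) => F (σ 0))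
    rw [← this]
    apply Finset.sum_congr rfl
    intro σ _
    simp [Equiv.Perm.mul_apply, Equiv.swap_apply_left]
  rw [h1, ← Equiv.sum_comp (Equiv.Perm.decomposeFin (n := n)).symm
      (fun σ : Equiv.Perm (Fin (n+1)) => F (σ 0))]
  rw [Fintype.sum_prod_type]
  simp only [Equiv.Perm.decomposeFin_symm_apply_zero]
  rw [Finset.sum_comm]
  simp [Finset.sum_const, Fintype.card_perm, mul_comm]


lemma mgf (L t : ℝ) (hL : 0 ≤ L) :
    ∀ (n : ℕ) (c : Fin n → Fin n → ℝ), (∀ x p q, |c x p - c x q| ≤ L) →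
    ∑ σ : Equiv.Perm (Fin n), Real.exp (t * (Mc c - Hc c σ)) ≤
      (n.factorial : ℝ) * Real.exp (2 * t ^ 2 * L ^ 2 * n) := by
  intro n
  induction n with
  | zero =>
      intro c _
      have h1 : ∀ σ : Equiv.Perm (Fin 0), Hc c σ = 0 := fun σ => by simp [Hc]
      have h2 : Mc c = 0 := by simp [Mc]
      simp [h1, h2, Finset.sum_const, Fintype.card_perm]
  | succ n ih =>
      intro c hc
      set c' : Fin (n + 1) → Fin n → Fin n → ℝ :=
        fun p x v => c x.succ (Equiv.swap 0 p v.succ) with hc'def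
      have hosc' : ∀ p x v w, |c' p x v - c' p x w| ≤ L := fun p x v w => hc _ _ _
      -- (a) value sums of induced costs
      have ha : ∀ (p : Fin (n+1)) (x : Fin n),
          ∑ v, c' p x v = (∑ w, c x.succ w) - c x.succ p := by
        intro p x
        have h1 : ∑ w : Fin (n+1), c x.succ (Equiv.swap 0 p w) = ∑ w, c x.succ w :=
          Equiv.sum_comp (Equiv.swap 0 p) (fun w => c x.succ w)
        have h2 : ∑ w : Fin (n+1), c x.succ (Equiv.swap 0 p w)
            = c x.succ (Equiv.swap 0 p 0) + ∑ v : Fin n, c x.succ (Equiv.swap 0 p v.succ) :=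
          Fin.sum_univ_succ _
        have h3 : Equiv.swap (0 : Fin (n+1)) p 0 = p := Equiv.swap_apply_left _ _
        rw [hc'def]
        dsimp only
        rw [h3] at h2
        linarith [h1, h2]
      set g : Fin (n + 1) → ℝ := fun p => c 0 p + Mc (c' p) with hgdef
      -- decomposition of Hc
      have hHc : ∀ (p : Fin (n+1)) (e : Equiv.Perm (Fin n)),
          Hc c ((Equiv.Perm.decomposeFin (n := n)).symm (p, e)) = c 0 p + Hc (c' p) e := by
        intro p e
        rw [Hc, Fin.sum_univ_succ]
        congr 1
        · rw [Equiv.Perm.decomposeFin_symm_apply_zero]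
        · apply Finset.sum_congr rfl
          intro x _
          rw [Equiv.Perm.decomposeFin_symm_apply_succ]
      -- Mc of induced costs
      have hMc' : ∀ p : Fin (n+1), Mc (c' p) = ∑ x : Fin n, ((∑ w, c x.succ w) - c x.succ p) / n := by
        intro p
        rw [Mc]
        exact Finset.sum_congr rfl fun x _ => by rw [ha p x]
      -- average of g
      have havg : ∑ p, g p = (n + 1 : ℝ) * Mc c := by
        have h5 : (n + 1 : ℝ) * Mc c = ∑ x : Fin (n+1), ∑ v, c x v := by
          rw [Mc, Finset.mul_sum]
          apply Finset.sum_congr rfl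
          intro x _
          have hne : ((n:ℝ) + 1) ≠ 0 := by positivity
          push_cast
          field_simp
        rw [h5, Fin.sum_univ_succ (fun x => ∑ v, c x v)]
        have h6 : ∑ p, g p = (∑ p, c 0 p) + ∑ p, Mc (c' p) := by
          rw [hgdef]; exact Finset.sum_add_distrib
        rw [h6]
        congr 1
        rw [Finset.sum_congr rfl (fun p _ => hMc' p), Finset.sum_comm]
        apply Finset.sum_congr rfl
        intro x _
        have hn : (0:ℝ) < n := by
          have := x.pos  -- x : Fin n nonempty means 0 < n
          exact_mod_cast Fin.pos x
        rw [← Finset.sum_div, Finset.sum_sub_distrib, Finset.sum_const]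
        simp only [Finset.card_univ, Fintype.card_fin, nsmul_eq_mul]
        field_simp
        push_cast
        ring
      -- oscillation of g
      have hgosc : ∀ p q, |g p - g q| ≤ 2 * L := by
        intro p q
        have h7 : g p - g q = (c 0 p - c 0 q) + ∑ x : Fin n, (c x.succ q - c x.succ p) / n := by
          rw [hgdef]
          dsimp only
          rw [hMc' p, hMc' q]
          have h9 : ∑ x : Fin n, ((∑ w, c x.succ w) - c x.succ p) / n
              - ∑ x : Fin n, ((∑ w, c x.succ w) - c x.succ q) / n
              = ∑ x : Fin n, (c x.succ q - c x.succ p) / n := by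
            rw [← Finset.sum_sub_distrib]
            apply Finset.sum_congr rfl
            intro x _
            ring
          linarith
        rw [h7]
        refine (abs_add_le _ _).trans ?_
        have h8 : |∑ x : Fin n, (c x.succ q - c x.succ p) / n| ≤ L := by
          refine (Finset.abs_sum_le_sum_abs _ _).trans ?_
          rcases Nat.eq_zero_or_pos n with h | h
          · subst h; simp [hL]
          · calc ∑ x : Fin n, |(c x.succ q - c x.succ p) / n|
                ≤ ∑ _x : Fin n, L / n := by
                  apply Finset.sum_le_sum
                  intro x _
                  rw [abs_div, Nat.abs_cast]
                  gcongr
                  exact hc _ _ _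
              _ = L := by
                  rw [Finset.sum_const]
                  simp only [Finset.card_univ, Fintype.card_fin, nsmul_eq_mul]
                  field_simp
        have := hc 0 p q
        linarith
      -- chord hypotheses
      have hD0 : ∑ p, (Mc c - g p) = 0 := by
        rw [Finset.sum_sub_distrib, Finset.sum_const, havg]
        simp only [Finset.card_univ, Fintype.card_fin, nsmul_eq_mul]
        push_cast
        ring
      have hDb : ∀ p ∈ Finset.univ, |Mc c - g p| ≤ 2 * L := by
        intro p _
        have hrep : Mc c - g p = (∑ q, (g q - g p)) / (n + 1 : ℝ) := by
          rw [Finset.sum_sub_distrib, Finset.sum_const, havg]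
          simp only [Finset.card_univ, Fintype.card_fin, nsmul_eq_mul]
          have hne : ((n:ℝ) + 1) ≠ 0 := by positivity
          push_cast
          field_simp
        rw [hrep, abs_div, abs_of_nonneg (by positivity : (0:ℝ) ≤ (n:ℝ) + 1)]
        rw [div_le_iff₀ (by positivity : (0:ℝ) < (n:ℝ) + 1)]
        calc |∑ q, (g q - g p)| ≤ ∑ q, |g q - g p| := Finset.abs_sum_le_sum_abs _ _
          _ ≤ ∑ _q : Fin (n+1), 2 * L := Finset.sum_le_sum fun q _ => hgosc q p
          _ = 2 * L * ((n:ℝ) + 1) := by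
              rw [Finset.sum_const]
              simp only [Finset.card_univ, Fintype.card_fin, nsmul_eq_mul]
              push_cast
              ring
      -- main chain
      calc ∑ σ : Equiv.Perm (Fin (n+1)), Real.exp (t * (Mc c - Hc c σ))
          = ∑ pe : Fin (n+1) × Equiv.Perm (Fin n),
              Real.exp (t * (Mc c - Hc c ((Equiv.Perm.decomposeFin (n := n)).symm pe))) :=
            (Equiv.sum_comp (Equiv.Perm.decomposeFin (n := n)).symm _).symm
        _ = ∑ p, ∑ e, Real.exp (t * (Mc c - g p)) * Real.exp (t * (Mc (c' p) - Hc (c' p) e)) := by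
            rw [Fintype.sum_prod_type]
            apply Finset.sum_congr rfl
            intro p _
            apply Finset.sum_congr rfl
            intro e _
            rw [hHc p e, ← Real.exp_add, hgdef]
            dsimp only
            ring_nf
        _ = ∑ p, Real.exp (t * (Mc c - g p)) * (∑ e, Real.exp (t * (Mc (c' p) - Hc (c' p) e))) := by
            apply Finset.sum_congr rfl
            intro p _
            rw [Finset.mul_sum]
        _ ≤ ∑ p, Real.exp (t * (Mc c - g p)) * ((n.factorial : ℝ) * Real.exp (2 * t ^ 2 * L ^ 2 * n)) := by
            apply Finset.sum_le_sum
            intro p _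
            exact mul_le_mul_of_nonneg_left (ih (c' p) (hosc' p)) (Real.exp_nonneg _)
        _ = (∑ p, Real.exp (t * (Mc c - g p))) * ((n.factorial : ℝ) * Real.exp (2 * t ^ 2 * L ^ 2 * n)) := by
            rw [← Finset.sum_mul]
        _ ≤ (((n:ℝ) + 1) * Real.exp (t ^ 2 * (2 * L) ^ 2 / 2))
              * ((n.factorial : ℝ) * Real.exp (2 * t ^ 2 * L ^ 2 * n)) := by
            apply mul_le_mul_of_nonneg_right _ (by positivity)
            have := chord Finset.univ (2 * L) t (by linarith) (fun p => Mc c - g p) hD0 hDb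
            simpa using this
        _ = ((n+1).factorial : ℝ) * Real.exp (2 * t ^ 2 * L ^ 2 * (n + 1 : ℕ)) := by
            rw [Nat.factorial_succ]
            push_cast
            rw [show 2 * t ^ 2 * L ^ 2 * ((n:ℝ) + 1)
                = t ^ 2 * (2 * L) ^ 2 / 2 + 2 * t ^ 2 * L ^ 2 * (n:ℝ) by ring, Real.exp_add]
            ring


lemma sumid : ∀ N : ℕ, ∑ x : Fin N, (x : ℝ) = N * (N - 1) / 2 := by
  intro N
  induction N with
  | zero => simp
  | succ N ih =>
      rw [Fin.sum_univ_castSucc]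
      simp only [Fin.coe_castSucc, Fin.val_last]
      rw [ih]
      push_cast
      ring

lemma sumabs : ∀ N : ℕ, ∑ x : Fin N, ∑ y : Fin N, |(x : ℝ) - y| = ((N:ℝ) ^ 3 - N) / 3 := by
  intro N
  induction N with
  | zero => simp
  | succ N ih =>
      rw [Fin.sum_univ_castSucc]
      have h1 : ∀ x : Fin N, ∑ y : Fin (N+1), |((x.castSucc : Fin (N+1)) : ℝ) - y|
          = (∑ y : Fin N, |(x : ℝ) - y|) + ((N:ℝ) - x) := by
        intro x
        rw [Fin.sum_univ_castSucc]
        simp only [Fin.coe_castSucc, Fin.val_last]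
        congr 1
        rw [abs_of_nonpos]
        · ring
        · have : (x:ℝ) ≤ N := le_of_lt (by exact_mod_cast x.isLt)
          linarith
      have h2 : ∑ y : Fin (N+1), |((Fin.last N : Fin (N+1)) : ℝ) - y|
          = ∑ y : Fin N, ((N:ℝ) - y) := by
        rw [Fin.sum_univ_castSucc]
        simp only [Fin.coe_castSucc, Fin.val_last, sub_self, abs_zero, add_zero]
        apply Finset.sum_congr rfl
        intro y _
        rw [abs_of_nonneg]
        have : (y:ℝ) ≤ N := le_of_lt (by exact_mod_cast y.isLt)
        linarith
      rw [h2, Finset.sum_congr rfl (fun x _ => h1 x), Finset.sum_add_distrib, ih]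
      have h3 : ∑ x : Fin N, ((N:ℝ) - (x:ℝ)) = N * N - N * (N - 1) / 2 := by
        rw [Finset.sum_sub_distrib, sumid N, Finset.sum_const]
        simp only [Finset.card_univ, Fintype.card_fin, nsmul_eq_mul]
      rw [h3]
      push_cast
      ring


lemma jensen_exp {ι : Type*} [Fintype ι] (w x : ι → ℝ) (hw : ∀ i, 0 ≤ w i)
    (h1 : ∑ i, w i = 1) : Real.exp (∑ i, w i * x i) ≤ ∑ i, w i * Real.exp (x i) := by
  have := convexOn_exp.map_sum_le (t := Finset.univ) (w := w) (p := x)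
    (fun i _ => hw i) h1 (fun i _ => Set.mem_univ _)
  simpa [smul_eq_mul] using this


end SRPAux

open SRPAux in
set_option maxHeartbeats 2000000 in
/-- **Subcritical regime in one dimension with rates:**
if `β ≪ 1/N` then `D^N_β = (N/3 − 1/(3N))·(1 + O(βN))`. -/
theorem one_dim_subcritical_rate (β : ℕ → ℝ)
    (hβpos : ∀ N, 0 < β N)
    (hβN : Tendsto (fun N : ℕ => (N : ℝ) * β N) atTop (𝓝 0)) :
    ∃ C > (0:ℝ), ∃ N₀ : ℕ, ∀ N ≥ N₀,
      |srpD 1 N (β N) / ((N : ℝ) / 3 - 1 / (3 * N)) - 1| ≤ C * (β N * N) := by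
  refine ⟨32, by norm_num, 2, ?_⟩
  intro N hN
  obtain ⟨n, rfl⟩ : ∃ n, N = n + 1 := ⟨N - 1, by omega⟩
  set N := n + 1 with hNdef
  have hN2 : (2:ℝ) ≤ N := by exact_mod_cast hN
  have hNpos : (0:ℝ) < N := by linarith
  set b := β N with hbdef
  have hb : 0 < b := hβpos N
  -- transfer to permutations of `Fin N`
  set e : (Fin 1 → Fin N) ≃ Fin N := Equiv.funUnique (Fin 1) (Fin N) with hedef
  set q : Equiv.Perm (Fin 1 → Fin N) ≃ Equiv.Perm (Fin N) := e.permCongr with hqdef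
  set c : Fin N → Fin N → ℝ := fun x y => |(x:ℝ) - (y:ℝ)| with hcdef
  have hE : ∀ π : Equiv.Perm (Fin 1 → Fin N), srpEnergy 1 N π = Hc c (q π) := by
    intro π
    rw [srpEnergy, Hc, ← Equiv.sum_comp e.symm
      (fun v => Real.sqrt (∑ i : Fin 1, (((v : Fin 1 → Fin N) i : ℝ) - ((π v) i : ℝ)) ^ 2))]
    apply Finset.sum_congr rfl
    intro v _
    rw [Fin.sum_univ_one, Real.sqrt_sq_eq_abs, hqdef, hcdef]
    simp [Equiv.permCongr_apply, hedef]
  have hT : ∀ f : Equiv.Perm (Fin N) → ℝ,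
      ∑ σ, f σ = ∑ π : Equiv.Perm (Fin 1 → Fin N), f (q π) :=
    fun f => (Equiv.sum_comp q f).symm
  set W : ℝ := ∑ σ : Equiv.Perm (Fin N), Real.exp (-b * Hc c σ) with hWdef
  set A : ℝ := ∑ σ : Equiv.Perm (Fin N), Real.exp (-b * Hc c σ) * Hc c σ with hAdef
  have hWpos : 0 < W := Finset.sum_pos (fun σ _ => Real.exp_pos _) ⟨1, Finset.mem_univ 1⟩
  have hZ : srpZ 1 N b = W := by
    rw [hWdef, hT]
    apply Finset.sum_congr rfl
    intro π _
    rw [hE π]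
  have hDval : srpD 1 N b = (1 / (N:ℝ)) * (A / W) := by
    rw [srpD, pow_one]
    congr 1
    rw [hAdef, hT, Finset.sum_div]
    apply Finset.sum_congr rfl
    intro π _
    rw [srpP, hZ, hE π]
    ring
  clear_value W A
  set m : ℝ := ((N:ℝ) ^ 2 - 1) / 3 with hmdef
  have hm4 : (N:ℝ)^2 / 4 ≤ m := by rw [hmdef]; nlinarith
  have hmpos : 0 < m := by nlinarith
  have hMc : Mc c = m := by
    rw [Mc, ← Finset.sum_div, sumabs N, hmdef]
    field_simp
  have hcardP : (Fintype.card (Equiv.Perm (Fin N)) : ℝ) = (N.factorial : ℝ) := by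
    rw [Fintype.card_perm, Fintype.card_fin]
  have hfacpos : (0:ℝ) < (N.factorial : ℝ) := by positivity
  -- mean of Hc over all permutations
  have hSm : ∑ σ : Equiv.Perm (Fin N), Hc c σ = (N.factorial : ℝ) * m := by
    have h1 : ∑ σ : Equiv.Perm (Fin N), Hc c σ = ∑ x, ∑ σ : Equiv.Perm (Fin N), c x (σ x) := by
      simp only [Hc]
      rw [Finset.sum_comm]
    rw [h1, Finset.sum_congr rfl (fun x _ => sum_perm_apply x (fun v => c x v))]
    rw [← Finset.mul_sum, sumabs N]
    have hfac : (N.factorial : ℝ) = (N:ℝ) * (n.factorial : ℝ) := by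
      rw [hNdef, Nat.factorial_succ]
      push_cast
      ring
    rw [hfac, hmdef]
    have hN0 : (N:ℝ) ≠ 0 := ne_of_gt hNpos
    field_simp
  clear_value N b m
  -- weights sum to one (uniform)
  have hwsum : ∑ _σ : Equiv.Perm (Fin N), (1 / (N.factorial:ℝ)) = 1 := by
    rw [Finset.sum_const]
    simp only [Finset.card_univ, nsmul_eq_mul]
    rw [hcardP]
    field_simp
  -- Jensen lower bound on W
  have hW_lb : (N.factorial : ℝ) * Real.exp (-(b * m)) ≤ W := by
    have hj := jensen_exp (fun _ : Equiv.Perm (Fin N) => 1 / (N.factorial : ℝ))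
      (fun σ => -b * Hc c σ) (fun _ => by positivity) hwsum
    have h2 : ∑ σ : Equiv.Perm (Fin N), (1 / (N.factorial:ℝ)) * (-b * Hc c σ) = -(b * m) := by
      have hstep : ∀ σ : Equiv.Perm (Fin N),
          (1 / (N.factorial:ℝ)) * (-b * Hc c σ) = (-b / (N.factorial:ℝ)) * Hc c σ :=
        fun σ => by ring
      rw [Finset.sum_congr rfl (fun σ _ => hstep σ), ← Finset.mul_sum, hSm]
      field_simp
    have h3 : ∑ σ : Equiv.Perm (Fin N), (1 / (N.factorial:ℝ)) * Real.exp (-b * Hc c σ)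
        = W / (N.factorial:ℝ) := by
      rw [← Finset.mul_sum, ← hWdef]
      ring
    rw [h2, h3] at hj
    calc (N.factorial:ℝ) * Real.exp (-(b*m))
        ≤ (N.factorial:ℝ) * (W / (N.factorial:ℝ)) := by
          exact mul_le_mul_of_nonneg_left hj hfacpos.le
      _ = W := by field_simp
  -- partition function at 2β via the MGF bound
  set Z2 : ℝ := ∑ σ : Equiv.Perm (Fin N), Real.exp (-(2*b) * Hc c σ) with hZ2def
  clear_value Z2
  have hosc : ∀ x p q : Fin N, |c x p - c x q| ≤ (N:ℝ) := by
    intro x p q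
    rw [hcdef]
    dsimp only
    refine (abs_abs_sub_abs_le_abs_sub _ _).trans ?_
    have h1 : ((x:ℝ) - p) - ((x:ℝ) - q) = (q:ℝ) - p := by ring
    rw [h1, abs_le]
    have hp : (p:ℝ) < N := by exact_mod_cast p.isLt
    have hq : (q:ℝ) < N := by exact_mod_cast q.isLt
    have hp0 : (0:ℝ) ≤ (p:ℝ) := by exact_mod_cast Nat.zero_le p.val
    have hq0 : (0:ℝ) ≤ (q:ℝ) := by exact_mod_cast Nat.zero_le q.val
    constructor <;> linarith
  have hmgf := mgf (N:ℝ) (2*b) (le_of_lt hNpos) N c hosc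
  rw [hMc] at hmgf
  clear_value e q c
  have hZ2 : Z2 ≤ (N.factorial:ℝ) * Real.exp (8*b^2*(N:ℝ)^3 - 2*(b*m)) := by
    have h4 : Z2 = ∑ σ : Equiv.Perm (Fin N),
        Real.exp ((2*b) * (m - Hc c σ)) * Real.exp (-(2*(b*m))) := by
      rw [hZ2def]
      apply Finset.sum_congr rfl
      intro σ _
      rw [← Real.exp_add]
      congr 1
      ring
    rw [h4, ← Finset.sum_mul]
    calc (∑ σ : Equiv.Perm (Fin N), Real.exp ((2*b)*(m - Hc c σ))) * Real.exp (-(2*(b*m)))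
        ≤ ((N.factorial:ℝ) * Real.exp (2*(2*b)^2*(N:ℝ)^2*(N:ℝ))) * Real.exp (-(2*(b*m))) :=
          mul_le_mul_of_nonneg_right hmgf (Real.exp_nonneg _)
      _ = (N.factorial:ℝ) * Real.exp (8*b^2*(N:ℝ)^3 - 2*(b*m)) := by
          rw [mul_assoc, ← Real.exp_add]
          congr 2
          ring
  -- Gibbs weights
  have hwg : ∀ σ : Equiv.Perm (Fin N), 0 ≤ Real.exp (-b * Hc c σ) / W :=
    fun σ => div_nonneg (Real.exp_nonneg _) hWpos.le
  have hwg1 : ∑ σ : Equiv.Perm (Fin N), Real.exp (-b * Hc c σ) / W = 1 := by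
    rw [← Finset.sum_div, ← hWdef]
    exact div_self (ne_of_gt hWpos)
  -- Jensen for the Gibbs measure, downward tilt
  have hj2 := jensen_exp (fun σ : Equiv.Perm (Fin N) => Real.exp (-b * Hc c σ) / W)
    (fun σ => -b * Hc c σ) hwg hwg1
  have h5 : ∑ σ : Equiv.Perm (Fin N), (Real.exp (-b * Hc c σ) / W) * (-b * Hc c σ)
      = -(b * (A/W)) := by
    have hstep : ∀ σ : Equiv.Perm (Fin N),
        (Real.exp (-b*Hc c σ)/W) * (-b*Hc c σ)
        = (-b/W) * (Real.exp (-b*Hc c σ) * Hc c σ) := fun σ => by ring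
    rw [Finset.sum_congr rfl (fun σ _ => hstep σ), ← Finset.mul_sum, ← hAdef]
    ring
  have h6 : ∑ σ : Equiv.Perm (Fin N), (Real.exp (-b * Hc c σ) / W) * Real.exp (-b * Hc c σ)
      = Z2 / W := by
    rw [hZ2def, Finset.sum_div]
    apply Finset.sum_congr rfl
    intro σ _
    rw [div_mul_eq_mul_div, ← Real.exp_add]
    congr 2
    ring
  rw [h5, h6] at hj2
  have h7 : Real.exp (-(b * (A/W))) ≤ Real.exp (8*b^2*(N:ℝ)^3 - b*m) := by
    calc Real.exp (-(b*(A/W))) ≤ Z2 / W := hj2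
      _ ≤ ((N.factorial:ℝ) * Real.exp (8*b^2*(N:ℝ)^3 - 2*(b*m)))
            / ((N.factorial:ℝ) * Real.exp (-(b*m))) := by
          apply div_le_div₀ (by positivity) hZ2 (by positivity) hW_lb
      _ = Real.exp (8*b^2*(N:ℝ)^3 - b*m) := by
          rw [mul_div_mul_left _ _ (ne_of_gt hfacpos), ← Real.exp_sub]
          congr 1
          ring
  have h8 : m - 8*b*(N:ℝ)^3 ≤ A/W := by
    have h9 := Real.exp_le_exp.mp h7
    have e1 : b * (m - A/W) = b*m - b*(A/W) := by ring
    have e2 : b * (8*b*(N:ℝ)^3) = 8*b^2*(N:ℝ)^3 := by ring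
    have h9a : b * (m - A/W) ≤ b * (8*b*(N:ℝ)^3) := by linarith [h9, e1, e2]
    have := le_of_mul_le_mul_left h9a hb
    linarith
  -- Jensen for the Gibbs measure, upward tilt
  have hj3 := jensen_exp (fun σ : Equiv.Perm (Fin N) => Real.exp (-b * Hc c σ) / W)
    (fun σ => b * Hc c σ) hwg hwg1
  have h10 : ∑ σ : Equiv.Perm (Fin N), (Real.exp (-b * Hc c σ) / W) * (b * Hc c σ)
      = b * (A/W) := by
    have hstep : ∀ σ : Equiv.Perm (Fin N),
        (Real.exp (-b*Hc c σ)/W) * (b*Hc c σ)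
        = (b/W) * (Real.exp (-b*Hc c σ) * Hc c σ) := fun σ => by ring
    rw [Finset.sum_congr rfl (fun σ _ => hstep σ), ← Finset.mul_sum, ← hAdef]
    ring
  have h11 : ∑ σ : Equiv.Perm (Fin N), (Real.exp (-b * Hc c σ) / W) * Real.exp (b * Hc c σ)
      = (N.factorial:ℝ) / W := by
    have hstep : ∀ σ : Equiv.Perm (Fin N),
        (Real.exp (-b*Hc c σ)/W) * Real.exp (b*Hc c σ) = 1 / W := by
      intro σ
      rw [div_mul_eq_mul_div, ← Real.exp_add]
      norm_num
    rw [Finset.sum_congr rfl (fun σ _ => hstep σ), Finset.sum_const]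
    simp only [Finset.card_univ, nsmul_eq_mul]
    rw [hcardP]
    ring
  rw [h10, h11] at hj3
  have h12 : A/W ≤ m := by
    have h13 : Real.exp (b*(A/W)) ≤ Real.exp (b*m) := by
      calc Real.exp (b*(A/W)) ≤ (N.factorial:ℝ)/W := hj3
        _ ≤ (N.factorial:ℝ) / ((N.factorial:ℝ) * Real.exp (-(b*m))) := by
            apply div_le_div₀ hfacpos.le le_rfl (by positivity) hW_lb
        _ = Real.exp (b*m) := by
            rw [div_mul_eq_div_div, div_self (ne_of_gt hfacpos), Real.exp_neg, one_div, inv_inv]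
    have h14 := Real.exp_le_exp.mp h13
    exact le_of_mul_le_mul_left h14 hb
  -- final algebra
  rw [hDval]
  have hN0 : (N:ℝ) ≠ 0 := ne_of_gt hNpos
  have hm0 : m ≠ 0 := ne_of_gt hmpos
  have hden : (N:ℝ)/3 - 1/(3*(N:ℝ)) = m / N := by
    rw [hmdef]
    field_simp
  rw [hden]
  have hXm : (1/(N:ℝ)) * (A/W) / (m / (N:ℝ)) = (A/W)/m := by
    field_simp
  rw [hXm]
  have hle1 : (A/W)/m ≤ 1 := by
    rw [div_le_one hmpos]
    exact h12
  rw [abs_of_nonpos (by linarith : (A/W)/m - 1 ≤ 0)]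
  have hfin : (m - A/W)/m ≤ 32*(b*(N:ℝ)) := by
    rw [div_le_iff₀ hmpos]
    have hint : (0:ℝ) ≤ (b*(N:ℝ))*(4*m - (N:ℝ)^2) :=
      mul_nonneg (mul_nonneg hb.le hNpos.le) (by linarith [hm4])
    have e3 : 32*(b*(N:ℝ))*m - 8*b*(N:ℝ)^3 = 8*((b*(N:ℝ))*(4*m - (N:ℝ)^2)) := by ring
    linarith [h8, hint, e3]
  have hxm2 : -((A/W)/m - 1) = (m - A/W)/m := by
    field_simp
    ring
  rw [hxm2]
  exact hfin
end

section
/- Let d ≥ 1 and let β : ℕ → (0,∞) be a sequence with β(N) → 0 and N·β(N) → ∞ as N → ∞. Then there exist a constant C > 0 and N₀ such that for all N ≥ N₀ one has |(1/N^d)·log Z^N_{β(N)} + d·log β(N)| ≤ C. (In other words, in the supercritical regime the permanent of the matrix A^N_β = (e^{−β‖x−y‖})_{x,y∈T^N} satisfies (1/N^d) log perm(A^N_β) = log(1/β^d) + O(1), since Z^N_β = perm(A^N_β).) -/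
open Filter Topology

lemma srp_oneD (N : ℕ) (u : ℝ) (hu : 0 < u) (hu1 : u ≤ 1) (s : Fin N) :
    ∑ t : Fin N, Real.exp (-u * |(s : ℝ) - (t : ℝ)|) ≤ 4 / u := by
  classical
  set r := Real.exp (-u) with hr
  have hr0 : 0 ≤ r := (Real.exp_pos _).le
  have hr1 : r < 1 := Real.exp_lt_one_iff.mpr (by linarith)
  have hterm : ∀ t : Fin N, Real.exp (-u * |(s : ℝ) - (t : ℝ)|)
      = r ^ (((s : ℤ) - (t : ℤ)).natAbs) := by
    intro t
    have h1 : |(s : ℝ) - (t : ℝ)| = ((((s:ℤ) - (t:ℤ)).natAbs : ℕ) : ℝ) := by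
      rw [Nat.cast_natAbs]; push_cast; ring_nf
    rw [h1, hr, ← Real.exp_nat_mul]
    ring_nf
  rw [Finset.sum_congr rfl (fun t _ => hterm t)]
  set e : Fin N → ℕ := fun t => ((s : ℤ) - (t : ℤ)).natAbs with he
  rw [Finset.sum_comp (fun m => r ^ m) e]
  have hfib : ∀ b ∈ Finset.univ.image e, ((Finset.univ.filter (fun t => e t = b)).card : ℝ) ≤ 2 := by
    intro b _
    have hc : (Finset.univ.filter (fun t => e t = b)).card ≤ ({(b : ℤ), -(b:ℤ)} : Finset ℤ).card :=
      Finset.card_le_card_of_injOn (fun t => (s : ℤ) - (t : ℤ))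
        (by
          intro t ht
          simp only [Finset.mem_coe, Finset.mem_filter, he] at ht
          have := Int.natAbs_eq_iff.mp ht.2
          simpa using this)
        (by
          intro t1 _ t2 _ h
          simp only at h
          have : (t1 : ℤ) = (t2 : ℤ) := by omega
          exact Fin.ext (by exact_mod_cast this))
    have h2 : ({(b : ℤ), -(b:ℤ)} : Finset ℤ).card ≤ 2 :=
      (Finset.card_insert_le _ _).trans (by simp)
    exact_mod_cast hc.trans h2
  calc ∑ b ∈ Finset.univ.image e, (Finset.univ.filter (fun t => e t = b)).card • r ^ b
      ≤ ∑ b ∈ Finset.univ.image e, 2 * r ^ b := by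
        apply Finset.sum_le_sum
        intro b hb
        rw [nsmul_eq_mul]
        exact mul_le_mul_of_nonneg_right (hfib b hb) (pow_nonneg hr0 b)
    _ ≤ ∑ b ∈ Finset.range N, 2 * r ^ b := by
        apply Finset.sum_le_sum_of_subset_of_nonneg
        · intro b hb
          simp only [Finset.mem_image, he] at hb
          obtain ⟨t, _, ht⟩ := hb
          have hs := s.isLt
          have htl := t.isLt
          rw [Finset.mem_range]
          omega
        · intro b _ _
          positivity
    _ = 2 * ∑ b ∈ Finset.range N, r ^ b := by rw [Finset.mul_sum]
    _ ≤ 2 * (1 - r)⁻¹ := by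
        apply mul_le_mul_of_nonneg_left _ (by norm_num)
        exact (Summable.sum_le_tsum _ (fun i _ => pow_nonneg hr0 i)
          (summable_geometric_of_lt_one hr0 hr1)).trans_eq (tsum_geometric_of_lt_one hr0 hr1)
    _ ≤ 4 / u := by
        have h3 : r ≤ 1 / (1 + u) := by
          rw [hr, Real.exp_neg, div_eq_inv_mul, mul_one]
          exact inv_anti₀ (by linarith) ((Real.add_one_le_exp u).trans_eq' (by ring))
        have heq : 1 - 1/(1+u) = u/(1+u) := by field_simp; ring
        have h7 : u / 2 ≤ u / (1 + u) :=
          div_le_div_of_nonneg_left hu.le (by linarith) (by linarith)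
        have h4 : u / 2 ≤ 1 - r := by linarith
        have h5 : (1 - r)⁻¹ ≤ (u/2)⁻¹ := inv_anti₀ (by linarith) h4
        calc 2 * (1-r)⁻¹ ≤ 2 * (u/2)⁻¹ := by linarith
          _ = 4 / u := by field_simp; ring

lemma srp_l1_le (d : ℕ) (a : Fin d → ℝ) :
    ∑ i, |a i| ≤ Real.sqrt d * Real.sqrt (∑ i, a i ^ 2) := by
  have h2 : (∑ i, |a i|) ^ 2 ≤ (d : ℝ) * ∑ i, a i ^ 2 := by
    have := sq_sum_le_card_mul_sum_sq (s := (Finset.univ : Finset (Fin d))) (f := fun i => |a i|)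
    simpa [sq_abs] using this
  have h0 : 0 ≤ ∑ i, |a i| := Finset.sum_nonneg fun i _ => abs_nonneg _
  calc ∑ i, |a i| = Real.sqrt ((∑ i, |a i|) ^ 2) := (Real.sqrt_sq h0).symm
    _ ≤ Real.sqrt ((d : ℝ) * ∑ i, a i ^ 2) := Real.sqrt_le_sqrt h2
    _ = Real.sqrt d * Real.sqrt (∑ i, a i ^ 2) := Real.sqrt_mul (by positivity) _

lemma srp_row (d N : ℕ) (hd : 1 ≤ d) (b : ℝ) (hb : 0 < b) (hb1 : b ≤ 1) (x : Fin d → Fin N) :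
    ∑ y : Fin d → Fin N, Real.exp (-b * Real.sqrt (∑ i, ((x i : ℝ) - (y i : ℝ)) ^ 2))
      ≤ (4 * Real.sqrt d / b) ^ d := by
  classical
  have hd1 : (1 : ℝ) ≤ Real.sqrt d := by
    rw [show (1:ℝ) = Real.sqrt 1 by simp]
    exact Real.sqrt_le_sqrt (by exact_mod_cast hd)
  have hsd : 0 < Real.sqrt d := by linarith
  set u := b / Real.sqrt d with hu
  have hu0 : 0 < u := by positivity
  have hu1 : u ≤ 1 := by rw [hu, div_le_one hsd]; linarith
  have hpt : ∀ y : Fin d → Fin N,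
      Real.exp (-b * Real.sqrt (∑ i, ((x i : ℝ) - (y i : ℝ)) ^ 2))
        ≤ ∏ i, Real.exp (-u * |(x i : ℝ) - (y i : ℝ)|) := by
    intro y
    rw [← Real.exp_sum]
    apply Real.exp_le_exp.mpr
    have key := srp_l1_le d (fun i => (x i : ℝ) - (y i : ℝ))
    have h1 : u * ∑ i, |(x i : ℝ) - (y i : ℝ)| ≤ b * Real.sqrt (∑ i, ((x i : ℝ) - (y i : ℝ)) ^ 2) := by
      have h3 : u * ∑ i, |(x i : ℝ) - (y i : ℝ)|
          ≤ u * (Real.sqrt d * Real.sqrt (∑ i, ((x i : ℝ) - (y i : ℝ)) ^ 2)) :=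
        mul_le_mul_of_nonneg_left key hu0.le
      have h4 : u * Real.sqrt d = b := by
        rw [hu]; field_simp
      calc u * ∑ i, |(x i : ℝ) - (y i : ℝ)|
          ≤ u * Real.sqrt d * Real.sqrt (∑ i, ((x i : ℝ) - (y i : ℝ)) ^ 2) := by
            rw [mul_assoc]; exact h3
        _ = b * Real.sqrt (∑ i, ((x i : ℝ) - (y i : ℝ)) ^ 2) := by rw [h4]
    have h2 : ∑ i, -u * |(x i : ℝ) - (y i : ℝ)| = -(u * ∑ i, |(x i : ℝ) - (y i : ℝ)|) := by
      rw [Finset.mul_sum, ← Finset.sum_neg_distrib]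
      exact Finset.sum_congr rfl fun i _ => by ring
    rw [h2]
    linarith
  calc ∑ y : Fin d → Fin N, Real.exp (-b * Real.sqrt (∑ i, ((x i : ℝ) - (y i : ℝ)) ^ 2))
      ≤ ∑ y : Fin d → Fin N, ∏ i, Real.exp (-u * |(x i : ℝ) - (y i : ℝ)|) :=
        Finset.sum_le_sum fun y _ => hpt y
    _ = ∏ i, ∑ t : Fin N, Real.exp (-u * |(x i : ℝ) - (t : ℝ)|) :=
        (Fintype.prod_sum (κ := fun _ : Fin d => Fin N) fun i t => Real.exp (-u * |(x i : ℝ) - (t : ℝ)|)).symm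
    _ ≤ ∏ _i : Fin d, (4 / u) := by
        apply Finset.prod_le_prod
        · intro i _
          exact Finset.sum_nonneg fun t _ => (Real.exp_pos _).le
        · intro i _
          exact srp_oneD N u hu0 hu1 (x i)
    _ = (4 / u) ^ d := by simp [div_pow]
    _ = (4 * Real.sqrt d / b) ^ d := by
        congr 1
        rw [hu]
        field_simp

lemma srp_card_fun (d N : ℕ) : Fintype.card (Fin d → Fin N) = N ^ d := by simp

lemma srp_sum_perm_le {α : Type*} [Fintype α] [DecidableEq α] (g : (α → α) → ℝ)
    (hg : ∀ f, 0 ≤ g f) :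
    ∑ π : Equiv.Perm α, g ⇑π ≤ ∑ f : α → α, g f := by
  rw [show (∑ π : Equiv.Perm α, g ⇑π)
      = ∑ f ∈ Finset.univ.image (fun π : Equiv.Perm α => ⇑π), g f from
    (Finset.sum_image (fun π _ τ _ h => Equiv.coe_fn_injective h)).symm]
  exact Finset.sum_le_sum_of_subset_of_nonneg (Finset.subset_univ _) (fun f _ _ => hg f)

lemma srpZ_le_pow (d N : ℕ) (hd : 1 ≤ d) (b : ℝ) (hb : 0 < b) (hb1 : b ≤ 1) :
    srpZ d N b ≤ ((4 * Real.sqrt d / b) ^ d) ^ (N ^ d) := by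
  classical
  have hrw : srpZ d N b = ∑ π : Equiv.Perm (Fin d → Fin N),
      ∏ x : Fin d → Fin N, Real.exp (-b * Real.sqrt (∑ i, ((x i : ℝ) - ((π x) i : ℝ)) ^ 2)) := by
    unfold srpZ srpEnergy
    exact Finset.sum_congr rfl fun π _ => by rw [Finset.mul_sum, Real.exp_sum]
  rw [hrw]
  calc ∑ π : Equiv.Perm (Fin d → Fin N),
        ∏ x : Fin d → Fin N, Real.exp (-b * Real.sqrt (∑ i, ((x i : ℝ) - ((π x) i : ℝ)) ^ 2))
      ≤ ∑ f : (Fin d → Fin N) → (Fin d → Fin N),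
        ∏ x : Fin d → Fin N, Real.exp (-b * Real.sqrt (∑ i, ((x i : ℝ) - ((f x) i : ℝ)) ^ 2)) :=
        srp_sum_perm_le (fun f => ∏ x : Fin d → Fin N, Real.exp (-b * Real.sqrt (∑ i, ((x i : ℝ) - ((f x) i : ℝ)) ^ 2))) (fun f => Finset.prod_nonneg fun x _ => (Real.exp_pos _).le)
    _ = ∏ x : Fin d → Fin N, ∑ y : Fin d → Fin N,
          Real.exp (-b * Real.sqrt (∑ i, ((x i : ℝ) - ((y i : Fin N) : ℝ)) ^ 2)) :=
        (Fintype.prod_sum (κ := fun _ : Fin d → Fin N => Fin d → Fin N)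
          (fun x y => Real.exp (-b * Real.sqrt (∑ i, ((x i : ℝ) - ((y i : Fin N) : ℝ)) ^ 2)))).symm
    _ ≤ ∏ _x : Fin d → Fin N, (4 * Real.sqrt d / b) ^ d := by
        apply Finset.prod_le_prod
        · intro x _; exact Finset.sum_nonneg fun y _ => (Real.exp_pos _).le
        · intro x _; exact srp_row d N hd b hb hb1 x
    _ = ((4 * Real.sqrt d / b) ^ d) ^ (N ^ d) := by
        rw [Finset.prod_const, Finset.card_univ, srp_card_fun]

lemma srp_slot_lt {N k q j y : ℕ} (hq : q = N / k) (hj : j < q) (hy : y < k) :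
    j * k + y < N := by
  have h2 : (j + 1) * k ≤ q * k := Nat.mul_le_mul_right k hj
  have h3 : q * k ≤ N := hq ▸ Nat.div_mul_le_self N k
  have h4 : (j + 1) * k = j * k + k := by ring
  omega

lemma srpBlk_close {N k : ℕ} (hk : 1 ≤ k) (hq : 1 ≤ N / k) (a b : Fin N)
    (h : min ((a : ℕ) / k) (N / k - 1) = min ((b : ℕ) / k) (N / k - 1)) :
    |(a : ℝ) - (b : ℝ)| ≤ 2 * k := by
  set q := N / k with hqdef
  have key : (a : ℕ) ≤ (b : ℕ) + 2 * k ∧ (b : ℕ) ≤ (a : ℕ) + 2 * k := by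
    have hA := Nat.div_add_mod (a : ℕ) k
    have hB := Nat.div_add_mod (b : ℕ) k
    have hN : k * q + N % k = N := by rw [hqdef]; exact Nat.div_add_mod N k
    have hma := Nat.mod_lt (a : ℕ) (show 0 < k by omega)
    have hmb := Nat.mod_lt (b : ℕ) (show 0 < k by omega)
    have hmn := Nat.mod_lt N (show 0 < k by omega)
    have haN := a.isLt
    have hbN := b.isLt
    have hkq : k * (q - 1) + k = k * q := by
      rw [← Nat.mul_succ]
      congr 1
      omega
    rcases le_or_gt (q - 1) ((a : ℕ) / k) with h1 | h1 <;>
      rcases le_or_gt (q - 1) ((b : ℕ) / k) with h2 | h2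
    · have hma2 : k * (q - 1) ≤ k * ((a : ℕ) / k) := Nat.mul_le_mul_left k h1
      have hmb2 : k * (q - 1) ≤ k * ((b : ℕ) / k) := Nat.mul_le_mul_left k h2
      omega
    · rw [min_eq_right h1, min_eq_left h2.le] at h
      omega
    · rw [min_eq_left h1.le, min_eq_right h2] at h
      omega
    · rw [min_eq_left h1.le, min_eq_left h2.le] at h
      have heqk : k * ((a : ℕ) / k) = k * ((b : ℕ) / k) := by rw [h]
      omega
  have k1 : ((a : ℕ) : ℝ) ≤ ((b : ℕ) : ℝ) + 2 * (k : ℝ) := by exact_mod_cast key.1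
  have k2 : ((b : ℕ) : ℝ) ≤ ((a : ℕ) : ℝ) + 2 * (k : ℝ) := by exact_mod_cast key.2
  rw [abs_le]
  constructor <;> [linarith; linarith]

lemma srp_factorial_ge (c m : ℕ) (h : c ≤ m) :
    ((c : ℝ) / Real.exp 1) ^ m ≤ (m.factorial : ℝ) := by
  have h1 : ((c : ℝ) / Real.exp 1) ^ m ≤ ((m : ℝ) / Real.exp 1) ^ m := by
    have : (c : ℝ) ≤ (m : ℝ) := by exact_mod_cast h
    gcongr
  have h2 : ((m : ℝ) / Real.exp 1) ^ m = (m : ℝ) ^ m / Real.exp m := by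
    rw [div_pow, Real.exp_one_pow]
  have h3 : (m : ℝ) ^ m / Real.exp m ≤ (m.factorial : ℝ) := by
    have h4 := Real.pow_div_factorial_le_exp (x := (m : ℝ)) (by positivity) m
    rw [div_le_iff₀ (by positivity)] at h4 ⊢
    nlinarith [Real.exp_pos ((m:ℝ))]
  linarith [h2 ▸ h1]

lemma srpZ_lower (d N k : ℕ) (hk : 1 ≤ k) (hq : 1 ≤ N / k) (b : ℝ) (hb : 0 ≤ b) :
    ((k : ℝ) ^ d / Real.exp 1) ^ (N ^ d)
        * Real.exp (-(b * (2 * k * Real.sqrt d * (N : ℝ) ^ d)))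
      ≤ srpZ d N b := by
  classical
  set q := N / k with hqdef
  have hqpos : 0 < q := hq
  set F : (Fin d → Fin N) → (Fin d → Fin q) := fun x i =>
    ⟨min ((x i : ℕ) / k) (q - 1), by
      have h1 := min_le_right ((x i : ℕ) / k) (q - 1)
      omega⟩ with hFdef
  -- energy bound on the stabilizer
  have hen : ∀ π : Equiv.Perm (Fin d → Fin N), F ∘ ⇑π = F →
      srpEnergy d N π ≤ 2 * k * Real.sqrt d * (N : ℝ) ^ d := by
    intro π hπ
    have hterm : ∀ x : Fin d → Fin N,
        Real.sqrt (∑ i, ((x i : ℝ) - ((π x) i : ℝ)) ^ 2) ≤ 2 * k * Real.sqrt d := by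
      intro x
      have hbound : ∀ i, ((x i : ℝ) - ((π x) i : ℝ)) ^ 2 ≤ (2 * (k : ℝ)) ^ 2 := by
        intro i
        have hfx : F (π x) i = F x i := congrFun (congrFun hπ x) i
        have hval : min (((π x) i : ℕ) / k) (q - 1) = min ((x i : ℕ) / k) (q - 1) :=
          congrArg Fin.val hfx
        have hclose : |((π x) i : ℝ) - ((x i : ℝ))| ≤ 2 * k :=
          srpBlk_close hk hq ((π x) i) (x i) hval
        have habs : |(x i : ℝ) - ((π x) i : ℝ)| ≤ 2 * k := by
          rw [abs_sub_comm]; exact hclose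
        calc ((x i : ℝ) - ((π x) i : ℝ)) ^ 2 = |(x i : ℝ) - ((π x) i : ℝ)| ^ 2 :=
              (sq_abs _).symm
          _ ≤ (2 * (k : ℝ)) ^ 2 := pow_le_pow_left₀ (abs_nonneg _) habs 2
      calc Real.sqrt (∑ i, ((x i : ℝ) - ((π x) i : ℝ)) ^ 2)
          ≤ Real.sqrt (∑ _i : Fin d, (2 * (k : ℝ)) ^ 2) :=
            Real.sqrt_le_sqrt (Finset.sum_le_sum fun i _ => hbound i)
        _ = Real.sqrt ((d : ℝ) * (2 * (k : ℝ)) ^ 2) := by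
            rw [Finset.sum_const, Finset.card_univ, Fintype.card_fin, nsmul_eq_mul]
        _ = Real.sqrt d * (2 * (k : ℝ)) := by
            rw [Real.sqrt_mul (by positivity), Real.sqrt_sq (by positivity)]
        _ = 2 * k * Real.sqrt d := by ring
    calc srpEnergy d N π ≤ ∑ _x : Fin d → Fin N, 2 * (k : ℝ) * Real.sqrt d :=
          Finset.sum_le_sum fun x _ => hterm x
      _ = 2 * k * Real.sqrt d * (N : ℝ) ^ d := by
          rw [Finset.sum_const, Finset.card_univ, nsmul_eq_mul]
          have : Fintype.card (Fin d → Fin N) = N ^ d := by simp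
          rw [this]
          push_cast
          ring
  -- fiber cardinality bound
  have hfib : ∀ v : Fin d → Fin q, k ^ d ≤ Fintype.card {x : Fin d → Fin N // F x = v} := by
    intro v
    have hinj : Function.Injective (fun y : Fin d → Fin k =>
        (⟨fun i => ⟨(v i : ℕ) * k + (y i : ℕ), srp_slot_lt hqdef (v i).isLt (y i).isLt⟩,
          by
            funext i
            apply Fin.ext
            show min (((v i : ℕ) * k + (y i : ℕ)) / k) (q - 1) = (v i : ℕ)
            have hdiv : ((v i : ℕ) * k + (y i : ℕ)) / k = (v i : ℕ) := by
              rw [Nat.add_comm, Nat.mul_comm, Nat.add_mul_div_left _ _ (show 0 < k by omega),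
                Nat.div_eq_of_lt (y i).isLt, Nat.zero_add]
            rw [hdiv]
            have := (v i).isLt
            omega⟩ : {x : Fin d → Fin N // F x = v})) := by
      intro y y' hyy
      funext i
      apply Fin.ext
      have h1 := congrArg Fin.val (congrFun (congrArg Subtype.val hyy) i)
      simpa using h1
    calc k ^ d = Fintype.card (Fin d → Fin k) := by simp
      _ ≤ Fintype.card {x : Fin d → Fin N // F x = v} := Fintype.card_le_of_injective _ hinj
  -- stabilizer set
  set S : Finset (Equiv.Perm (Fin d → Fin N)) :=
    Finset.univ.filter (fun π => F ∘ ⇑π = F) with hSdef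
  have hScard : S.card = ∏ v : Fin d → Fin q, (Fintype.card {x : Fin d → Fin N // F x = v}).factorial := by
    rw [hSdef, ← DomMulAct.stabilizer_card F, Fintype.card_subtype]
  have hsumfib : ∑ v : Fin d → Fin q, Fintype.card {x : Fin d → Fin N // F x = v} = N ^ d := by
    have h1 : ∀ v : Fin d → Fin q, Fintype.card {x : Fin d → Fin N // F x = v}
        = (Finset.univ.filter (fun x => F x = v)).card := fun v => Fintype.card_subtype _
    rw [Finset.sum_congr rfl fun v _ => h1 v]
    rw [← Finset.card_eq_sum_card_fiberwise (fun x _ => Finset.mem_univ (F x))]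
    simp
  -- lower bound on card
  have hcard : ((k : ℝ) ^ d / Real.exp 1) ^ (N ^ d) ≤ (S.card : ℝ) := by
    rw [hScard]
    push_cast
    calc ((k : ℝ) ^ d / Real.exp 1) ^ (N ^ d)
        = ∏ v : Fin d → Fin q, ((k : ℝ) ^ d / Real.exp 1) ^ Fintype.card {x : Fin d → Fin N // F x = v} := by
          rw [Finset.prod_pow_eq_pow_sum, hsumfib]
      _ ≤ ∏ v : Fin d → Fin q, ((Fintype.card {x : Fin d → Fin N // F x = v}).factorial : ℝ) := by
          apply Finset.prod_le_prod
          · intro v _; positivity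
          · intro v _
            have := srp_factorial_ge (k ^ d) (Fintype.card {x : Fin d → Fin N // F x = v}) (hfib v)
            calc ((k : ℝ) ^ d / Real.exp 1) ^ Fintype.card {x : Fin d → Fin N // F x = v}
                = (((k ^ d : ℕ) : ℝ) / Real.exp 1) ^ Fintype.card {x : Fin d → Fin N // F x = v} := by
                  push_cast; ring_nf
              _ ≤ _ := this
  -- assemble
  have hZ : (S.card : ℝ) * Real.exp (-(b * (2 * k * Real.sqrt d * (N : ℝ) ^ d))) ≤ srpZ d N b := by
    have h1 : ∀ π ∈ S, Real.exp (-(b * (2 * k * Real.sqrt d * (N : ℝ) ^ d)))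
        ≤ Real.exp (-b * srpEnergy d N π) := by
      intro π hπ
      apply Real.exp_le_exp.mpr
      have h2 := hen π (Finset.mem_filter.mp hπ).2
      have h3 : b * srpEnergy d N π ≤ b * (2 * k * Real.sqrt d * (N : ℝ) ^ d) :=
        mul_le_mul_of_nonneg_left h2 hb
      linarith
    calc (S.card : ℝ) * Real.exp (-(b * (2 * k * Real.sqrt d * (N : ℝ) ^ d)))
        ≤ ∑ π ∈ S, Real.exp (-b * srpEnergy d N π) := by
          have := Finset.card_nsmul_le_sum S (fun π => Real.exp (-b * srpEnergy d N π))
            (Real.exp (-(b * (2 * k * Real.sqrt d * (N : ℝ) ^ d)))) h1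
          simpa [nsmul_eq_mul] using this
      _ ≤ srpZ d N b := by
          apply Finset.sum_le_sum_of_subset_of_nonneg (Finset.subset_univ S)
          intro π _ _
          exact (Real.exp_pos _).le
  calc ((k : ℝ) ^ d / Real.exp 1) ^ (N ^ d)
        * Real.exp (-(b * (2 * k * Real.sqrt d * (N : ℝ) ^ d)))
      ≤ (S.card : ℝ) * Real.exp (-(b * (2 * k * Real.sqrt d * (N : ℝ) ^ d))) :=
        mul_le_mul_of_nonneg_right hcard (Real.exp_pos _).le
    _ ≤ srpZ d N b := hZ

/-- **KMS permanent asymptotics, supercritical regime, general dimension:**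
`(1/N^d) log perm(A^N_β) = log(1/β^d) + O(1)` when `1/N ≪ β ≪ 1`
(recall `Z^N_β = perm(A^N_β)`). -/
theorem kms_permanent_supercritical (d : ℕ) (hd : 1 ≤ d) (β : ℕ → ℝ)
    (hβpos : ∀ N, 0 < β N)
    (hβ0 : Tendsto β atTop (𝓝 0))
    (hβN : Tendsto (fun N : ℕ => (N : ℝ) * β N) atTop atTop) :
    ∃ C > (0:ℝ), ∃ N₀ : ℕ, ∀ N ≥ N₀,
      |(1 / (N : ℝ) ^ d) * Real.log (srpZ d N (β N)) + d * Real.log (β N)| ≤ C := by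
  have hd1 : (1 : ℝ) ≤ Real.sqrt d := by
    rw [show (1:ℝ) = Real.sqrt 1 by simp]
    exact Real.sqrt_le_sqrt (by exact_mod_cast hd)
  have hlog4 : 0 < Real.log (4 * Real.sqrt d) := Real.log_pos (by nlinarith)
  set C : ℝ := d * Real.log (4 * Real.sqrt d) + 4 * Real.sqrt d + 1 with hCdef
  have hC : 0 < C := by
    have hd0 : (1:ℝ) ≤ (d:ℝ) := by exact_mod_cast hd
    have : 0 < (d:ℝ) * Real.log (4 * Real.sqrt d) := by positivity
    nlinarith
  have h1 : ∀ᶠ N in atTop, β N ≤ 1 := hβ0.eventually (eventually_le_nhds one_pos)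
  have h2 : ∀ᶠ N : ℕ in atTop, (2:ℝ) ≤ (N : ℝ) * β N := hβN.eventually_ge_atTop 2
  have h3 : ∀ᶠ N : ℕ in atTop, 2 ≤ N := eventually_ge_atTop 2
  obtain ⟨N₀, hN₀⟩ := (h1.and (h2.and h3)).exists_forall_of_atTop
  refine ⟨C, hC, N₀, fun N hN => ?_⟩
  obtain ⟨hb1, h2b, hN2⟩ := hN₀ N hN
  set b := β N with hbdef
  have hb : 0 < b := hβpos N
  -- the block scale
  set k : ℕ := ⌈1 / b⌉₊ with hkdef
  have hk1 : 1 ≤ k := Nat.one_le_ceil_iff.mpr (by positivity)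
  have hkb : 1 / b ≤ (k : ℝ) := Nat.le_ceil _
  have hkb2 : (k : ℝ) < 1 / b + 1 := Nat.ceil_lt_add_one (by positivity)
  have hbk1 : 1 ≤ b * k := by
    have := mul_le_mul_of_nonneg_left hkb hb.le
    rwa [mul_one_div, div_self hb.ne'] at this
  have hbk2 : b * k ≤ 2 := by
    have h4 := mul_le_mul_of_nonneg_left hkb2.le hb.le
    have h5 : b * (1 / b + 1) = 1 + b := by field_simp
    nlinarith
  have hNR : (2:ℝ) ≤ (N:ℝ) := by exact_mod_cast hN2
  have hkN : k ≤ N := by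
    have h6 : 1 / b ≤ (N:ℝ) / 2 := by
      rw [div_le_div_iff₀ hb two_pos]
      nlinarith
    have h7 : (k : ℝ) ≤ (N : ℝ) := by nlinarith
    exact_mod_cast h7
  have hq : 1 ≤ N / k := (Nat.one_le_div_iff (by omega)).mpr hkN
  have hNpos : (0:ℝ) < (N:ℝ) ^ d := by positivity
  have hkR : (1:ℝ) ≤ (k:ℝ) := by exact_mod_cast hk1
  -- positivity of Z
  have hZpos : 0 < srpZ d N b := by
    apply Finset.sum_pos (fun π _ => Real.exp_pos _) Finset.univ_nonempty
  have hcast : (((N:ℕ) ^ d : ℕ) : ℝ) = (N:ℝ) ^ d := by push_cast; ring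
  rw [abs_le]
  constructor
  -- lower bound
  · have hlow := srpZ_lower d N k hk1 hq b hb.le
    have hLpos : (0:ℝ) < ((k : ℝ) ^ d / Real.exp 1) ^ (N ^ d)
        * Real.exp (-(b * (2 * k * Real.sqrt d * (N : ℝ) ^ d))) := by positivity
    have hlogZ : (N:ℝ) ^ d * ((d : ℝ) * Real.log k - 1)
        - b * (2 * k * Real.sqrt d * (N : ℝ) ^ d) ≤ Real.log (srpZ d N b) := by
      have h8 := Real.log_le_log hLpos hlow
      rw [Real.log_mul (by positivity) (Real.exp_ne_zero _), Real.log_exp,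
        Real.log_pow, Real.log_div (by positivity) (Real.exp_ne_zero _),
        Real.log_pow, Real.log_exp] at h8
      calc (N:ℝ) ^ d * ((d : ℝ) * Real.log k - 1)
            - b * (2 * k * Real.sqrt d * (N : ℝ) ^ d)
          = ((N ^ d : ℕ) : ℝ) * ((d : ℝ) * Real.log k - 1)
            + -(b * (2 * k * Real.sqrt d * (N : ℝ) ^ d)) := by rw [hcast]; ring
        _ ≤ Real.log (srpZ d N b) := h8
    have hmul : (1 / (N:ℝ) ^ d) * ((N:ℝ) ^ d * ((d : ℝ) * Real.log k - 1)
        - b * (2 * k * Real.sqrt d * (N : ℝ) ^ d))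
        = (d : ℝ) * Real.log k - 1 - b * (2 * k * Real.sqrt d) := by
      field_simp
    have h9 : (d : ℝ) * Real.log k - 1 - b * (2 * k * Real.sqrt d)
        ≤ (1 / (N:ℝ) ^ d) * Real.log (srpZ d N b) := by
      rw [← hmul]
      exact mul_le_mul_of_nonneg_left hlogZ (by positivity)
    have hlogbk : Real.log b + Real.log k = Real.log (b * k) := (Real.log_mul hb.ne' (by positivity)).symm
    have hlogbk0 : 0 ≤ Real.log (b * k) := Real.log_nonneg hbk1
    have hsd0 : (0:ℝ) ≤ Real.sqrt d := Real.sqrt_nonneg d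
    have h10 : b * (2 * k * Real.sqrt d) ≤ 4 * Real.sqrt d := by
      have : b * (2 * k * Real.sqrt d) = 2 * (b * k) * Real.sqrt d := by ring
      rw [this]
      nlinarith
    have hd0 : (1:ℝ) ≤ (d:ℝ) := by exact_mod_cast hd
    have h11 : 0 ≤ (d : ℝ) * Real.log (b * k) := by positivity
    -- -C ≤ expr
    have : -C ≤ (d : ℝ) * Real.log k - 1 - b * (2 * k * Real.sqrt d) + (d:ℝ) * Real.log b := by
      have h12 : (d : ℝ) * Real.log k + (d:ℝ) * Real.log b = (d:ℝ) * Real.log (b * k) := by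
        rw [← hlogbk]; ring
      have h13 : 0 < (d:ℝ) * Real.log (4 * Real.sqrt d) := by positivity
      rw [hCdef]
      linarith [h10, h11, h12, h13]
    linarith [this, h9]
  -- upper bound
  · have hup := srpZ_le_pow d N hd b hb hb1
    have hbase : (0:ℝ) < 4 * Real.sqrt d / b := by positivity
    have hlogZ : Real.log (srpZ d N b) ≤ (N:ℝ) ^ d * ((d:ℝ) * (Real.log (4 * Real.sqrt d) - Real.log b)) := by
      have h8 := Real.log_le_log hZpos hup
      rw [Real.log_pow, Real.log_pow] at h8
      calc Real.log (srpZ d N b) ≤ ((N ^ d : ℕ) : ℝ) * ((d:ℝ) * Real.log (4 * Real.sqrt d / b)) := h8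
        _ = (N:ℝ) ^ d * ((d:ℝ) * (Real.log (4 * Real.sqrt d) - Real.log b)) := by
            rw [hcast, Real.log_div (by positivity) hb.ne']
    have h9 : (1 / (N:ℝ) ^ d) * Real.log (srpZ d N b)
        ≤ (d:ℝ) * (Real.log (4 * Real.sqrt d) - Real.log b) := by
      have := mul_le_mul_of_nonneg_left hlogZ (show (0:ℝ) ≤ 1 / (N:ℝ)^d by positivity)
      calc (1 / (N:ℝ) ^ d) * Real.log (srpZ d N b)
          ≤ (1 / (N:ℝ) ^ d) * ((N:ℝ) ^ d * ((d:ℝ) * (Real.log (4 * Real.sqrt d) - Real.log b))) := this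
        _ = (d:ℝ) * (Real.log (4 * Real.sqrt d) - Real.log b) := by
            field_simp
    have hsd0 : (0:ℝ) ≤ Real.sqrt d := Real.sqrt_nonneg d
    have hd0 : (1:ℝ) ≤ (d:ℝ) := by exact_mod_cast hd
    have h14 : (d:ℝ) * (Real.log (4 * Real.sqrt d) - Real.log b)
        = (d:ℝ) * Real.log (4 * Real.sqrt d) - (d:ℝ) * Real.log b := by ring
    rw [hCdef]
    linarith [h9]
end

section
/- Let d = 1 and let β : ℕ → (0,∞) be a sequence with N·β(N) → 0 as N → ∞. Then there exist a constant C > 0 and N₀ such that for all N ≥ N₀ one has |(1/N)·log Z^N_{β(N)} − (1/N)·log(N!) + β(N)·(N/3 − 1/(3N))| ≤ C·β(N)²·N². (In other words, in the subcritical regime the permanent of the N × N KMS matrix satisfies (1/N) log perm = (1/N) log(N!) − β(N/3 − 1/(3N)) + O(β²N²).) -/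
open Filter Topology

/-! ### Auxiliary lemmas -/

section KMSAux

open Equiv Finset

lemma kmsaux_exp_le_quadratic {t : ℝ} (ht : |t| ≤ 1) : Real.exp t ≤ 1 + t + t ^ 2 := by
  have h := Real.exp_bound ht (n := 2) (by norm_num)
  have h2 : ∑ m ∈ Finset.range 2, t ^ m / (Nat.factorial m) = 1 + t := by
    simp [Finset.sum_range_succ]
  rw [h2] at h
  have h3 := (abs_sub_le_iff.1 h).1
  have h4 : |t| ^ 2 = t ^ 2 := sq_abs t
  have h5 : ((Nat.succ 2 : ℕ) : ℝ) / ((Nat.factorial 2 : ℕ) * 2) = 3 / 4 := by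
    norm_num [Nat.factorial]
  nlinarith [sq_nonneg t]

lemma kmsaux_jensen_lower {ι : Type*} [Fintype ι] [Nonempty ι] (f : ι → ℝ) (μ : ℝ)
    (hμ : (Fintype.card ι : ℝ) * μ = ∑ i, f i) :
    (Fintype.card ι : ℝ) * Real.exp μ ≤ ∑ i, Real.exp (f i) := by
  have hterm : ∀ i, Real.exp μ * (1 + (f i - μ)) ≤ Real.exp (f i) := by
    intro i
    have h1 : (f i - μ) + 1 ≤ Real.exp (f i - μ) := Real.add_one_le_exp _
    have h2 : Real.exp μ * Real.exp (f i - μ) = Real.exp (f i) := by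
      rw [← Real.exp_add]; ring_nf
    nlinarith [Real.exp_pos μ]
  calc (Fintype.card ι : ℝ) * Real.exp μ
      = ∑ i, Real.exp μ * (1 + (f i - μ)) := by
        rw [← Finset.mul_sum]
        rw [Finset.sum_add_distrib, Finset.sum_sub_distrib, Finset.sum_const, Finset.sum_const]
        simp only [Finset.card_univ, nsmul_eq_mul, mul_one]
        rw [← hμ]; ring
    _ ≤ ∑ i, Real.exp (f i) := Finset.sum_le_sum fun i _ => hterm i

lemma kmsaux_hoeffding_step {ι : Type*} [Fintype ι] [Nonempty ι] (f : ι → ℝ) (μ b R : ℝ)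
    (hb : 0 ≤ b) (h1 : b * R ≤ 1)
    (hμ : (Fintype.card ι : ℝ) * μ = ∑ i, f i) (hf : ∀ i, |f i - μ| ≤ R) :
    ∑ i, Real.exp (b * f i) ≤ (Fintype.card ι : ℝ) * Real.exp (b * μ + b ^ 2 * R ^ 2) := by
  have hterm : ∀ i, Real.exp (b * f i) ≤ Real.exp (b * μ) * (1 + b * (f i - μ) + b ^ 2 * R ^ 2) := by
    intro i
    have habs : |b * (f i - μ)| ≤ b * R := by
      rw [abs_mul, abs_of_nonneg hb]
      exact mul_le_mul_of_nonneg_left (hf i) hb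
    have ht : |b * (f i - μ)| ≤ 1 := le_trans habs h1
    have h2 : Real.exp (b * (f i - μ)) ≤ 1 + b * (f i - μ) + (b * (f i - μ)) ^ 2 :=
      kmsaux_exp_le_quadratic ht
    have h3 : (b * (f i - μ)) ^ 2 ≤ b ^ 2 * R ^ 2 := by
      calc (b * (f i - μ)) ^ 2 = |b * (f i - μ)| ^ 2 := (sq_abs _).symm
        _ ≤ (b * R) ^ 2 := by
            apply pow_le_pow_left₀ (abs_nonneg _) habs
        _ = b ^ 2 * R ^ 2 := by ring
    have h4 : Real.exp (b * μ) * Real.exp (b * (f i - μ)) = Real.exp (b * f i) := by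
      rw [← Real.exp_add]; ring_nf
    nlinarith [Real.exp_pos (b * μ)]
  have hzero : ∑ i, (f i - μ) = 0 := by
    rw [Finset.sum_sub_distrib, Finset.sum_const]
    simp only [Finset.card_univ, nsmul_eq_mul]
    rw [← hμ]; ring
  calc ∑ i, Real.exp (b * f i)
      ≤ ∑ i, Real.exp (b * μ) * (1 + b * (f i - μ) + b ^ 2 * R ^ 2) :=
        Finset.sum_le_sum fun i _ => hterm i
    _ = Real.exp (b * μ) * ((Fintype.card ι : ℝ) * (1 + b ^ 2 * R ^ 2)) := by
        rw [← Finset.mul_sum]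
        congr 1
        rw [Finset.sum_add_distrib, Finset.sum_add_distrib, ← Finset.mul_sum, hzero,
          Finset.sum_const, Finset.sum_const]
        simp only [Finset.card_univ, nsmul_eq_mul, mul_one]
        ring
    _ ≤ Real.exp (b * μ) * ((Fintype.card ι : ℝ) * Real.exp (b ^ 2 * R ^ 2)) := by
        have hc : (0:ℝ) ≤ (Fintype.card ι : ℝ) := by positivity
        have h5 : 1 + b ^ 2 * R ^ 2 ≤ Real.exp (b ^ 2 * R ^ 2) := by
          have := Real.add_one_le_exp (b ^ 2 * R ^ 2); linarith
        exact mul_le_mul_of_nonneg_left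
          (mul_le_mul_of_nonneg_left h5 hc) (Real.exp_pos _).le
    _ = (Fintype.card ι : ℝ) * Real.exp (b * μ + b ^ 2 * R ^ 2) := by
        rw [Real.exp_add]; ring

lemma kmsaux_Dsplit {n : ℕ} (p : Fin (n + 1)) (e : Equiv.Perm (Fin n)) :
    Equiv.Perm.decomposeFin.symm (p, e) =
      Equiv.swap 0 p * Equiv.Perm.decomposeFin.symm (0, e) := by
  ext x
  refine Fin.cases ?_ (fun y => ?_) x
  · simp [Equiv.Perm.decomposeFin_symm_apply_zero, Equiv.Perm.mul_apply]
  · simp [Equiv.Perm.decomposeFin_symm_apply_succ, Equiv.Perm.mul_apply]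

lemma kmsaux_Dmul {n : ℕ} (τ e : Equiv.Perm (Fin n)) :
    Equiv.Perm.decomposeFin.symm ((0 : Fin (n + 1)), τ * e) =
      Equiv.Perm.decomposeFin.symm ((0 : Fin (n + 1)), τ) *
        Equiv.Perm.decomposeFin.symm ((0 : Fin (n + 1)), e) := by
  ext x
  refine Fin.cases ?_ (fun y => ?_) x
  · simp [Equiv.Perm.decomposeFin_symm_apply_zero, Equiv.Perm.mul_apply]
  · simp [Equiv.Perm.decomposeFin_symm_apply_succ, Equiv.Perm.mul_apply]

lemma kmsaux_Dswap {n : ℕ} (a b : Fin n) :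
    Equiv.Perm.decomposeFin.symm ((0 : Fin (n + 1)), Equiv.swap a b) =
      Equiv.swap a.succ b.succ := by
  ext x
  refine Fin.cases ?_ (fun y => ?_) x
  · rw [Equiv.Perm.decomposeFin_symm_apply_zero,
      Equiv.swap_apply_of_ne_of_ne (Fin.succ_ne_zero a).symm (Fin.succ_ne_zero b).symm]
  · rw [Equiv.Perm.decomposeFin_symm_apply_succ]
    simp only [Equiv.swap_self, Equiv.refl_apply, Equiv.coe_refl, id_eq]
    rcases eq_or_ne y a with h | h
    · simp [h]
    · rcases eq_or_ne y b with h2 | h2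
      · simp [h2]
      · rw [Equiv.swap_apply_of_ne_of_ne h h2,
          Equiv.swap_apply_of_ne_of_ne (by simpa [Fin.succ_inj] using h)
            (by simpa [Fin.succ_inj] using h2)]

lemma kmsaux_D_left {n : ℕ} (p p' : Fin (n + 1)) (e : Equiv.Perm (Fin n)) :
    Equiv.Perm.decomposeFin.symm (p, e) =
      Equiv.swap 0 p * (Equiv.swap 0 p' * Equiv.Perm.decomposeFin.symm (p', e)) := by
  rw [kmsaux_Dsplit p e, kmsaux_Dsplit p' e, ← mul_assoc, ← mul_assoc,
    mul_assoc (Equiv.swap 0 p) (Equiv.swap 0 p') (Equiv.swap 0 p'), Equiv.swap_mul_self, mul_one]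

lemma kmsaux_D_conj {n : ℕ} (p : Fin (n + 1)) (a b : Fin n) (e : Equiv.Perm (Fin n)) :
    Equiv.Perm.decomposeFin.symm (p, Equiv.swap a b * e) =
      Equiv.swap (Equiv.swap 0 p a.succ) (Equiv.swap 0 p b.succ) *
        Equiv.Perm.decomposeFin.symm (p, e) := by
  rw [kmsaux_Dsplit p (Equiv.swap a b * e), kmsaux_Dmul, kmsaux_Dswap,
    Equiv.swap_apply_apply, kmsaux_Dsplit p e]
  group

lemma kmsaux_avg_abs_le {n : ℕ} (u : Fin (n + 1) → ℝ) (c : ℝ) (h : ∀ p, |u p| ≤ c) :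
    |(∑ p, u p) / ((n : ℝ) + 1)| ≤ c := by
  have hpos : (0:ℝ) < (n : ℝ) + 1 := by positivity
  rw [abs_div, abs_of_pos hpos, div_le_iff₀ hpos]
  calc |∑ p, u p| ≤ ∑ p, |u p| := Finset.abs_sum_le_sum_abs _ _
    _ ≤ ∑ _p : Fin (n + 1), c := Finset.sum_le_sum fun p _ => h p
    _ = ((n : ℝ) + 1) * c := by
        rw [Finset.sum_const]
        simp [Finset.card_univ, nsmul_eq_mul]
    _ = c * ((n : ℝ) + 1) := by ring

lemma kmsaux_key_induction (n : ℕ) :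
    ∀ (f : Equiv.Perm (Fin n) → ℝ) (b c μ : ℝ), 0 ≤ b → 0 ≤ c → b * (2 * c) ≤ 1 →
      ((n.factorial : ℝ) * μ = ∑ σ, f σ) →
      (∀ (a a' : Fin n) (σ : Equiv.Perm (Fin n)), |f (Equiv.swap a a' * σ) - f σ| ≤ c) →
      ∑ σ, Real.exp (b * f σ) ≤
        (n.factorial : ℝ) * Real.exp (b * μ + n * (4 * (b ^ 2 * c ^ 2))) := by
  induction n with
  | zero =>
    intro f b c μ hb hc h1 hμ hf
    have huniv : (Finset.univ : Finset (Equiv.Perm (Fin 0))) = {1} := by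
      refine Finset.eq_singleton_iff_unique_mem.2 ⟨Finset.mem_univ _, fun σ _ => ?_⟩
      exact Equiv.ext fun x => x.elim0
    rw [huniv, Finset.sum_singleton] at hμ
    rw [huniv, Finset.sum_singleton]
    have hμ' : μ = f 1 := by
      rw [show ((Nat.factorial 0 : ℕ) : ℝ) = 1 by norm_num, one_mul] at hμ
      exact hμ
    rw [hμ']
    norm_num [Nat.factorial]
  | succ n ih =>
    intro f b c μ hb hc h1 hμ hf
    have hsum : ∀ F : Equiv.Perm (Fin (n + 1)) → ℝ,
        ∑ σ, F σ = ∑ e : Equiv.Perm (Fin n), ∑ p : Fin (n + 1),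
          F (Equiv.Perm.decomposeFin.symm (p, e)) := by
      intro F
      rw [← Equiv.sum_comp (Equiv.Perm.decomposeFin.symm) F, Fintype.sum_prod_type]
      exact Finset.sum_comm
    set g : Equiv.Perm (Fin n) → ℝ :=
      fun e => (∑ p : Fin (n + 1), f (Equiv.Perm.decomposeFin.symm (p, e))) / ((n : ℝ) + 1)
      with hg
    have hcard : ((n : ℝ) + 1) ≠ 0 := by positivity
    have hpp' : ∀ (e : Equiv.Perm (Fin n)) (p p' : Fin (n + 1)),
        |f (Equiv.Perm.decomposeFin.symm (p, e)) -
          f (Equiv.Perm.decomposeFin.symm (p', e))| ≤ 2 * c := by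
      intro e p p'
      have hDe := kmsaux_D_left p p' e
      calc |f (Equiv.Perm.decomposeFin.symm (p, e)) -
            f (Equiv.Perm.decomposeFin.symm (p', e))|
          ≤ |f (Equiv.Perm.decomposeFin.symm (p, e)) -
              f (Equiv.swap 0 p' * Equiv.Perm.decomposeFin.symm (p', e))| +
            |f (Equiv.swap 0 p' * Equiv.Perm.decomposeFin.symm (p', e)) -
              f (Equiv.Perm.decomposeFin.symm (p', e))| := abs_sub_le _ _ _
        _ ≤ c + c := by
            refine add_le_add ?_ (hf _ _ _)
            rw [hDe]
            exact hf _ _ _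
        _ = 2 * c := by ring
    have hdev : ∀ (e : Equiv.Perm (Fin n)) (p : Fin (n + 1)),
        |f (Equiv.Perm.decomposeFin.symm (p, e)) - g e| ≤ 2 * c := by
      intro e p
      have heq : f (Equiv.Perm.decomposeFin.symm (p, e)) - g e =
          (∑ p' : Fin (n + 1), (f (Equiv.Perm.decomposeFin.symm (p, e)) -
            f (Equiv.Perm.decomposeFin.symm (p', e)))) / ((n : ℝ) + 1) := by
        rw [Finset.sum_sub_distrib, Finset.sum_const]
        simp only [Finset.card_univ, Fintype.card_fin, nsmul_eq_mul, hg]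
        field_simp
        push_cast
        ring
      rw [heq]
      exact kmsaux_avg_abs_le _ _ (fun p' => hpp' e p p')
    have hinner : ∀ e : Equiv.Perm (Fin n),
        ∑ p : Fin (n + 1), Real.exp (b * f (Equiv.Perm.decomposeFin.symm (p, e))) ≤
          ((n : ℝ) + 1) * Real.exp (b * g e + b ^ 2 * (2 * c) ^ 2) := by
      intro e
      have hμe : ((Fintype.card (Fin (n + 1)) : ℝ)) * g e =
          ∑ p : Fin (n + 1), f (Equiv.Perm.decomposeFin.symm (p, e)) := by
        simp only [Fintype.card_fin, hg]
        push_cast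
        field_simp
      have := kmsaux_hoeffding_step (fun p : Fin (n + 1) =>
        f (Equiv.Perm.decomposeFin.symm (p, e))) (g e) b (2 * c) hb h1 hμe
        (fun p => hdev e p)
      simpa [Fintype.card_fin] using this
    have hglip : ∀ (a a' : Fin n) (e : Equiv.Perm (Fin n)),
        |g (Equiv.swap a a' * e) - g e| ≤ c := by
      intro a a' e
      have heq : g (Equiv.swap a a' * e) - g e =
          (∑ p : Fin (n + 1), (f (Equiv.Perm.decomposeFin.symm (p, Equiv.swap a a' * e)) -
            f (Equiv.Perm.decomposeFin.symm (p, e)))) / ((n : ℝ) + 1) := by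
        rw [Finset.sum_sub_distrib, hg]
        field_simp
      rw [heq]
      refine kmsaux_avg_abs_le _ _ (fun p => ?_)
      rw [kmsaux_D_conj]
      exact hf _ _ _
    have hgsum : ((n.factorial : ℝ)) * μ = ∑ e, g e := by
      have h2 : ∑ e, g e = (∑ σ, f σ) / ((n : ℝ) + 1) := by
        rw [hsum f]
        rw [← Finset.sum_div]
      rw [h2, ← hμ, Nat.factorial_succ]
      push_cast
      field_simp
    have hIH := ih g b c μ hb hc h1 hgsum hglip
    calc ∑ σ, Real.exp (b * f σ)
        = ∑ e : Equiv.Perm (Fin n), ∑ p : Fin (n + 1),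
            Real.exp (b * f (Equiv.Perm.decomposeFin.symm (p, e))) := hsum _
      _ ≤ ∑ e : Equiv.Perm (Fin n),
            ((n : ℝ) + 1) * Real.exp (b * g e + b ^ 2 * (2 * c) ^ 2) :=
          Finset.sum_le_sum fun e _ => hinner e
      _ = ((n : ℝ) + 1) * Real.exp (b ^ 2 * (2 * c) ^ 2) * ∑ e, Real.exp (b * g e) := by
          rw [Finset.mul_sum]
          refine Finset.sum_congr rfl fun e _ => ?_
          rw [Real.exp_add]
          ring
      _ ≤ ((n : ℝ) + 1) * Real.exp (b ^ 2 * (2 * c) ^ 2) *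
            ((n.factorial : ℝ) * Real.exp (b * μ + n * (4 * (b ^ 2 * c ^ 2)))) := by
          refine mul_le_mul_of_nonneg_left hIH ?_
          positivity
      _ = ((n + 1).factorial : ℝ) *
            Real.exp (b * μ + ((n + 1 : ℕ) : ℝ) * (4 * (b ^ 2 * c ^ 2))) := by
          have hq : b * μ + ((n + 1 : ℕ) : ℝ) * (4 * (b ^ 2 * c ^ 2)) =
              (b ^ 2 * (2 * c) ^ 2) + (b * μ + (n : ℝ) * (4 * (b ^ 2 * c ^ 2))) := by
            push_cast; ring
          rw [hq, Nat.factorial_succ]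
          simp only [Real.exp_add]
          push_cast
          ring

/-- One–dimensional energy on `Perm (Fin N)`. -/
noncomputable def kmsauxH (N : ℕ) (σ : Equiv.Perm (Fin N)) : ℝ :=
  ∑ k : Fin N, |((k : Fin N) : ℝ) - ((σ k : Fin N) : ℝ)|

lemma kmsaux_fin_abs_le {N : ℕ} (u v : Fin N) : |((u : Fin N) : ℝ) - ((v : Fin N) : ℝ)| ≤ N := by
  have h1 : ((u : Fin N) : ℝ) < N := by exact_mod_cast u.is_lt
  have h2 : ((v : Fin N) : ℝ) < N := by exact_mod_cast v.is_lt
  have h3 : (0:ℝ) ≤ ((u : Fin N) : ℝ) := by positivity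
  have h4 : (0:ℝ) ≤ ((v : Fin N) : ℝ) := by positivity
  rw [abs_le]
  constructor <;> linarith

lemma kmsaux_swap_sum {N : ℕ} (a b : Fin N) :
    ∑ j : Fin N, |((Equiv.swap a b j : Fin N) : ℝ) - ((j : Fin N) : ℝ)| ≤ 2 * N := by
  have hterm : ∀ j : Fin N,
      |((Equiv.swap a b j : Fin N) : ℝ) - ((j : Fin N) : ℝ)| ≤
        if j = a ∨ j = b then (N : ℝ) else 0 := by
    intro j
    by_cases h : j = a ∨ j = b
    · rw [if_pos h]; exact kmsaux_fin_abs_le _ _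
    · push_neg at h
      rw [if_neg (by tauto), Equiv.swap_apply_of_ne_of_ne h.1 h.2]
      simp
  calc ∑ j : Fin N, |((Equiv.swap a b j : Fin N) : ℝ) - ((j : Fin N) : ℝ)|
      ≤ ∑ j : Fin N, (if j = a ∨ j = b then (N : ℝ) else 0) :=
        Finset.sum_le_sum fun j _ => hterm j
    _ = ∑ j ∈ Finset.univ.filter (fun j => j = a ∨ j = b), (N : ℝ) := by
        rw [Finset.sum_filter]
    _ ≤ 2 * N := by
        have hsub : Finset.univ.filter (fun j => j = a ∨ j = b) ⊆ {a, b} := by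
          intro j hj
          simp only [Finset.mem_filter] at hj
          simp only [Finset.mem_insert, Finset.mem_singleton]
          tauto
        have hcard : (Finset.univ.filter (fun j => j = a ∨ j = b)).card ≤ 2 := by
          calc _ ≤ ({a, b} : Finset (Fin N)).card := Finset.card_le_card hsub
            _ ≤ 2 := Finset.card_insert_le _ _ |>.trans (by simp)
        rw [Finset.sum_const, nsmul_eq_mul]
        have : ((Finset.univ.filter (fun j => j = a ∨ j = b)).card : ℝ) ≤ 2 := by
          exact_mod_cast hcard
        have hN : (0:ℝ) ≤ N := by positivity
        nlinarith

lemma kmsaux_H_lip {N : ℕ} (a b : Fin N) (σ : Equiv.Perm (Fin N)) :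
    |kmsauxH N (Equiv.swap a b * σ) - kmsauxH N σ| ≤ 2 * N := by
  have h1 : kmsauxH N (Equiv.swap a b * σ) - kmsauxH N σ =
      ∑ k : Fin N, (|((k : Fin N) : ℝ) - ((Equiv.swap a b (σ k) : Fin N) : ℝ)| -
        |((k : Fin N) : ℝ) - ((σ k : Fin N) : ℝ)|) := by
    rw [kmsauxH, kmsauxH, ← Finset.sum_sub_distrib]
    rfl
  rw [h1]
  calc |∑ k : Fin N, (|((k : Fin N) : ℝ) - ((Equiv.swap a b (σ k) : Fin N) : ℝ)| -
        |((k : Fin N) : ℝ) - ((σ k : Fin N) : ℝ)|)|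
      ≤ ∑ k : Fin N, |(|((k : Fin N) : ℝ) - ((Equiv.swap a b (σ k) : Fin N) : ℝ)| -
          |((k : Fin N) : ℝ) - ((σ k : Fin N) : ℝ)|)| := Finset.abs_sum_le_sum_abs _ _
    _ ≤ ∑ k : Fin N, |((Equiv.swap a b (σ k) : Fin N) : ℝ) - ((σ k : Fin N) : ℝ)| := by
        refine Finset.sum_le_sum fun k _ => ?_
        have h2 := abs_abs_sub_abs_le_abs_sub
          (((k : Fin N) : ℝ) - ((Equiv.swap a b (σ k) : Fin N) : ℝ))
          (((k : Fin N) : ℝ) - ((σ k : Fin N) : ℝ))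
        have h3 : (((k : Fin N) : ℝ) - ((Equiv.swap a b (σ k) : Fin N) : ℝ)) -
            (((k : Fin N) : ℝ) - ((σ k : Fin N) : ℝ)) =
            -(((Equiv.swap a b (σ k) : Fin N) : ℝ) - ((σ k : Fin N) : ℝ)) := by ring
        rw [h3, abs_neg] at h2
        exact h2
    _ = ∑ j : Fin N, |((Equiv.swap a b j : Fin N) : ℝ) - ((j : Fin N) : ℝ)| :=
        Equiv.sum_comp σ (fun j => |((Equiv.swap a b j : Fin N) : ℝ) - ((j : Fin N) : ℝ)|)
    _ ≤ 2 * N := kmsaux_swap_sum a b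

lemma kmsaux_sum_apply_perm {n : ℕ} (φ : Fin (n + 1) → ℝ) (k : Fin (n + 1)) :
    ∑ σ : Equiv.Perm (Fin (n + 1)), φ (σ k) = (n.factorial : ℝ) * ∑ j, φ j := by
  have h0 : ∑ σ : Equiv.Perm (Fin (n + 1)), φ (σ 0) =
      ∑ σ : Equiv.Perm (Fin (n + 1)), φ (σ k) := by
    have := Equiv.sum_comp (Equiv.mulRight (Equiv.swap (0 : Fin (n + 1)) k))
      (fun σ : Equiv.Perm (Fin (n + 1)) => φ (σ k))
    simpa [Equiv.Perm.mul_apply, Equiv.swap_apply_right] using this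
  rw [← h0]
  rw [← Equiv.sum_comp (Equiv.Perm.decomposeFin.symm)
    (fun σ : Equiv.Perm (Fin (n + 1)) => φ (σ 0))]
  rw [Fintype.sum_prod_type]
  simp only [Equiv.Perm.decomposeFin_symm_apply_zero]
  simp only [Finset.sum_const, Finset.card_univ, Fintype.card_perm, Fintype.card_fin,
    nsmul_eq_mul]
  rw [Finset.mul_sum]

lemma kmsaux_sum_H {n : ℕ} :
    ∑ σ : Equiv.Perm (Fin (n + 1)), kmsauxH (n + 1) σ =
      (n.factorial : ℝ) * ∑ k : Fin (n + 1), ∑ j : Fin (n + 1),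
        |((k : Fin (n + 1)) : ℝ) - ((j : Fin (n + 1)) : ℝ)| := by
  simp only [kmsauxH]
  rw [Finset.sum_comm, Finset.mul_sum]
  refine Finset.sum_congr rfl fun k _ => ?_
  exact kmsaux_sum_apply_perm
    (fun j => |((k : Fin (n + 1)) : ℝ) - ((j : Fin (n + 1)) : ℝ)|) k

lemma kmsaux_sum_range_cast (n : ℕ) : ∑ j ∈ Finset.range n, (j : ℝ) = n * (n - 1) / 2 := by
  induction n with
  | zero => simp
  | succ n ih =>
    rw [Finset.sum_range_succ, ih]
    push_cast
    ring

lemma kmsaux_abs_row (n : ℕ) :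
    ∑ j ∈ Finset.range n, |(n : ℝ) - (j : ℝ)| = n * n - n * (n - 1) / 2 := by
  have h : ∀ j ∈ Finset.range n, |(n : ℝ) - (j : ℝ)| = (n : ℝ) - j := by
    intro j hj
    have : (j : ℝ) < n := by exact_mod_cast Finset.mem_range.1 hj
    exact abs_of_nonneg (by linarith)
  rw [Finset.sum_congr rfl h, Finset.sum_sub_distrib, Finset.sum_const, kmsaux_sum_range_cast]
  simp [Finset.card_range, nsmul_eq_mul]

lemma kmsaux_Ssum_range : ∀ N : ℕ,
    ∑ k ∈ Finset.range N, ∑ j ∈ Finset.range N, |(k : ℝ) - (j : ℝ)| =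
      ((N : ℝ) ^ 3 - N) / 3 := by
  intro N
  induction N with
  | zero => simp
  | succ n ih =>
    rw [Finset.sum_range_succ]
    have hrow : ∀ k : ℝ, ∑ j ∈ Finset.range (n + 1), |k - (j : ℝ)| =
        ∑ j ∈ Finset.range n, |k - (j : ℝ)| + |k - (n : ℝ)| := by
      intro k; rw [Finset.sum_range_succ]
    calc (∑ k ∈ Finset.range n, ∑ j ∈ Finset.range (n + 1), |(k : ℝ) - (j : ℝ)|) +
          ∑ j ∈ Finset.range (n + 1), |(n : ℝ) - (j : ℝ)|
        = (∑ k ∈ Finset.range n, (∑ j ∈ Finset.range n, |(k : ℝ) - (j : ℝ)| +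
            |(k : ℝ) - (n : ℝ)|)) +
          (∑ j ∈ Finset.range n, |(n : ℝ) - (j : ℝ)| + |(n : ℝ) - (n : ℝ)|) := by
          have h1 : ∑ k ∈ Finset.range n, ∑ j ∈ Finset.range (n + 1), |(k : ℝ) - (j : ℝ)| =
              ∑ k ∈ Finset.range n, (∑ j ∈ Finset.range n, |(k : ℝ) - (j : ℝ)| +
                |(k : ℝ) - (n : ℝ)|) :=
            Finset.sum_congr rfl fun k _ => hrow k
          rw [h1, Finset.sum_range_succ]
      _ = (∑ k ∈ Finset.range n, ∑ j ∈ Finset.range n, |(k : ℝ) - (j : ℝ)|) +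
            (∑ k ∈ Finset.range n, |(n : ℝ) - (k : ℝ)|) +
            (∑ j ∈ Finset.range n, |(n : ℝ) - (j : ℝ)|) := by
          rw [Finset.sum_add_distrib]
          have : ∀ k ∈ Finset.range n, |(k : ℝ) - (n : ℝ)| = |(n : ℝ) - (k : ℝ)| := by
            intro k _; rw [abs_sub_comm]
          rw [Finset.sum_congr rfl this]
          simp
      _ = ((n : ℝ) ^ 3 - n) / 3 + 2 * ((n : ℝ) * n - n * (n - 1) / 2) := by
          rw [ih, kmsaux_abs_row]
          ring
      _ = (((n : ℕ) + 1 : ℝ) ^ 3 - ((n : ℕ) + 1 : ℝ)) / 3 := by ring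
      _ = ((((n + 1 : ℕ)) : ℝ) ^ 3 - ((n + 1 : ℕ) : ℝ)) / 3 := by push_cast; ring

lemma kmsaux_Ssum (N : ℕ) :
    ∑ k : Fin N, ∑ j : Fin N, |((k : Fin N) : ℝ) - ((j : Fin N) : ℝ)| =
      ((N : ℝ) ^ 3 - N) / 3 := by
  rw [← kmsaux_Ssum_range N]
  rw [Fin.sum_univ_eq_sum_range (fun k => ∑ j : Fin N, |((k : ℝ)) - ((j : Fin N) : ℝ)|)]
  refine Finset.sum_congr rfl fun k _ => ?_
  rw [Fin.sum_univ_eq_sum_range (fun j => |((k : ℝ)) - (j : ℝ)|)]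

lemma kmsaux_energy_eq (N : ℕ) (σ : Equiv.Perm (Fin N)) :
    srpEnergy 1 N ((Equiv.permCongr (Equiv.funUnique (Fin 1) (Fin N))).symm σ) =
      kmsauxH N σ := by
  rw [srpEnergy, kmsauxH]
  rw [← Equiv.sum_comp (Equiv.funUnique (Fin 1) (Fin N)).symm]
  refine Finset.sum_congr rfl fun k _ => ?_
  rw [Fin.sum_univ_one, Real.sqrt_sq_eq_abs]
  rfl

lemma kmsaux_Z_eq (N : ℕ) (b : ℝ) :
    srpZ 1 N b = ∑ σ : Equiv.Perm (Fin N), Real.exp (-b * kmsauxH N σ) := by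
  rw [srpZ]
  rw [← Equiv.sum_comp (Equiv.permCongr (Equiv.funUnique (Fin 1) (Fin N))).symm
    (fun π => Real.exp (-b * srpEnergy 1 N π))]
  refine Finset.sum_congr rfl fun σ _ => ?_
  rw [kmsaux_energy_eq]

end KMSAux

/-- **KMS permanent asymptotics, one dimension, subcritical regime with rates:**
`(1/N) log perm(A^N_β) = (1/N) log(N!) − β(N/3 − 1/(3N)) + O(β²N²)`. -/
theorem kms_one_dim_subcritical (β : ℕ → ℝ)
    (hβpos : ∀ N, 0 < β N)
    (hβN : Tendsto (fun N : ℕ => (N : ℝ) * β N) atTop (𝓝 0)) :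
    ∃ C > (0:ℝ), ∃ N₀ : ℕ, ∀ N ≥ N₀,
      |(1 / (N : ℝ)) * Real.log (srpZ 1 N (β N)) - (1 / (N : ℝ)) * Real.log ((Nat.factorial N : ℕ) : ℝ) +
          β N * ((N : ℝ) / 3 - 1 / (3 * N))| ≤ C * (β N) ^ 2 * (N : ℝ) ^ 2 := by
  obtain ⟨N₁, hN₁⟩ : ∃ N₁ : ℕ, ∀ N ≥ N₁, |(N : ℝ) * β N| ≤ 1 / 8 := by
    obtain ⟨N₁, h⟩ := Metric.tendsto_atTop.1 hβN (1 / 8) (by norm_num)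
    refine ⟨N₁, fun N hN => ?_⟩
    have := h N hN
    rw [Real.dist_eq, sub_zero] at this
    linarith
  refine ⟨16, by norm_num, max N₁ 1, fun N hN => ?_⟩
  have hNge1 : 1 ≤ N := le_trans (le_max_right _ _) hN
  obtain ⟨n, rfl⟩ : ∃ n, N = n + 1 := ⟨N - 1, by omega⟩
  set b : ℝ := β (n + 1) with hbdef
  have hb : 0 < b := hβpos _
  have hbN : ((n + 1 : ℕ) : ℝ) * b ≤ 1 / 8 := by
    have h := hN₁ (n + 1) (le_trans (le_max_left _ _) hN)
    calc ((n + 1 : ℕ) : ℝ) * b ≤ |((n + 1 : ℕ) : ℝ) * b| := le_abs_self _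
      _ ≤ 1 / 8 := h
  have hNpos : (0:ℝ) < ((n + 1 : ℕ) : ℝ) := by positivity
  have hfacpos : (0:ℝ) < (((n + 1).factorial : ℕ) : ℝ) := by
    exact_mod_cast Nat.factorial_pos (n + 1)
  set μ : ℝ := (((n + 1 : ℕ) : ℝ) ^ 2 - 1) / 3 with hμdef
  have hμsum : (((n + 1).factorial : ℕ) : ℝ) * μ =
      ∑ σ : Equiv.Perm (Fin (n + 1)), kmsauxH (n + 1) σ := by
    rw [kmsaux_sum_H, kmsaux_Ssum, Nat.factorial_succ, hμdef]
    push_cast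
    ring
  -- lower bound for Z
  have hlow : (((n + 1).factorial : ℕ) : ℝ) * Real.exp (-(b * μ)) ≤ srpZ 1 (n + 1) b := by
    rw [kmsaux_Z_eq]
    have hcardeq : ((Fintype.card (Equiv.Perm (Fin (n + 1))) : ℕ) : ℝ) =
        (((n + 1).factorial : ℕ) : ℝ) := by
      rw [Fintype.card_perm, Fintype.card_fin]
    have hμ' : ((Fintype.card (Equiv.Perm (Fin (n + 1))) : ℕ) : ℝ) * (-(b * μ)) =
        ∑ σ : Equiv.Perm (Fin (n + 1)), -b * kmsauxH (n + 1) σ := by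
      rw [hcardeq, ← Finset.mul_sum, ← hμsum]
      ring
    have := kmsaux_jensen_lower (fun σ : Equiv.Perm (Fin (n + 1)) =>
      -b * kmsauxH (n + 1) σ) (-(b * μ)) hμ'
    rw [hcardeq] at this
    exact this
  -- upper bound for Z
  have hup : srpZ 1 (n + 1) b ≤ (((n + 1).factorial : ℕ) : ℝ) *
      Real.exp (-(b * μ) + 16 * b ^ 2 * ((n + 1 : ℕ) : ℝ) ^ 3) := by
    rw [kmsaux_Z_eq]
    have hcond : b * (2 * (2 * ((n + 1 : ℕ) : ℝ))) ≤ 1 := by nlinarith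
    have hμ' : (((n + 1).factorial : ℕ) : ℝ) * (-μ) =
        ∑ σ : Equiv.Perm (Fin (n + 1)), -(kmsauxH (n + 1) σ) := by
      have h9 : ∑ σ : Equiv.Perm (Fin (n + 1)), -(kmsauxH (n + 1) σ) =
          -∑ σ : Equiv.Perm (Fin (n + 1)), kmsauxH (n + 1) σ := by
        rw [Finset.sum_neg_distrib]
      rw [h9, ← hμsum]
      ring
    have hlip : ∀ (a a' : Fin (n + 1)) (σ : Equiv.Perm (Fin (n + 1))),
        |(fun σ => -(kmsauxH (n + 1) σ)) (Equiv.swap a a' * σ) -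
          (fun σ => -(kmsauxH (n + 1) σ)) σ| ≤ 2 * ((n + 1 : ℕ) : ℝ) := by
      intro a a' σ
      simp only
      rw [show -(kmsauxH (n + 1) (Equiv.swap a a' * σ)) - -(kmsauxH (n + 1) σ) =
        -((kmsauxH (n + 1) (Equiv.swap a a' * σ)) - kmsauxH (n + 1) σ) by ring, abs_neg]
      exact kmsaux_H_lip a a' σ
    have hkey := kmsaux_key_induction (n + 1) (fun σ => -(kmsauxH (n + 1) σ)) b
      (2 * ((n + 1 : ℕ) : ℝ)) (-μ) hb.le (by positivity) hcond hμ' hlip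
    have heq1 : ∀ σ : Equiv.Perm (Fin (n + 1)),
        Real.exp (-b * kmsauxH (n + 1) σ) = Real.exp (b * -(kmsauxH (n + 1) σ)) := by
      intro σ; ring_nf
    rw [Finset.sum_congr rfl fun σ _ => heq1 σ]
    have heq2 : b * (-μ) + ((n + 1 : ℕ) : ℝ) * (4 * (b ^ 2 * (2 * ((n + 1 : ℕ) : ℝ)) ^ 2)) =
        -(b * μ) + 16 * b ^ 2 * ((n + 1 : ℕ) : ℝ) ^ 3 := by ring
    rw [← heq2]
    exact hkey
  -- positivity of Z and logs
  have hZpos : 0 < srpZ 1 (n + 1) b := lt_of_lt_of_le (by positivity) hlow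
  have hlog_low : Real.log ((((n + 1).factorial : ℕ) : ℝ)) + (-(b * μ)) ≤
      Real.log (srpZ 1 (n + 1) b) := by
    calc Real.log ((((n + 1).factorial : ℕ) : ℝ)) + (-(b * μ))
        = Real.log ((((n + 1).factorial : ℕ) : ℝ) * Real.exp (-(b * μ))) := by
          rw [Real.log_mul (ne_of_gt hfacpos) (Real.exp_ne_zero _), Real.log_exp]
      _ ≤ Real.log (srpZ 1 (n + 1) b) :=
          Real.log_le_log (by positivity) hlow
  have hlog_up : Real.log (srpZ 1 (n + 1) b) ≤
      Real.log ((((n + 1).factorial : ℕ) : ℝ)) +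
        (-(b * μ) + 16 * b ^ 2 * ((n + 1 : ℕ) : ℝ) ^ 3) := by
    calc Real.log (srpZ 1 (n + 1) b)
        ≤ Real.log ((((n + 1).factorial : ℕ) : ℝ) *
            Real.exp (-(b * μ) + 16 * b ^ 2 * ((n + 1 : ℕ) : ℝ) ^ 3)) :=
          Real.log_le_log hZpos hup
      _ = Real.log ((((n + 1).factorial : ℕ) : ℝ)) +
            (-(b * μ) + 16 * b ^ 2 * ((n + 1 : ℕ) : ℝ) ^ 3) := by
          rw [Real.log_mul (ne_of_gt hfacpos) (Real.exp_ne_zero _), Real.log_exp]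
  -- final arithmetic
  have hNne : ((n + 1 : ℕ) : ℝ) ≠ 0 := ne_of_gt hNpos
  have hform : ((n + 1 : ℕ) : ℝ) / 3 - 1 / (3 * ((n + 1 : ℕ) : ℝ)) = μ / ((n + 1 : ℕ) : ℝ) := by
    rw [hμdef]
    field_simp
  have hXeq : (1 / ((n + 1 : ℕ) : ℝ)) * Real.log (srpZ 1 (n + 1) b) -
      (1 / ((n + 1 : ℕ) : ℝ)) * Real.log ((((n + 1).factorial : ℕ) : ℝ)) +
      b * (((n + 1 : ℕ) : ℝ) / 3 - 1 / (3 * ((n + 1 : ℕ) : ℝ))) =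
      (1 / ((n + 1 : ℕ) : ℝ)) * (Real.log (srpZ 1 (n + 1) b) -
        Real.log ((((n + 1).factorial : ℕ) : ℝ)) + b * μ) := by
    rw [hform]
    field_simp
  have hX0 : 0 ≤ Real.log (srpZ 1 (n + 1) b) -
      Real.log ((((n + 1).factorial : ℕ) : ℝ)) + b * μ := by linarith
  have hX1 : Real.log (srpZ 1 (n + 1) b) -
      Real.log ((((n + 1).factorial : ℕ) : ℝ)) + b * μ ≤
      16 * b ^ 2 * ((n + 1 : ℕ) : ℝ) ^ 3 := by linarith
  rw [hXeq, abs_of_nonneg (mul_nonneg (by positivity) hX0)]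
  calc (1 / ((n + 1 : ℕ) : ℝ)) * (Real.log (srpZ 1 (n + 1) b) -
        Real.log ((((n + 1).factorial : ℕ) : ℝ)) + b * μ)
      ≤ (1 / ((n + 1 : ℕ) : ℝ)) * (16 * b ^ 2 * ((n + 1 : ℕ) : ℝ) ^ 3) :=
        mul_le_mul_of_nonneg_left hX1 (by positivity)
    _ = 16 * b ^ 2 * ((n + 1 : ℕ) : ℝ) ^ 2 := by
        field_simp
end
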